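/- arXiv:2402.14144 — 8 statements merged into one kernel-verified Lean document; each statement's English description precedes it below -/
import Mathlib

section
/- Let (V,E) be a weakly connected digraph with n ≥ 2 nodes and let (B,C) be an EMP. If some source f of (V,E) satisfies f ∉ B, then the network ((V,E),B,C) is not generically identifiable; explicitly, there exists a matrix G̃ over F consistent with (V,E), with I − G̃ invertible and G̃ ≠ G, such that M(G̃; C, B) = M(G; C, B). -/
/-!
STATEMENT 0: If a source `f` of a weakly connected digraph `(V, E)` (with `n ≥ 2` nodes)
is not excited (`f ∉ B`), then the network `((V,E), B, C)` is not generically identifiable;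
explicitly there is a matrix `G̃` over `F = K(x_e : e ∈ E)` consistent with `(V,E)`, with
`I - G̃` invertible and `G̃ ≠ G`, such that `M(G̃; C, B) = M(G; C, B)`.
-/

open Matrix

noncomputable section

/-- The field `F = K(x_e : e ∈ E)` of rational functions in indeterminates indexed
by the edges. -/
abbrev EdgeField (K : Type*) [Field K] {n : ℕ} (E : Finset (Fin n × Fin n)) : Type _ :=
  FractionRing (MvPolynomial ↥E K)

/-- The generic network matrix over `F`: `G i j = x_{(j,i)}` if `(j,i) ∈ E`, else `0`
(the entry `G i j` is the weight of the edge `j → i`). -/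
noncomputable def genericG (K : Type*) [Field K] {n : ℕ} (E : Finset (Fin n × Fin n)) :
    Matrix (Fin n) (Fin n) (EdgeField K E) := fun i j =>
  if h : (j, i) ∈ E then
    algebraMap (MvPolynomial ↥E K) (EdgeField K E) (MvPolynomial.X (⟨(j, i), h⟩ : ↥E))
  else 0

/-- A matrix `H` is consistent with the digraph `(V, E)`: `H i j = 0` whenever `(j,i) ∉ E`. -/
def Consistent {R : Type*} [Zero R] {n : ℕ} (E : Finset (Fin n × Fin n))
    (H : Matrix (Fin n) (Fin n) R) : Prop :=
  ∀ i j, (j, i) ∉ E → H i j = 0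

/-- `M(H; C, B)`: the submatrix of `(I - H)⁻¹` with rows indexed by `C` and
columns indexed by `B`. -/
noncomputable def MMat {R : Type*} [Field R] {n : ℕ} (H : Matrix (Fin n) (Fin n) R)
    (C B : Finset (Fin n)) : Matrix ↥C ↥B R :=
  fun c b => (1 - H)⁻¹ c.1 b.1

/-- The digraph is weakly connected: its underlying undirected graph is connected. -/
def WeaklyConnected {n : ℕ} (E : Finset (Fin n × Fin n)) : Prop :=
  (SimpleGraph.fromRel (fun i j => (i, j) ∈ E)).Connected

/-- The network `((V,E), B, C)` is generically identifiable. -/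
def GenIdentifiable (K : Type*) [Field K] {n : ℕ} (E : Finset (Fin n × Fin n))
    (B C : Finset (Fin n)) : Prop :=
  ∀ Gt : Matrix (Fin n) (Fin n) (EdgeField K E), Consistent E Gt →
    IsUnit (1 - Gt).det → MMat Gt C B = MMat (genericG K E) C B → Gt = genericG K E


lemma det_one_sub_map_isUnit {K : Type*} [Field K] {n : ℕ} {E : Finset (Fin n × Fin n)}
    (P : Matrix (Fin n) (Fin n) (MvPolynomial ↥E K))
    (hP : ∀ i j, MvPolynomial.constantCoeff (P i j) = 0) :
    IsUnit ((1 : Matrix (Fin n) (Fin n) (EdgeField K E)) -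
      P.map (algebraMap (MvPolynomial ↥E K) (EdgeField K E))).det := by
  set φ := algebraMap (MvPolynomial ↥E K) (EdgeField K E) with hφ
  have hinj : Function.Injective φ := IsFractionRing.injective _ _
  have h1 : (1 : Matrix (Fin n) (Fin n) (EdgeField K E)) - P.map φ = (1 - P).map φ := by
    rw [Matrix.map_sub _ (fun a b => map_sub φ a b),
      Matrix.map_one _ (map_zero φ) (map_one φ)]
  have hdd := RingHom.map_det φ (1 - P)
  rw [RingHom.mapMatrix_apply] at hdd
  rw [isUnit_iff_ne_zero, h1, ← hdd, map_ne_zero_iff φ hinj]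
  intro hdet
  have hc := congrArg MvPolynomial.constantCoeff hdet
  rw [RingHom.map_det, RingHom.mapMatrix_apply] at hc
  have hz : P.map MvPolynomial.constantCoeff = 0 := by
    ext i j
    exact hP i j
  have h2 : (1 - P).map MvPolynomial.constantCoeff = 1 := by
    rw [Matrix.map_sub _ (fun a b => map_sub MvPolynomial.constantCoeff a b),
      Matrix.map_one _ (map_zero MvPolynomial.constantCoeff)
        (map_one MvPolynomial.constantCoeff), hz, sub_zero]
  rw [h2, Matrix.det_one, map_zero] at hc
  exact one_ne_zero hc

set_option maxHeartbeats 1000000 in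
set_option synthInstance.maxHeartbeats 200000 in
theorem statement0 (K : Type*) [Field K] [Infinite K] (n : ℕ) (hn : 2 ≤ n)
    (E : Finset (Fin n × Fin n)) (hnoself : ∀ v : Fin n, (v, v) ∉ E)
    (hconn : WeaklyConnected E) (B C : Finset (Fin n))
    (f : Fin n) (hsource : ∀ k : Fin n, (k, f) ∉ E) (hfB : f ∉ B) :
    ¬ GenIdentifiable K E B C ∧
      ∃ Gt : Matrix (Fin n) (Fin n) (EdgeField K E),
        Consistent E Gt ∧ IsUnit (1 - Gt).det ∧ Gt ≠ genericG K E ∧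
          MMat Gt C B = MMat (genericG K E) C B := by
  classical
  set φ := algebraMap (MvPolynomial ↥E K) (EdgeField K E) with hφ
  have hinj : Function.Injective φ := IsFractionRing.injective _ _
  set Gp : Matrix (Fin n) (Fin n) (MvPolynomial ↥E K) :=
    (fun i j => if h : (j, i) ∈ E then MvPolynomial.X ⟨(j, i), h⟩ else 0) with hGp
  set Gtp : Matrix (Fin n) (Fin n) (MvPolynomial ↥E K) :=
    (fun i j => if j = f then 0 else Gp i j) with hGtp
  have hGmap : genericG K E = Gp.map φ := by
    ext i j
    rw [Matrix.map_apply]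
    simp only [genericG, Matrix.map_apply, hGp]
    split <;> simp [*]
  set Gt : Matrix (Fin n) (Fin n) (EdgeField K E) := Gtp.map φ with hGtdef
  have hGttriv : ∀ i j, j ≠ f → Gt i j = genericG K E i j := by
    intro i j hj
    rw [hGmap]
    rw [hGtdef, Matrix.map_apply, Matrix.map_apply]
    simp [hGtdef, Matrix.map_apply, hGtp, hj]
  have hGtf : ∀ i, Gt i f = 0 := by
    intro i
    rw [hGtdef, Matrix.map_apply]
    simp [hGtdef, Matrix.map_apply, hGtp]
  have hcons : Consistent E Gt := by
    intro i j hij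
    by_cases hj : j = f
    · subst hj; exact hGtf i
    · rw [hGttriv i j hj]
      simp [genericG, hij]
  have hdetG : IsUnit (1 - genericG K E).det := by
    rw [hGmap]
    apply det_one_sub_map_isUnit
    intro i j
    simp only [hGp]
    split <;> simp
  have hdetGt : IsUnit (1 - Gt).det := by
    rw [hGtdef]
    apply det_one_sub_map_isUnit
    intro i j
    simp only [hGtp, hGp]
    split
    · simp
    · split <;> simp
  -- Gt ≠ G
  have hne : Gt ≠ genericG K E := by
    have hnontriv : Nontrivial (Fin n) :=
      ⟨⟨0, by omega⟩, ⟨1, by omega⟩, by simp [Fin.ext_iff]⟩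
    obtain ⟨g, hg⟩ := exists_ne f
    obtain ⟨p⟩ := hconn.preconnected f g
    cases p with
    | nil => exact absurd rfl hg
    | @cons _ v _ h q =>
      rw [SimpleGraph.fromRel_adj] at h
      obtain ⟨hfv, hor⟩ := h
      have hE : (f, v) ∈ E := hor.resolve_right (fun hh => hsource v hh)
      intro heq
      have hent := congrFun (congrFun heq v) f
      rw [hGtf] at hent
      have h0 : genericG K E v f = φ (MvPolynomial.X ⟨(f, v), hE⟩) := by
        simp [genericG, hE, hφ]
      rw [h0] at hent
      have hx : (MvPolynomial.X (⟨(f, v), hE⟩ : ↥E) : MvPolynomial ↥E K) = 0 := by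
        apply hinj
        rw [map_zero, ← hent]
      exact MvPolynomial.X_ne_zero _ hx
  -- row f of (1 - G)⁻¹ is e_f
  have hAinv_row : ∀ b, (1 - genericG K E)⁻¹ f b
      = (1 : Matrix (Fin n) (Fin n) (EdgeField K E)) f b := by
    intro b
    have h1 := Matrix.mul_nonsing_inv _ hdetG
    have h2 := congrFun (congrFun h1 f) b
    rw [Matrix.mul_apply] at h2
    rw [← h2]
    symm
    rw [Finset.sum_eq_single f]
    · have hff : (1 - genericG K E) f f = 1 := by
        simp [Matrix.sub_apply, Matrix.one_apply, genericG, hsource f]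
      rw [hff, one_mul]
    · intro k _ hk
      have hfk : (1 - genericG K E) f k = 0 := by
        simp [Matrix.sub_apply, Matrix.one_apply, genericG, hsource k,
          (Ne.symm hk : f ≠ k)]
      rw [hfk, zero_mul]
    · intro hf; exact absurd (Finset.mem_univ f) hf
  -- key entrywise equality
  have hkey : ∀ b : Fin n, b ≠ f → ∀ c : Fin n,
      (1 - Gt)⁻¹ c b = (1 - genericG K E)⁻¹ c b := by
    intro b hb c
    set A : Matrix (Fin n) (Fin n) (EdgeField K E) := 1 - genericG K E with hA
    set A' : Matrix (Fin n) (Fin n) (EdgeField K E) := 1 - Gt with hA'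
    have hid : A'⁻¹ = A⁻¹ + A'⁻¹ * ((A - A') * A⁻¹) := by
      rw [Matrix.sub_mul, Matrix.mul_nonsing_inv _ hdetG, Matrix.mul_sub,
        Matrix.mul_one, ← Matrix.mul_assoc, Matrix.nonsing_inv_mul _ hdetGt,
        Matrix.one_mul]
      abel
    have hcol : ∀ i, ((A - A') * A⁻¹) i b = 0 := by
      intro i
      rw [Matrix.mul_apply]
      apply Finset.sum_eq_zero
      intro j _
      by_cases hj : j = f
      · subst hj
        have hz : A⁻¹ j b = 0 := by
          rw [hAinv_row b]
          exact Matrix.one_apply_ne (Ne.symm hb)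
        rw [hz, mul_zero]
      · have hz : (A - A') i j = 0 := by
          simp [hA, hA', Matrix.sub_apply, hGttriv i j hj]
        rw [hz, zero_mul]
    have hent := congrFun (congrFun hid c) b
    rw [Matrix.add_apply, Matrix.mul_apply] at hent
    rw [hent, Finset.sum_eq_zero, add_zero]
    intro i _
    rw [hcol i, mul_zero]
  have hM : MMat Gt C B = MMat (genericG K E) C B := by
    funext c b
    have hbf : (b : Fin n) ≠ f := fun h => hfB (h ▸ b.2)
    exact hkey b hbf c
  refine ⟨fun hgen => hne (hgen Gt hcons hdetGt hM), Gt, hcons, hdetGt, hne, hM⟩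



end
end

section
/- Let (V,E) be a weakly connected digraph with n ≥ 2 nodes and let (B,C) be an EMP. If some sink s of (V,E) satisfies s ∉ C, then the network ((V,E),B,C) is not generically identifiable; explicitly, there exists a matrix G̃ over F consistent with (V,E), with I − G̃ invertible and G̃ ≠ G, such that M(G̃; C, B) = M(G; C, B). -/
/-!
STATEMENT 1: If a sink `s` of a weakly connected digraph `(V, E)` (with `n ≥ 2` nodes)
is not measured (`s ∉ C`), then the network `((V,E), B, C)` is not generically identifiable;
explicitly there is a matrix `G̃` over `F = K(x_e : e ∈ E)` consistent with `(V,E)`, with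
`I - G̃` invertible and `G̃ ≠ G`, such that `M(G̃; C, B) = M(G; C, B)`.
-/

open Matrix

noncomputable section

section Aux

variable {K : Type*} [Field K] {n : ℕ} {E : Finset (Fin n × Fin n)}

lemma genericG_eq_zero (K : Type*) [Field K] {n : ℕ} {E : Finset (Fin n × Fin n)}
    {i j : Fin n} (h : (j, i) ∉ E) : genericG K E i j = 0 := by
  simp [genericG, h]

lemma genericG_ne_zero (K : Type*) [Field K] {n : ℕ} {E : Finset (Fin n × Fin n)}
    {i j : Fin n} (h : (j, i) ∈ E) : genericG K E i j ≠ 0 := by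
  have hinj : Function.Injective (algebraMap (MvPolynomial ↥E K) (EdgeField K E)) :=
    IsFractionRing.injective _ _
  simp only [genericG, dif_pos h]
  intro hz
  have h0 : (MvPolynomial.X (⟨(j, i), h⟩ : ↥E) : MvPolynomial ↥E K) = 0 :=
    hinj (by rw [hz, map_zero])
  exact MvPolynomial.X_ne_zero _ h0

lemma det_one_sub_genericG_isUnit (K : Type*) [Field K] {n : ℕ}
    (E : Finset (Fin n × Fin n)) : IsUnit (1 - genericG K E).det := by
  classical
  set R := MvPolynomial ↥E K
  set φ : R →+* EdgeField K E := algebraMap R (EdgeField K E)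
  set G₀ : Matrix (Fin n) (Fin n) R := fun i j =>
    if h : (j, i) ∈ E then MvPolynomial.X ⟨(j, i), h⟩ else 0 with hG₀
  have hmap : (1 - genericG K E) = φ.mapMatrix (1 - G₀) := by
    ext i j
    simp only [RingHom.mapMatrix_apply, Matrix.map_apply, Matrix.sub_apply]
    simp only [RingHom.mapMatrix_apply, Matrix.map_apply, Matrix.sub_apply, Pi.sub_apply,
      Matrix.one_apply, genericG, hG₀, map_sub, apply_dite φ, apply_ite φ,
      map_zero, _root_.map_one]
    rfl
  have hdet : (1 - genericG K E).det = φ (1 - G₀).det := by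
    rw [hmap, ← RingHom.map_det]
  rw [hdet, isUnit_iff_ne_zero]
  intro hz
  have h0 : (1 - G₀).det = 0 :=
    (IsFractionRing.injective R (EdgeField K E)) (by rw [hz, map_zero])
  have h1 : ((MvPolynomial.eval (fun _ => (0 : K))).mapMatrix (1 - G₀)).det = 0 := by
    rw [← RingHom.map_det, h0, map_zero]
  have hone : (MvPolynomial.eval (fun _ => (0 : K))).mapMatrix (1 - G₀) = 1 := by
    ext i j
    simp only [RingHom.mapMatrix_apply, Matrix.map_apply, Matrix.sub_apply]
    simp only [RingHom.mapMatrix_apply, Matrix.map_apply, Matrix.sub_apply, Pi.sub_apply,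
      Matrix.one_apply, hG₀, map_sub, apply_dite, apply_ite,
      map_zero, _root_.map_one, MvPolynomial.eval_X]
    split <;> split <;> simp_all
  rw [hone, Matrix.det_one] at h1
  exact one_ne_zero h1

end Aux

set_option maxHeartbeats 1000000 in
theorem statement1 (K : Type*) [Field K] [Infinite K] (n : ℕ) (hn : 2 ≤ n)
    (E : Finset (Fin n × Fin n)) (hnoself : ∀ v : Fin n, (v, v) ∉ E)
    (hconn : WeaklyConnected E) (B C : Finset (Fin n))
    (s : Fin n) (hsink : ∀ k : Fin n, (s, k) ∉ E) (hsC : s ∉ C) :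
    ¬ GenIdentifiable K E B C ∧
      ∃ Gt : Matrix (Fin n) (Fin n) (EdgeField K E),
        Consistent E Gt ∧ IsUnit (1 - Gt).det ∧ Gt ≠ genericG K E ∧
          MMat Gt C B = MMat (genericG K E) C B := by
  classical
  set F := EdgeField K E
  set G := genericG K E with hGdef
  -- find an edge into s
  haveI : Nontrivial (Fin n) := ⟨⟨⟨0, by omega⟩, ⟨1, by omega⟩, by simp [Fin.ext_iff]⟩⟩
  obtain ⟨t, hts⟩ := exists_ne s
  obtain ⟨w⟩ := hconn.preconnected s t
  obtain ⟨j, hjE⟩ : ∃ j : Fin n, (j, s) ∈ E := by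
    cases w with
    | nil => exact absurd rfl (Ne.symm hts)
    | cons h p =>
      rw [SimpleGraph.fromRel_adj] at h
      rcases h.2 with h1 | h1
      · exact absurd h1 (hsink _)
      · exact ⟨_, h1⟩
  have hcol : ∀ i, G i s = 0 := fun i => genericG_eq_zero K (hsink i)
  set A : Matrix (Fin n) (Fin n) F := 1 - G with hAdef
  have hdetA : IsUnit A.det := det_one_sub_genericG_isUnit K E
  have hAs : ∀ i, A i s = if i = s then 1 else 0 := by
    intro i
    simp [hAdef, Matrix.sub_apply, Matrix.one_apply, hcol i]
  set Gt : Matrix (Fin n) (Fin n) F := fun i j => if i = s then 0 else G i j with hGt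
  set M : Matrix (Fin n) (Fin n) F := fun i j => if i = s then G s j else 0 with hM
  have h1 : 1 - Gt = A + M := by
    ext i j
    simp only [Matrix.sub_apply, Matrix.add_apply]
    by_cases hi : i = s <;>
      simp [hGt, hM, hAdef, Matrix.sub_apply, Matrix.add_apply, Pi.sub_apply, Pi.add_apply, hi]
    subst hi; rfl
  have hAM : A * M = M := by
    ext i j
    rw [Matrix.mul_apply, Finset.sum_eq_single s]
    · rcases eq_or_ne i s with hi | hi
      · simp [hM, hi, hAs s]
      · simp [hM, hAs i, hi]
    · intro k _ hk
      simp [hM, hk]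
    · simp
  have hMM : M * M = 0 := by
    ext i j
    rw [Matrix.mul_apply, Finset.sum_eq_single s]
    · simp [hM, hcol s, hnoself s]
    · intro k _ hk
      simp [hM, hk]
    · simp
  have hright : (A + M) * (A⁻¹ - M * A⁻¹) = 1 := by
    rw [add_mul, mul_sub, mul_sub, ← mul_assoc, ← mul_assoc, hAM, hMM,
      Matrix.mul_nonsing_inv A hdetA, Matrix.zero_mul, sub_zero, sub_add_cancel]
  have hdetGt : IsUnit (1 - Gt).det := by
    rw [h1]
    have := congrArg Matrix.det hright
    rw [Matrix.det_mul, Matrix.det_one] at this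
    exact isUnit_iff_exists_inv.mpr ⟨_, this⟩
  have hinv : (1 - Gt)⁻¹ = A⁻¹ - M * A⁻¹ := by
    rw [h1]
    exact Matrix.inv_eq_right_inv hright
  have hcons : Consistent E Gt := by
    intro i k hik
    by_cases hi : i = s <;> simp [hGt, hi, hGdef, genericG_eq_zero K hik]
  have hne : Gt ≠ G := by
    intro hEq
    have := congrFun (congrFun hEq s) j
    simp only [hGt, if_pos rfl] at this
    exact genericG_ne_zero K hjE this.symm
  have hMM' : MMat Gt C B = MMat G C B := by
    funext c b
    have hcs : (c : Fin n) ≠ s := fun h => hsC (h ▸ c.2)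
    show (1 - Gt)⁻¹ c.1 b.1 = (1 - G)⁻¹ c.1 b.1
    rw [hinv]
    have : (M * A⁻¹) c.1 b.1 = 0 := by
      rw [Matrix.mul_apply]
      apply Finset.sum_eq_zero
      intro k _
      simp [hM, hcs]
    simp [Matrix.sub_apply, this, ← hAdef]
  refine ⟨fun hid => hne (hid Gt hcons hdetGt hMM'), Gt, hcons, hdetGt, hne, hMM'⟩

end
end

section
/- Let (V,E) be a weakly connected digraph with n ≥ 2 nodes and let (B,C) be an EMP. If some dource j of (V,E) satisfies j ∉ B, then the network ((V,E),B,C) is not generically identifiable; explicitly, there exists a matrix G̃ over F consistent with (V,E), with I − G̃ invertible and G̃ ≠ G, such that M(G̃; C, B) = M(G; C, B). -/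
/-!
STATEMENT 2: If a dource `j` of a weakly connected digraph `(V, E)` (with `n ≥ 2` nodes)
is not excited (`j ∉ B`), then the network `((V,E), B, C)` is not generically identifiable;
a node `j` is a dource if it has an out-neighbor `m` such that every in-neighbor `k` of `j`
has a directed edge `k → m`.
explicitly there is a matrix `G̃` over `F = K(x_e : e ∈ E)` consistent with `(V,E)`, with
`I - G̃` invertible and `G̃ ≠ G`, such that `M(G̃; C, B) = M(G; C, B)`.
-/

open Matrix

noncomputable section

set_option maxHeartbeats 2000000 in
theorem statement2 (K : Type*) [Field K] [Infinite K] (n : ℕ) (hn : 2 ≤ n)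
    (E : Finset (Fin n × Fin n)) (hnoself : ∀ v : Fin n, (v, v) ∉ E)
    (hconn : WeaklyConnected E) (B C : Finset (Fin n))
    (j : Fin n)
    (hdource : ∃ m : Fin n, (j, m) ∈ E ∧ ∀ k : Fin n, (k, j) ∈ E → (k, m) ∈ E)
    (hjB : j ∉ B) :
    ¬ GenIdentifiable K E B C ∧
      ∃ Gt : Matrix (Fin n) (Fin n) (EdgeField K E),
        Consistent E Gt ∧ IsUnit (1 - Gt).det ∧ Gt ≠ genericG K E ∧
          MMat Gt C B = MMat (genericG K E) C B := by
  obtain ⟨m, hjm, hdm⟩ := hdource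
  have hmj : m ≠ j := by intro h; exact hnoself j (h ▸ hjm)
  set F := EdgeField K E
  set G := genericG K E with hG
  set Emj : Matrix (Fin n) (Fin n) F := Matrix.single m j (1 : F) with hEmj
  set Gt : Matrix (Fin n) (Fin n) F := G + Emj * (G - 1) with hGt
  -- factorization
  have h1 : (1 : Matrix (Fin n) (Fin n) F) - Gt = (1 + Emj) * (1 - G) := by
    rw [hGt]; simp only [add_mul, one_mul, mul_sub, mul_one]; abel
  have hEE : Emj * Emj = 0 := Matrix.single_mul_single_of_ne 1 m j m (Ne.symm hmj) 1
  have hT : (1 + Emj) * (1 - Emj) = 1 := by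
    have h2 : (1 + Emj) * (1 - Emj) = 1 - Emj * Emj := by
      simp only [add_mul, one_mul, mul_sub, mul_one]; abel
    rw [h2, hEE, sub_zero]
  -- determinant of 1 - G is nonzero
  have hdetG : IsUnit (1 - G).det := by
    set f := algebraMap (MvPolynomial ↥E K) F with hf
    set Gp : Matrix (Fin n) (Fin n) (MvPolynomial ↥E K) := fun i k =>
      if h : (k, i) ∈ E then MvPolynomial.X (⟨(k, i), h⟩ : ↥E) else 0 with hGp
    have hmap : (1 : Matrix (Fin n) (Fin n) F) - G = ((1 - Gp).map f) := by
      ext i k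
      simp only [Matrix.map_apply, Matrix.sub_apply, map_sub]
      simp only [hG, genericG, hGp]
      rw [apply_dite f]
      simp [Matrix.one_apply, apply_ite f]
      rfl
    have hdet : (1 - G).det = f (1 - Gp).det := by rw [hmap]; exact (RingHom.map_det f _).symm
    have hne : (1 - Gp).det ≠ 0 := by
      intro h0
      have hm0 : (1 - Gp).map (MvPolynomial.eval (fun _ => (0 : K))) = 1 := by
        ext i k
        simp only [Matrix.map_apply, Matrix.sub_apply, map_sub]
        simp only [hGp]
        rw [apply_dite (MvPolynomial.eval (fun _ => (0 : K)))]
        simp [Matrix.one_apply, apply_ite (MvPolynomial.eval (fun _ => (0 : K)))]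
      have h1' : MvPolynomial.eval (fun _ => (0 : K)) ((1 - Gp).det) = 1 := by
        rw [RingHom.map_det, RingHom.mapMatrix_apply, hm0, Matrix.det_one]
      rw [h0, map_zero] at h1'
      exact zero_ne_one h1'
    rw [hdet, isUnit_iff_ne_zero]
    intro h0
    exact hne ((IsFractionRing.to_map_eq_zero_iff (K := F)).mp h0)
  have hdetT : (1 + Emj).det = 1 := Matrix.det_transvection_of_ne m j hmj (1 : F)
  have hdetGt : IsUnit (1 - Gt).det := by
    rw [h1, Matrix.det_mul, hdetT, one_mul]; exact hdetG
  -- consistency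
  have hcons : Consistent E Gt := by
    intro i k hk
    have hGik : G i k = 0 := by rw [hG]; simp [genericG, hk]
    rcases eq_or_ne i m with rfl | him
    · have hkj : k ≠ j := by rintro rfl; exact hk hjm
      have hkjE : (k, j) ∉ E := fun h => hk (hdm k h)
      have hGjk : G j k = 0 := by rw [hG]; simp [genericG, hkjE]
      rw [hGt, hEmj, Matrix.add_apply, Matrix.single_mul_apply_same,
        Matrix.sub_apply, hGik, hGjk, Matrix.one_apply_ne' hkj]
      ring
    · rw [hGt, hEmj, Matrix.add_apply,
        Matrix.single_mul_apply_of_ne 1 m j i k him, hGik, add_zero]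
  -- Gt ≠ G
  have hne : Gt ≠ G := by
    have hGjj : G j j = 0 := by rw [hG]; simp [genericG, hnoself j]
    have key : Gt m j = G m j - 1 := by
      rw [hGt, hEmj, Matrix.add_apply, Matrix.single_mul_apply_same,
        Matrix.sub_apply, hGjj, Matrix.one_apply_eq]
      ring
    intro h
    rw [h] at key
    exact one_ne_zero (by linear_combination key : (1 : F) = 0)
  -- M matrices agree
  have hinv : (1 - Gt)⁻¹ = (1 - G)⁻¹ * (1 - Emj) := by
    rw [h1, Matrix.mul_inv_rev, Matrix.inv_eq_right_inv hT]
  have hM : MMat Gt C B = MMat G C B := by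
    ext c b
    have hbj : (b : Fin n) ≠ j := by rintro h; exact hjB (h ▸ b.2)
    show (1 - Gt)⁻¹ c.1 b.1 = (1 - G)⁻¹ c.1 b.1
    rw [hinv, hEmj, Matrix.mul_sub, Matrix.mul_one, Matrix.sub_apply,
      Matrix.mul_single_apply_of_ne 1 m j c.1 b.1 hbj, sub_zero]
  exact ⟨fun hid => hne (hid Gt hcons hdetGt hM), Gt, hcons, hdetGt, hne, hM⟩

end
end

section
/- Let (V,E) be a weakly connected digraph with n ≥ 2 nodes and let (B,C) be an EMP. If some dink j of (V,E) satisfies j ∉ C, then the network ((V,E),B,C) is not generically identifiable; explicitly, there exists a matrix G̃ over F consistent with (V,E), with I − G̃ invertible and G̃ ≠ G, such that M(G̃; C, B) = M(G; C, B). -/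
/-!
STATEMENT 3: If a dink `j` of a weakly connected digraph `(V, E)` (with `n ≥ 2` nodes)
is not measured (`j ∉ C`), then the network `((V,E), B, C)` is not generically identifiable;
a node `j` is a dink if it has an in-neighbor `m` such that `m` has a directed edge `m → k`
to every out-neighbor `k` of `j`.
explicitly there is a matrix `G̃` over `F = K(x_e : e ∈ E)` consistent with `(V,E)`, with
`I - G̃` invertible and `G̃ ≠ G`, such that `M(G̃; C, B) = M(G; C, B)`.
-/

open Matrix

noncomputable section

lemma det_one_sub_genericG_ne_zero (K : Type*) [Field K] {n : ℕ}
    (E : Finset (Fin n × Fin n)) : (1 - genericG K E).det ≠ 0 := by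
  classical
  set φ := algebraMap (MvPolynomial ↥E K) (EdgeField K E)
  set P : Matrix (Fin n) (Fin n) (MvPolynomial ↥E K) := fun i j =>
    if h : (j, i) ∈ E then MvPolynomial.X (⟨(j, i), h⟩ : ↥E) else 0 with hP
  have hGP : genericG K E = φ.mapMatrix P := by
    ext i k
    simp only [genericG, RingHom.mapMatrix_apply, Matrix.map_apply]; simp only [hP]
    split <;> simp [φ]
  have key : (1 - genericG K E).det = φ ((1 - P).det) := by
    rw [RingHom.map_det, hGP]
    congr 1
    simp [map_sub]
  rw [key]
  have hne : (1 - P).det ≠ 0 := by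
    intro h
    have := congrArg (MvPolynomial.eval (fun _ => (0 : K))) h
    rw [RingHom.map_det] at this
    have h2 : (MvPolynomial.eval (fun _ => (0 : K))).mapMatrix (1 - P) = 1 := by
      ext i k
      simp only [RingHom.mapMatrix_apply, Matrix.map_apply, Matrix.sub_apply, map_sub]; simp only [hP]
      by_cases hik : i = k <;> split <;> simp [hik, Matrix.one_apply]
    rw [h2] at this
    simp at this
  simpa [φ] using (map_ne_zero_iff φ (IsFractionRing.injective _ _)).mpr hne

set_option maxHeartbeats 1000000

theorem statement3 (K : Type*) [Field K] [Infinite K] (n : ℕ) (hn : 2 ≤ n)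
    (E : Finset (Fin n × Fin n)) (hnoself : ∀ v : Fin n, (v, v) ∉ E)
    (hconn : WeaklyConnected E) (B C : Finset (Fin n))
    (j : Fin n)
    (hdink : ∃ m : Fin n, (m, j) ∈ E ∧ ∀ k : Fin n, (j, k) ∈ E → (m, k) ∈ E)
    (hjC : j ∉ C) :
    ¬ GenIdentifiable K E B C ∧
      ∃ Gt : Matrix (Fin n) (Fin n) (EdgeField K E),
        Consistent E Gt ∧ IsUnit (1 - Gt).det ∧ Gt ≠ genericG K E ∧
          MMat Gt C B = MMat (genericG K E) C B := by
  classical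
  obtain ⟨m, hmj, hdom⟩ := hdink
  set F := EdgeField K E
  set G := genericG K E with hGdef
  have hmj' : m ≠ j := fun h => hnoself j (h ▸ hmj)
  have hGc : Consistent E G := by
    intro i k hk
    simp [hGdef, genericG, hk]
  have hGjj : G j j = 0 := hGc j j (hnoself j)
  -- the modified matrix
  set S : Matrix (Fin n) (Fin n) F := Matrix.single j m 1 with hS
  set Gt : Matrix (Fin n) (Fin n) F := G - (1 - G) * S with hGt
  have hone : (1 : Matrix (Fin n) (Fin n) F) - Gt
      = (1 - G) * Matrix.transvection j m (1 : F) := by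
    rw [Matrix.transvection, Matrix.mul_add, Matrix.mul_one]
    rw [hGt]
    abel
  -- determinant
  have hdetG : (1 - G).det ≠ 0 := det_one_sub_genericG_ne_zero K E
  have hdetT : (Matrix.transvection j m (1 : F)).det = 1 :=
    Matrix.det_transvection_of_ne j m hmj'.symm 1
  have hdet : IsUnit (1 - Gt).det := by
    rw [hone, Matrix.det_mul, hdetT, mul_one]
    exact isUnit_iff_ne_zero.mpr hdetG
  -- consistency
  have hcons : Consistent E Gt := by
    intro i k hk
    have hSmul : ((1 - G) * S) i k = (1 - G) i j * (if k = m then 1 else 0) := by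
      rw [hS]
      by_cases hkm : k = m
      · subst hkm; simp
      · simp [hkm]
    by_cases hkm : k = m
    · subst hkm
      have hij : i ≠ j := fun h => hk (h ▸ hmj)
      have hGij : G i j = 0 := by
        by_cases hji : (j, i) ∈ E
        · exact absurd (hdom i hji) hk
        · exact hGc i j hji
      rw [hGt]
      simp [Matrix.sub_apply, hSmul, hGc i k hk, Matrix.one_apply_ne hij, hGij]
    · rw [hGt]
      simp [Matrix.sub_apply, hSmul, hkm, hGc i k hk]
  -- Gt ≠ G
  have hne : Gt ≠ G := by
    intro h
    have := congrFun (congrFun h j) m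
    rw [hGt] at this
    simp only [Matrix.sub_apply] at this
    have h2 : ((1 - G) * S) j m = 1 := by
      rw [hS]
      simp [Matrix.sub_apply, Matrix.one_apply, hGjj]
    rw [h2] at this
    have : (1 : F) = 0 := by linear_combination -this
    exact one_ne_zero this
  -- inverse computation
  have hTinv : (Matrix.transvection j m (1 : F))⁻¹ = Matrix.transvection j m (-1 : F) := by
    apply Matrix.inv_eq_right_inv
    rw [Matrix.transvection_mul_transvection_same j m hmj'.symm]
    rw [add_neg_cancel, Matrix.transvection_zero]
  have hinv : (1 - Gt)⁻¹ = Matrix.transvection j m (-1 : F) * (1 - G)⁻¹ := by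
    rw [hone, Matrix.mul_inv_rev, hTinv]
  have hM : MMat Gt C B = MMat G C B := by
    funext c b
    have hcj : (c : Fin n) ≠ j := fun h => hjC (h ▸ c.2)
    show (1 - Gt)⁻¹ c.1 b.1 = (1 - G)⁻¹ c.1 b.1
    rw [hinv, Matrix.transvection, Matrix.add_mul, Matrix.one_mul, Matrix.add_apply,
      Matrix.single_mul_apply_of_ne _ _ _ _ _ hcj, add_zero]
  refine ⟨fun hid => hne (hid Gt hcons hdet hM), Gt, hcons, hdet, hne, hM⟩

end
end

section
/- Let (V,E) be a weakly connected digraph with n ≥ 2 nodes and let (B,C) be an EMP. If some node k ∈ V is neither excited nor measured, i.e. k ∉ B ∪ C, then the network ((V,E),B,C) is not generically identifiable; explicitly, there exists a matrix G̃ over F consistent with (V,E), with I − G̃ invertible and G̃ ≠ G, such that M(G̃; C, B) = M(G; C, B). -/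
/-!
STATEMENT 4: If some node `k` of a weakly connected digraph `(V, E)` (with `n ≥ 2` nodes)
is neither excited nor measured (`k ∉ B ∪ C`), then the network `((V,E), B, C)` is not
generically identifiable;
explicitly there is a matrix `G̃` over `F = K(x_e : e ∈ E)` consistent with `(V,E)`, with
`I - G̃` invertible and `G̃ ≠ G`, such that `M(G̃; C, B) = M(G; C, B)`.
-/

open Matrix

noncomputable section

set_option synthInstance.maxHeartbeats 1000000
set_option maxHeartbeats 1000000

theorem statement4 (K : Type*) [Field K] [Infinite K] (n : ℕ) (hn : 2 ≤ n)
    (E : Finset (Fin n × Fin n)) (hnoself : ∀ v : Fin n, (v, v) ∉ E)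
    (hconn : WeaklyConnected E) (B C : Finset (Fin n))
    (k : Fin n) (hk : k ∉ B ∪ C) :
    ¬ GenIdentifiable K E B C ∧
      ∃ Gt : Matrix (Fin n) (Fin n) (EdgeField K E),
        Consistent E Gt ∧ IsUnit (1 - Gt).det ∧ Gt ≠ genericG K E ∧
          MMat Gt C B = MMat (genericG K E) C B := by
  have hkB : k ∉ B := fun h => hk (Finset.mem_union_left _ h)
  have hkC : k ∉ C := fun h => hk (Finset.mem_union_right _ h)
  obtain ⟨j, hjk⟩ : ∃ j : Fin n, j ≠ k := by
    have : 1 < Fintype.card (Fin n) := by rw [Fintype.card_fin]; omega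
    exact Fintype.exists_ne_of_one_lt_card this k
  obtain ⟨m, hkm, hedge⟩ : ∃ m, k ≠ m ∧ ((k, m) ∈ E ∨ (m, k) ∈ E) := by
    obtain ⟨w⟩ := hconn.preconnected k j
    cases w with
    | nil => exact absurd rfl hjk.symm
    | cons h p =>
      rw [SimpleGraph.fromRel_adj] at h
      exact ⟨_, h.1, h.2⟩
  set F := EdgeField K E
  set φ := algebraMap (MvPolynomial ↥E K) F with hφ
  have hinj : Function.Injective φ := IsFractionRing.injective _ _
  obtain ⟨e0, he0⟩ : ∃ e0 : ↥E, e0.1 = (k, m) ∨ e0.1 = (m, k) := by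
    rcases hedge with h | h
    · exact ⟨⟨(k, m), h⟩, Or.inl rfl⟩
    · exact ⟨⟨(m, k), h⟩, Or.inr rfl⟩
  set x : F := φ (MvPolynomial.X e0) with hxdef
  have hx : x ≠ 0 := by
    intro h
    have : (MvPolynomial.X e0 : MvPolynomial ↥E K) = 0 := hinj (by simpa using h)
    exact MvPolynomial.X_ne_zero e0 this
  set t : F := 1 + x with htdef
  have ht0 : t ≠ 0 := by
    intro h
    have h2 : φ (1 + MvPolynomial.X e0) = 0 := by
      rw [φ.map_add, φ.map_one]; exact h
    have h3 : (1 + MvPolynomial.X e0 : MvPolynomial ↥E K) = 0 := hinj (by simpa using h2)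
    have h4 := congrArg (MvPolynomial.eval (0 : ↥E → K)) h3
    simp at h4
  set d : Fin n → F := fun v => if v = k then t else 1 with hddef
  have hd : ∀ v, d v ≠ 0 := by
    intro v; simp only [hddef]; split
    · exact ht0
    · exact one_ne_zero
  set G := genericG K E with hGdef
  set Gt : Matrix (Fin n) (Fin n) F := Matrix.of (fun i j => d i * (d j)⁻¹ * G i j) with hGt
  have hGdiag : ∀ v, G v v = 0 := by
    intro v; simp [hGdef, genericG, hnoself v]
  have hcons : Consistent E Gt := by
    intro i j hij
    simp [hGt, hGdef, genericG, hij]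
  set D := Matrix.diagonal d with hD
  set D' := Matrix.diagonal (fun v => (d v)⁻¹) with hD'
  have hfun1 : (fun i => d i * (d i)⁻¹) = fun _ => (1 : F) :=
    funext fun i => mul_inv_cancel₀ (hd i)
  have hfun2 : (fun i => (d i)⁻¹ * d i) = fun _ => (1 : F) :=
    funext fun i => inv_mul_cancel₀ (hd i)
  have hDD' : D * D' = 1 := by
    rw [hD, hD', Matrix.diagonal_mul_diagonal, hfun1, Matrix.diagonal_one]
  have hD'D : D' * D = 1 := by
    rw [hD, hD', Matrix.diagonal_mul_diagonal, hfun2, Matrix.diagonal_one]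
  have hfac : (1 : Matrix (Fin n) (Fin n) F) - Gt = D * (1 - G) * D' := by
    ext i j
    rw [hD, hD', Matrix.mul_diagonal, Matrix.diagonal_mul]
    by_cases hij : i = j
    · subst hij
      simp only [Matrix.sub_apply, Matrix.one_apply_eq, hGt, Matrix.of_apply, hGdiag i]
      simp [mul_inv_cancel₀ (hd i)]
    · simp only [Matrix.sub_apply, Matrix.one_apply_ne hij, hGt, Matrix.of_apply]
      ring
  have hdetG := det_one_sub_genericG_ne_zero K E
  have hdet : (1 - Gt).det ≠ 0 := by
    rw [hfac, Matrix.det_mul, Matrix.det_mul, hD, hD', Matrix.det_diagonal, Matrix.det_diagonal]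
    exact mul_ne_zero (mul_ne_zero (Finset.prod_ne_zero_iff.2 fun v _ => hd v) hdetG)
      (Finset.prod_ne_zero_iff.2 fun v _ => inv_ne_zero (hd v))
  have hunit : IsUnit (1 - Gt).det := isUnit_iff_ne_zero.2 hdet
  have hx2 : x * x ≠ 0 := mul_ne_zero hx hx
  have hne : Gt ≠ G := by
    intro h
    rcases he0 with he | he
    · -- e0 = (k, m) : G m k = x
      have hmem : ((k, m) : Fin n × Fin n) ∈ E := he ▸ e0.2
      have hsub : (⟨(k, m), hmem⟩ : ↥E) = e0 := Subtype.ext he.symm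
      have hGmk : G m k = x := by
        simp only [hGdef, genericG, dif_pos hmem, hsub, hxdef]
        rfl
      have h5 : Gt m k = G m k := by rw [h]
      have hmk : m ≠ k := fun hc => hkm hc.symm
      rw [hGt, Matrix.of_apply, hGmk, hddef] at h5
      simp only [hmk, if_false, eq_self_iff_true, if_true, one_mul] at h5
      -- h5 : t⁻¹ * x = x
      apply hx2
      have h6 : x = t * x := by
        calc x = t * (t⁻¹ * x) := by rw [← mul_assoc, mul_inv_cancel₀ ht0, one_mul]
        _ = t * x := by rw [h5]
      rw [htdef] at h6
      linear_combination -h6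
    · -- e0 = (m, k) : G k m = x
      have hmem : ((m, k) : Fin n × Fin n) ∈ E := he ▸ e0.2
      have hsub : (⟨(m, k), hmem⟩ : ↥E) = e0 := Subtype.ext he.symm
      have hGkm : G k m = x := by
        simp only [hGdef, genericG, dif_pos hmem, hsub, hxdef]
        rfl
      have h5 : Gt k m = G k m := by rw [h]
      have hmk : m ≠ k := fun hc => hkm hc.symm
      rw [hGt, Matrix.of_apply, hGkm, hddef] at h5
      simp only [hmk, if_false, eq_self_iff_true, if_true, inv_one, mul_one] at h5
      -- h5 : t * x = x
      apply hx2
      rw [htdef] at h5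
      linear_combination h5
  have hMM : MMat Gt C B = MMat G C B := by
    have hinv : (1 - Gt)⁻¹ = D * (1 - G)⁻¹ * D' := by
      rw [hfac, Matrix.mul_inv_rev, Matrix.mul_inv_rev,
        Matrix.inv_eq_right_inv hD'D, Matrix.inv_eq_right_inv hDD', mul_assoc]
    ext c b
    have hck : (c : Fin n) ≠ k := fun h => hkC (h ▸ c.2)
    have hbk : (b : Fin n) ≠ k := fun h => hkB (h ▸ b.2)
    simp only [MMat, hinv, hD, hD', Matrix.mul_diagonal, Matrix.diagonal_mul, hddef,
      hck, hbk, if_false, inv_one, one_mul, mul_one]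
    erw [Matrix.mul_diagonal, Matrix.diagonal_mul]
    simp only [hck, hbk, if_false, inv_one, one_mul, mul_one]
  exact ⟨fun hid => hne (hid Gt hcons hunit hMM), Gt, hcons, hunit, hne, hMM⟩


end
end

section
/- Let n ≥ 3 and let (V,E) be the directed loop on V = {1,…,n} with edge set E = {(i, i+1) : 1 ≤ i ≤ n−1} ∪ {(n,1)}. Call a subset D ⊆ V cyclically consecutive if D = {a, a+1, …, a+k−1} with indices taken modulo n, for some a ∈ V and 0 ≤ k ≤ n. Then the network ((V,E),B,C) is generically identifiable if and only if B ∪ C = V and, in addition, either B ∩ C ≠ ∅ or B is not cyclically consecutive. -/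
/-!
STATEMENT 6: For `n ≥ 3` (here `n = m + 3`), the directed loop on `{1, …, n}` with EMP
`(B, C)` is generically identifiable if and only if `B ∪ C = V` and, in addition, either
`B ∩ C ≠ ∅` or `B` is not cyclically consecutive.
-/

open Matrix

noncomputable section

/-- The edge set of the directed loop on `Fin n`: edges `i → i+1` (indices mod `n`). -/
def loopEdges (n : ℕ) [NeZero n] : Finset (Fin n × Fin n) :=
  Finset.univ.filter (fun p => p.2 = p.1 + 1)

/-- `D` is cyclically consecutive: `D = {a, a+1, …, a+k-1}` (indices mod `n`) for some
`a` and `0 ≤ k ≤ n`. -/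
def CyclicallyConsecutive {n : ℕ} [NeZero n] (D : Finset (Fin n)) : Prop :=
  ∃ (a : Fin n) (k : ℕ), k ≤ n ∧ D = (Finset.range k).image (fun i : ℕ => a + (Fin.ofNat n i))

open Matrix Finset

open Fin.NatCast Fin.CommRing

namespace S6

variable {F : Type*} [Field F] {m : ℕ}

lemma mod_small (a n : ℕ) (h : a < 2*n) (hn : 0 < n) :
    a % n = if a < n then a else a - n := by
  split_ifs with h2
  · exact Nat.mod_eq_of_lt h2
  · rw [Nat.mod_eq_sub_mod (le_of_not_gt h2), Nat.mod_eq_of_lt (by omega)]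

lemma fin_eq_iff (i j : Fin (m+3)) : i = j ↔ i.val = j.val := Fin.ext_iff

lemma sub_val (p q : Fin (m+3)) : (p - q).val = ((m+3) - q.val + p.val) % (m+3) := by
  rw [Fin.sub_def]

lemma add_val (p q : Fin (m+3)) : (p + q).val = (p.val + q.val) % (m+3) := by
  rw [Fin.add_def]

lemma cast_val (i : ℕ) : ((i : Fin (m+3))).val = i % (m+3) := Fin.val_natCast i (m+3)

lemma one_val : ((1 : Fin (m+3))).val = 1 := rfl

lemma add_one_ne_self (i : Fin (m+3)) : i + 1 ≠ i := by
  rw [Ne, fin_eq_iff, add_val, one_val, mod_small _ _ (by omega) (by omega)]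
  have := i.isLt
  split_ifs <;> omega

lemma sub_one_ne_self (i : Fin (m+3)) : i - 1 ≠ i := by
  rw [Ne, fin_eq_iff, sub_val, one_val, mod_small _ _ (by omega) (by omega)]
  have := i.isLt
  split_ifs <;> omega

/-- companion matrix of the cycle with weights t -/
def Hm (t : Fin (m+3) → F) : Matrix (Fin (m+3)) (Fin (m+3)) F :=
  fun i j => if i = j + 1 then t j else 0

/-- path product of length L starting at node b -/
def PP (t : Fin (m+3) → F) (b : Fin (m+3)) (L : ℕ) : F :=
  ∏ i ∈ Finset.range L, t (b + (i : Fin (m+3)))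

lemma PP_zero (t : Fin (m+3) → F) (b : Fin (m+3)) : PP t b 0 = 1 := by
  simp [PP]

lemma PP_succ (t : Fin (m+3) → F) (b : Fin (m+3)) (L : ℕ) :
    PP t b (L+1) = PP t b L * t (b + (L : Fin (m+3))) := by
  simp [PP, Finset.prod_range_succ]

lemma PP_add (t : Fin (m+3) → F) (b : Fin (m+3)) (L1 L2 : ℕ) :
    PP t b (L1 + L2) = PP t b L1 * PP t (b + (L1 : Fin (m+3))) L2 := by
  rw [PP, Finset.prod_range_add]
  congr 1
  apply Finset.prod_congr rfl
  intro i _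
  congr 1
  push_cast
  ring

lemma PP_total (t : Fin (m+3) → F) (b : Fin (m+3)) :
    PP t b (m+3) = ∏ j, t j := by
  rw [PP, ← Fin.prod_univ_eq_prod_range (fun i => t (b + (i : Fin (m+3))))]
  rw [← Equiv.prod_comp (Equiv.addLeft b) t]
  apply Finset.prod_congr rfl
  intro i _
  simp [Fin.cast_val_eq_self]

lemma PP_ne_zero {t : Fin (m+3) → F} (ht : ∀ j, t j ≠ 0) (b : Fin (m+3)) (L : ℕ) :
    PP t b L ≠ 0 := by
  rw [PP, Finset.prod_ne_zero_iff]
  exact fun i _ => ht _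

lemma entry_eq (t : Fin (m+3) → F) (i k : Fin (m+3)) :
    (1 - Hm t) i k = (if k = i then 1 else 0) - (if k = i - 1 then t (i-1) else 0) := by
  simp only [Matrix.sub_apply, Matrix.one_apply, Hm]
  have e2 : i = k + 1 ↔ k = i - 1 := by
    rw [eq_comm (a := k), sub_eq_iff_eq_add]
  have h3 : ¬ i = i - 1 := fun h => (sub_one_ne_self i) h.symm
  by_cases h1 : k = i <;> by_cases h2 : k = i - 1
  · exfalso
    rw [h1] at h2
    exact (sub_one_ne_self i) h2.symm
  · simp [h1, h2, eq_comm (a := i) (b := k), e2, h3]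
  · have : t k = t (i - 1) := by rw [h2]
    simp [h1, h2, eq_comm (a := i) (b := k), e2, this, h3]
  · simp [h1, h2, eq_comm (a := i) (b := k), e2]

lemma rowsum (t : Fin (m+3) → F) (i : Fin (m+3)) (w : Fin (m+3) → F) :
    ∑ k, (1 - Hm t) i k * w k = w i - t (i - 1) * w (i - 1) := by
  have h : ∀ k, (1 - Hm t) i k * w k
      = (if k = i then w k else 0) - (if k = i - 1 then t (i-1) * w k else 0) := by
    intro k
    rw [entry_eq, sub_mul]
    congr 1 <;> split_ifs <;> ring
  rw [Finset.sum_congr rfl (fun k _ => h k), Finset.sum_sub_distrib]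
  simp



variable {F : Type*} [Field F] {m : ℕ}

/-- candidate inverse of 1 - Hm t -/
def Wm (t : Fin (m+3) → F) : Matrix (Fin (m+3)) (Fin (m+3)) F :=
  fun i j => (1 - ∏ k, t k)⁻¹ * PP t j ((i - j : Fin (m+3)).val)

lemma cast_val_lt {i : ℕ} (h : i < m+3) : ((i : Fin (m+3))).val = i := by
  rw [cast_val, Nat.mod_eq_of_lt h]

lemma val_eq_zero_iff {i : Fin (m+3)} : i.val = 0 ↔ i = 0 := by
  rw [fin_eq_iff]
  simp

lemma sub_one_val {i : Fin (m+3)} (h : i ≠ 0) : (i - 1).val = i.val - 1 := by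
  have h0 : i.val ≠ 0 := fun hh => h (val_eq_zero_iff.mp hh)
  have := i.isLt
  rw [sub_val, one_val, mod_small _ _ (by omega) (by omega)]
  split_ifs <;> omega

lemma neg_one_val : ((0 : Fin (m+3)) - 1).val = m + 2 := by
  have := mod_small (m+3-1+0) (m+3) (by omega) (by omega)
  rw [sub_val, one_val, Fin.val_zero, this]
  split_ifs with h <;> omega

lemma pred_eq (i : Fin (m+3)) : i + ((m+2 : ℕ) : Fin (m+3)) = i - 1 := by
  rw [fin_eq_iff, add_val, cast_val_lt (by omega), sub_val, one_val]
  have := i.isLt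
  rw [mod_small _ _ (by omega) (by omega), mod_small _ _ (by omega) (by omega)]
  split_ifs <;> omega

lemma full_loop (t : Fin (m+3) → F) (i : Fin (m+3)) :
    t (i - 1) * PP t i (m+2) = ∏ k, t k := by
  have h3 : PP t i (m+3) = PP t i (m+2) * t (i + ((m+2 : ℕ) : Fin (m+3))) := PP_succ t i (m+2)
  rw [PP_total, pred_eq] at h3
  rw [h3]; ring

lemma key_mul {t : Fin (m+3) → F} (hT : (∏ k, t k) ≠ 1) :
    (1 - Hm t) * Wm t = 1 := by
  have hd : (1 : F) - ∏ k, t k ≠ 0 := sub_ne_zero_of_ne (Ne.symm hT)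
  ext i j
  rw [Matrix.mul_apply, Matrix.one_apply, rowsum t i (fun k => Wm t k j)]
  by_cases hij : i = j
  · subst hij
    simp only [Wm, sub_self, Fin.val_zero, PP_zero, mul_one, if_pos rfl]
    have h1 : ((i - 1 - i : Fin (m+3))).val = m + 2 := by
      have h0 : i - 1 - i = (0 : Fin (m+3)) - 1 := by ring
      rw [h0, neg_one_val]
    rw [h1]
    calc (1 - ∏ k, t k)⁻¹ - t (i - 1) * ((1 - ∏ k, t k)⁻¹ * PP t i (m+2))
        = (1 - ∏ k, t k)⁻¹ * (1 - t (i - 1) * PP t i (m+2)) := by ring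
      _ = (1 - ∏ k, t k)⁻¹ * (1 - ∏ k, t k) := by rw [full_loop]
      _ = 1 := inv_mul_cancel₀ hd
  · rw [if_neg hij]
    have hij' : i - j ≠ 0 := sub_ne_zero_of_ne hij
    set L := ((i - j : Fin (m+3))).val with hL
    have hL1 : 1 ≤ L := by
      rcases Nat.eq_zero_or_pos L with h | h
      · exact absurd (val_eq_zero_iff.mp h) hij'
      · exact h
    have hL2 : ((i - 1 - j : Fin (m+3))).val = L - 1 := by
      have h0 : i - 1 - j = (i - j) - 1 := by ring
      rw [h0, sub_one_val hij']
    have hcast : j + (((L - 1 : ℕ)) : Fin (m+3)) = i - 1 := by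
      have hc1 : ((L : ℕ) : Fin (m+3)) = i - j := Fin.cast_val_eq_self _
      have hstep : ((L - 1 : ℕ) : Fin (m+3)) + 1 = ((L : ℕ) : Fin (m+3)) := by
        have h5 : (L - 1) + 1 = L := by omega
        rw [← h5]
        push_cast
        ring
      have hc2 : (((L - 1 : ℕ)) : Fin (m+3)) = (i - j) - 1 := by
        rw [← hc1, ← hstep]
        ring
      rw [hc2]
      ring
    have hPP : PP t j L = PP t j (L-1) * t (i - 1) := by
      have h5 : L - 1 + 1 = L := by omega
      rw [← h5, PP_succ, hcast, h5]
    rw [Wm, Wm, ← hL, hL2, hPP]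
    ring

lemma key_mul' {t : Fin (m+3) → F} (hT : (∏ k, t k) ≠ 1) :
    Wm t * (1 - Hm t) = 1 := mul_eq_one_comm.mp (key_mul hT)

lemma det_unit {t : Fin (m+3) → F} (hT : (∏ k, t k) ≠ 1) :
    IsUnit (1 - Hm t).det := by
  have h := key_mul (t := t) hT
  have := congrArg Matrix.det h
  rw [Matrix.det_mul, Matrix.det_one] at this
  exact IsUnit.of_mul_eq_one _ this

lemma inv_eq {t : Fin (m+3) → F} (hT : (∏ k, t k) ≠ 1) :
    (1 - Hm t)⁻¹ = Wm t := Matrix.inv_eq_right_inv (key_mul hT)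

lemma prod_ne_one_of_det {t : Fin (m+3) → F} (h : IsUnit (1 - Hm t).det) :
    (∏ k, t k) ≠ 1 := by
  intro hT
  set u : Fin (m+3) → F := fun i => PP t 0 i.val with hu
  have hmv : (1 - Hm t).mulVec u = 0 := by
    funext i
    show ∑ k, (1 - Hm t) i k * u k = 0
    rw [rowsum t i u]
    by_cases hi : i = 0
    · subst hi
      simp only [hu, Fin.val_zero, PP_zero, neg_one_val]
      have := full_loop t 0
      rw [this, hT]
      ring
    · have h1 : (i - 1).val = i.val - 1 := sub_one_val hi
      have h2 : i.val - 1 + 1 = i.val := by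
        have : i.val ≠ 0 := fun hh => hi (val_eq_zero_iff.mp hh)
        omega
      simp only [hu, h1]
      rw [← h2, PP_succ, h2]
      have h3 : (0 : Fin (m+3)) + ((i.val - 1 : ℕ) : Fin (m+3)) = i - 1 := by
        rw [zero_add, fin_eq_iff, cast_val_lt (by have := i.isLt; omega), h1]
      rw [h3]
      ring
  have hzero : u = 0 := by
    have h1 : (1 - Hm t)⁻¹ * (1 - Hm t) = 1 := Matrix.nonsing_inv_mul _ h
    calc u = (1 : Matrix (Fin (m+3)) (Fin (m+3)) F).mulVec u := by rw [Matrix.one_mulVec]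
      _ = ((1 - Hm t)⁻¹ * (1 - Hm t)).mulVec u := by rw [h1]
      _ = (1 - Hm t)⁻¹.mulVec ((1 - Hm t).mulVec u) := (Matrix.mulVec_mulVec _ _ _).symm
      _ = (1 - Hm t)⁻¹.mulVec 0 := by rw [hmv]
      _ = 0 := Matrix.mulVec_zero _
  have : u 0 = 1 := by simp [hu, PP_zero]
  rw [hzero] at this
  simp at this

/-- The key identification lemma. -/
lemma key_ident {t x : Fin (m+3) → F} (hx : ∀ j, x j ≠ 0)
    {B C : Finset (Fin (m+3))} (hBC : B ∪ C = Finset.univ)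
    {v w : Fin (m+3)} (hv : v ∈ B) (hw : w ∈ C)
    (hT : (∏ j, t j) = ∏ j, x j)
    (hP : ∀ b ∈ B, ∀ c ∈ C, PP t b ((c - b : Fin (m+3)).val) = PP x b ((c - b : Fin (m+3)).val)) :
    t = x := by
  have hmem : ∀ z : Fin (m+3), z ∈ B ∨ z ∈ C := by
    intro z
    have : z ∈ B ∪ C := hBC ▸ Finset.mem_univ z
    exact Finset.mem_union.mp this
  -- main claim: prefix products from v agree
  have claim : ∀ ℓ ≤ m+3, PP t v ℓ = PP x v ℓ := by
    intro ℓ hℓ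
    rcases Nat.eq_zero_or_pos ℓ with h0 | h0
    · rw [h0, PP_zero, PP_zero]
    rcases eq_or_lt_of_le hℓ with hn | hn
    · rw [hn, PP_total, PP_total, hT]
    -- 1 ≤ ℓ ≤ m+2
    set u := v + ((ℓ : ℕ) : Fin (m+3)) with hu
    have huv : ((u - v : Fin (m+3))).val = ℓ := by
      rw [hu, add_sub_cancel_left, cast_val_lt hn]
    by_cases hc : u ∈ C
    · have := hP v hv u hc
      rwa [huv] at this
    have hb : u ∈ B := (hmem u).resolve_right hc
    set lam := ((w - u : Fin (m+3))).val with hlam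
    have hlam1 : 1 ≤ lam := by
      rcases Nat.eq_zero_or_pos lam with h | h
      · exfalso
        have : w - u = 0 := val_eq_zero_iff.mp h
        have : w = u := by
          have := sub_eq_zero.mp this
          exact this
        exact hc (this ▸ hw)
      · exact h
    have hlamn : lam < m+3 := (w - u).isLt
    have hPu : PP t u lam = PP x u lam := hP u hb w hw
    have hPxu : PP x u lam ≠ 0 := PP_ne_zero hx u lam
    have hwu : w = u + ((lam : ℕ) : Fin (m+3)) := by
      rw [hlam, Fin.cast_val_eq_self]
      ring
    have hμ : ((w - v : Fin (m+3))).val = (ℓ + lam) % (m+3) := by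
      have : w - v = ((ℓ + lam : ℕ) : Fin (m+3)) := by
        rw [hwu, hu]
        push_cast
        ring
      rw [this, cast_val]
    have hPvw : PP t v ((ℓ + lam) % (m+3)) = PP x v ((ℓ + lam) % (m+3)) := by
      have := hP v hv w hw
      rwa [hμ] at this
    have hsplit_t : PP t v (ℓ + lam) = PP t v ℓ * PP t u lam := PP_add t v ℓ lam
    have hsplit_x : PP x v (ℓ + lam) = PP x v ℓ * PP x u lam := PP_add x v ℓ lam
    by_cases hcase : ℓ + lam < m+3
    · rw [Nat.mod_eq_of_lt hcase] at hPvw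
      rw [hsplit_t, hsplit_x, hPu] at hPvw
      exact mul_right_cancel₀ hPxu hPvw
    · -- wrap-around case
      have hμ' : (ℓ + lam) % (m+3) = ℓ + lam - (m+3) := by
        rw [mod_small _ _ (by omega) (by omega)]
        split_ifs <;> omega
      set μ := ℓ + lam - (m+3) with hμdef
      have hdecomp : ℓ + lam = (m+3) + μ := by omega
      have hwrap_t : PP t v (ℓ + lam) = (∏ j, t j) * PP t v μ := by
        rw [hdecomp, PP_add, PP_total]
        congr 2
        rw [fin_eq_iff, add_val, cast_val]
        simp
        have := v.isLt; omega
      have hwrap_x : PP x v (ℓ + lam) = (∏ j, x j) * PP x v μ := by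
        rw [hdecomp, PP_add, PP_total]
        congr 2
        rw [fin_eq_iff, add_val, cast_val]
        simp
        have := v.isLt; omega
      rw [hμ'] at hPvw
      have : PP t v ℓ * PP x u lam = PP x v ℓ * PP x u lam := by
        calc PP t v ℓ * PP x u lam = PP t v ℓ * PP t u lam := by rw [hPu]
          _ = PP t v (ℓ + lam) := hsplit_t.symm
          _ = (∏ j, t j) * PP t v μ := hwrap_t
          _ = (∏ j, x j) * PP x v μ := by rw [hT, hPvw]
          _ = PP x v (ℓ + lam) := hwrap_x.symm
          _ = PP x v ℓ * PP x u lam := hsplit_x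
      exact mul_right_cancel₀ hPxu this
  -- conclude pointwise
  funext j
  set ℓ := ((j - v : Fin (m+3))).val with hℓ
  have hjl : j = v + ((ℓ : ℕ) : Fin (m+3)) := by
    rw [hℓ, Fin.cast_val_eq_self]
    ring
  have h1 : PP t v (ℓ + 1) = PP x v (ℓ + 1) := claim (ℓ+1) (by have := (j - v).isLt; omega)
  have h2 : PP t v ℓ = PP x v ℓ := claim ℓ (by have := (j - v).isLt; omega)
  rw [PP_succ, PP_succ, ← hjl, h2] at h1
  exact mul_left_cancel₀ (PP_ne_zero hx v ℓ) h1

section Generic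
variable (K : Type*) [Field K]

lemma mem_loopEdges (m : ℕ) (p : Fin (m+3) × Fin (m+3)) :
    p ∈ loopEdges (m+3) ↔ p.2 = p.1 + 1 := by
  simp [loopEdges]

variable (m : ℕ)

/-- the generic edge variables -/
def xg : Fin (m+3) → EdgeField K (loopEdges (m+3)) := fun j =>
  algebraMap (MvPolynomial ↥(loopEdges (m+3)) K) (EdgeField K (loopEdges (m+3)))
    (MvPolynomial.X (⟨(j, j+1), by rw [mem_loopEdges]⟩ : ↥(loopEdges (m+3))))

lemma genericG_eq_Hm : genericG K (loopEdges (m+3)) = Hm (xg K m) := by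
  funext i j
  by_cases h : i = j + 1
  · subst h
    rw [genericG, Hm]
    rw [dif_pos ((mem_loopEdges m (j, j+1)).mpr rfl), if_pos rfl]
    rfl
  · rw [genericG, Hm, dif_neg, if_neg h]
    rw [mem_loopEdges]
    exact h

lemma algmap_inj : Function.Injective
    (algebraMap (MvPolynomial ↥(loopEdges (m+3)) K) (EdgeField K (loopEdges (m+3)))) :=
  IsFractionRing.injective _ _

lemma xg_ne_zero (j : Fin (m+3)) : xg K m j ≠ 0 := by
  rw [xg, Ne, map_eq_zero_iff _ (algmap_inj K m)]
  exact MvPolynomial.X_ne_zero _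

lemma prod_xg_ne_one (s : Finset (Fin (m+3))) (hs : s.Nonempty) :
    (∏ j ∈ s, xg K m j) ≠ 1 := by
  intro h
  simp only [xg] at h
  simp only [← map_prod] at h
  have h1 : (∏ j ∈ s, MvPolynomial.X
      (⟨(j, j+1), by rw [mem_loopEdges]⟩ : ↥(loopEdges (m+3)))) =
      (1 : MvPolynomial ↥(loopEdges (m+3)) K) := by
    apply algmap_inj K m
    rw [h, _root_.map_one]
  have h2 := congrArg (MvPolynomial.eval (fun _ => (0 : K))) h1
  rw [map_prod, _root_.map_one] at h2
  simp only [MvPolynomial.eval_X] at h2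
  rw [Finset.prod_const, zero_pow (by simpa using hs.card_ne_zero)] at h2
  exact zero_ne_one h2

lemma T_ne_one : (∏ j, xg K m j) ≠ 1 :=
  prod_xg_ne_one K m Finset.univ Finset.univ_nonempty

lemma T_ne_zero : (∏ j, xg K m j) ≠ 0 := by
  rw [Finset.prod_ne_zero_iff]
  exact fun j _ => xg_ne_zero K m j

end Generic

section MM
variable {F : Type*} [Field F] {m : ℕ}

lemma mmat_eq {t : Fin (m+3) → F} (hT : (∏ k, t k) ≠ 1) (Cs Bs : Finset (Fin (m+3)))
    (c : ↥Cs) (b : ↥Bs) :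
    MMat (Hm t) Cs Bs c b = (1 - ∏ k, t k)⁻¹ * PP t b.1 ((c.1 - b.1 : Fin (m+3)).val) := by
  rw [MMat, inv_eq hT]
  rfl

lemma consistent_Hm (t : Fin (m+3) → F) : Consistent (loopEdges (m+3)) (Hm t) := by
  intro i j hij
  rw [Hm, if_neg]
  intro h
  exact hij (by rw [mem_loopEdges]; exact h)

lemma consistent_eq_Hm {Gt : Matrix (Fin (m+3)) (Fin (m+3)) F}
    (h : Consistent (loopEdges (m+3)) Gt) :
    Gt = Hm (fun j => Gt (j+1) j) := by
  funext i j
  by_cases hij : i = j + 1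
  · subst hij
    rw [Hm, if_pos rfl]
  · rw [Hm, if_neg hij, h i j]
    rw [mem_loopEdges]
    exact hij

end MM

section Comb
variable {m : ℕ}

lemma cast_add_one (i : ℕ) : ((i+1 : ℕ) : Fin (m+3)) = ((i : ℕ) : Fin (m+3)) + 1 := by
  push_cast
  ring

lemma univ_consecutive : CyclicallyConsecutive (Finset.univ : Finset (Fin (m+3))) := by
  refine ⟨0, m+3, le_refl _, ?_⟩
  ext z
  simp only [Finset.mem_univ, true_iff, Finset.mem_image, Finset.mem_range]
  exact ⟨z.val, z.isLt, by rw [zero_add, Fin.ofNat_eq_cast, Fin.cast_val_eq_self]⟩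

lemma empty_consecutive : CyclicallyConsecutive (∅ : Finset (Fin (m+3))) :=
  ⟨0, 0, by omega, by simp⟩

lemma cyc_of_le_one {B : Finset (Fin (m+3))}
    (h : ∀ b1 ∈ B, ∀ b2 ∈ B, b1 + 1 ∉ B → b2 + 1 ∉ B → b1 = b2) :
    CyclicallyConsecutive B := by
  by_cases hS : ∃ b0 ∈ B, b0 + 1 ∉ B
  · obtain ⟨b0, hb0B, hb0b⟩ := hS
    set A : Finset ℕ := (Finset.range (m+3)).filter (fun i => b0 - ((i : ℕ) : Fin (m+3)) ∈ B)
      with hA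
    have hdown1 : ∀ i, i + 1 ∈ A → i ∈ A := by
      intro i hi
      rw [hA, Finset.mem_filter, Finset.mem_range] at hi ⊢
      obtain ⟨hi1, hi2⟩ := hi
      refine ⟨by omega, ?_⟩
      by_contra hnot
      have hbd : (b0 - ((i+1 : ℕ) : Fin (m+3))) + 1 ∉ B := by
        have : (b0 - ((i+1 : ℕ) : Fin (m+3))) + 1 = b0 - ((i : ℕ) : Fin (m+3)) := by
          rw [cast_add_one]
          ring
        rw [this]
        exact hnot
      have := h _ hi2 _ hb0B hbd hb0b
      -- b0 - (i+1) = b0  →  (i+1 : Fin) = 0  → contradiction since i+1 < m+3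
      have h2 : ((i+1 : ℕ) : Fin (m+3)) = 0 := by
        have := congrArg (fun z => b0 - z) this.symm
        simpa using this.symm
      rw [fin_eq_iff, cast_val_lt hi1] at h2
      simp at h2
    have hdown : ∀ i ∈ A, ∀ j, j ≤ i → j ∈ A := by
      intro i hi j hj
      have key : ∀ d : ℕ, ∀ i ∈ A, i - d ∈ A := by
        intro d
        induction d with
        | zero => intro i hi; simpa using hi
        | succ d ih =>
          intro i hi
          rcases Nat.eq_zero_or_pos (i - d) with h0 | h0
          · have : i - (d+1) = i - d := by omega
            rw [this]; exact ih i hi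
          · have h1 : (i - (d+1)) + 1 = i - d := by omega
            exact hdown1 _ (h1 ▸ ih i hi)
      have := key (i - j) i hi
      rwa [Nat.sub_sub_self hj] at this
    have hsub : A ⊆ Finset.range A.card := by
      intro i hi
      rw [Finset.mem_range]
      have : Finset.range (i+1) ⊆ A := by
        intro j hj
        rw [Finset.mem_range] at hj
        exact hdown i hi j (by omega)
      have := Finset.card_le_card this
      rw [Finset.card_range] at this
      omega
    have hAeq : A = Finset.range A.card :=
      Finset.eq_of_subset_of_card_le hsub (by rw [Finset.card_range])
    have hBeq : B = A.image (fun i => b0 - ((i : ℕ) : Fin (m+3))) := by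
      ext z
      constructor
      · intro hz
        refine Finset.mem_image.mpr ⟨((b0 - z : Fin (m+3))).val, ?_, ?_⟩
        · rw [hA, Finset.mem_filter, Finset.mem_range]
          refine ⟨(b0 - z).isLt, ?_⟩
          rw [Fin.cast_val_eq_self]
          have : b0 - (b0 - z) = z := by ring
          rw [this]
          exact hz
        · rw [Fin.cast_val_eq_self]
          ring
      · intro hz
        obtain ⟨i, hi, hiz⟩ := Finset.mem_image.mp hz
        rw [hA, Finset.mem_filter] at hi
        rw [← hiz]
        exact hi.2
    set k := A.card with hk
    have hk3 : k ≤ m+3 := by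
      rw [hk]
      calc A.card ≤ (Finset.range (m+3)).card := Finset.card_le_card (by
        intro i hi; rw [hA, Finset.mem_filter] at hi; exact hi.1)
        _ = m+3 := Finset.card_range _
    have hk1 : 1 ≤ k := by
      have h0A : 0 ∈ A := by
        rw [hA, Finset.mem_filter, Finset.mem_range]
        exact ⟨by omega, by simpa using hb0B⟩
      have := Finset.card_pos.mpr ⟨0, h0A⟩
      omega
    refine ⟨b0 - ((k - 1 : ℕ) : Fin (m+3)), k, hk3, ?_⟩
    rw [hBeq, hAeq]
    ext z
    simp only [Finset.mem_image, Finset.mem_range]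
    constructor
    · rintro ⟨i, hi, rfl⟩
      refine ⟨k - 1 - i, by omega, ?_⟩
      have hcast : ((k - 1 - i : ℕ) : Fin (m+3)) + ((i : ℕ) : Fin (m+3))
          = ((k - 1 : ℕ) : Fin (m+3)) := by
        have h5 : (k - 1 - i) + i = k - 1 := by omega
        calc ((k - 1 - i : ℕ) : Fin (m+3)) + ((i : ℕ) : Fin (m+3))
            = (((k - 1 - i) + i : ℕ) : Fin (m+3)) := by push_cast; ring
          _ = ((k - 1 : ℕ) : Fin (m+3)) := by rw [h5]
      have : b0 - ((k-1 : ℕ) : Fin (m+3)) + ((k - 1 - i : ℕ) : Fin (m+3)) = b0 - (i : Fin (m+3)) := by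
        rw [← hcast]
        ring
      rw [Fin.ofNat_eq_cast, this]
    · rintro ⟨i, hi, rfl⟩
      refine ⟨k - 1 - i, by omega, ?_⟩
      have hcast : ((k - 1 - i : ℕ) : Fin (m+3)) + ((i : ℕ) : Fin (m+3))
          = ((k - 1 : ℕ) : Fin (m+3)) := by
        have h5 : (k - 1 - i) + i = k - 1 := by omega
        calc ((k - 1 - i : ℕ) : Fin (m+3)) + ((i : ℕ) : Fin (m+3))
            = (((k - 1 - i) + i : ℕ) : Fin (m+3)) := by push_cast; ring
          _ = ((k - 1 : ℕ) : Fin (m+3)) := by rw [h5]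
      have : b0 - ((k - 1 - i : ℕ) : Fin (m+3)) = b0 - ((k-1 : ℕ) : Fin (m+3)) + (i : Fin (m+3)) := by
        rw [← hcast]
        ring
      rw [this, Fin.ofNat_eq_cast]
  · push_neg at hS
    by_cases hB : B.Nonempty
    · obtain ⟨b0, hb0⟩ := hB
      have hall : ∀ i : ℕ, b0 + ((i : ℕ) : Fin (m+3)) ∈ B := by
        intro i
        induction i with
        | zero => simpa using hb0
        | succ i ih =>
          have : b0 + ((i+1 : ℕ) : Fin (m+3)) = (b0 + ((i : ℕ) : Fin (m+3))) + 1 := by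
            rw [cast_add_one]; ring
          rw [this]
          exact hS _ ih
      have : B = Finset.univ := by
        apply Finset.eq_univ_iff_forall.mpr
        intro z
        have := hall ((z - b0 : Fin (m+3))).val
        rwa [Fin.cast_val_eq_self, add_sub_cancel] at this
      rw [this]
      exact univ_consecutive
    · rw [Finset.not_nonempty_iff_eq_empty] at hB
      rw [hB]
      exact empty_consecutive

lemma two_boundaries {B : Finset (Fin (m+3))} (h : ¬ CyclicallyConsecutive B) :
    ∃ b1 ∈ B, ∃ b2 ∈ B, b1 ≠ b2 ∧ b1 + 1 ∉ B ∧ b2 + 1 ∉ B := by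
  by_contra hc
  push_neg at hc
  exact h (cyc_of_le_one (fun b1 h1 b2 h2 hn1 hn2 => by
    by_contra hne
    exact hn2 (hc b1 h1 b2 h2 hne hn1)))

/-- membership in an arc -/
lemma mem_arc {a : Fin (m+3)} {k : ℕ} (hk : k ≤ m+3) (z : Fin (m+3)) :
    z ∈ (Finset.range k).image (fun i : ℕ => a + (i : Fin (m+3))) ↔ ((z - a : Fin (m+3))).val < k := by
  constructor
  · rintro hz
    obtain ⟨i, hi, rfl⟩ := Finset.mem_image.mp hz
    rw [Finset.mem_range] at hi
    rw [add_sub_cancel_left, cast_val_lt (by omega)]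
    exact hi
  · intro hz
    refine Finset.mem_image.mpr ⟨((z - a : Fin (m+3))).val, Finset.mem_range.mpr hz, ?_⟩
    rw [Fin.cast_val_eq_self]
    ring

end Comb

section Deform
variable {F : Type*} [Field F] {m : ℕ}

/-- deformed weights: coboundary times point mass at e2 -/
def tdef (x h : Fin (m+3) → F) (ψ : F) (e2 : Fin (m+3)) : Fin (m+3) → F := fun j =>
  (h (j+1) / h j) * (if j = e2 then ψ else 1) * x j

lemma tdef_prod (x h : Fin (m+3) → F) (hh : ∀ u, h u ≠ 0) (ψ : F) (e2 : Fin (m+3)) :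
    ∏ j, tdef x h ψ e2 j = ψ * ∏ j, x j := by
  simp only [tdef]
  rw [Finset.prod_mul_distrib, Finset.prod_mul_distrib]
  have h1 : ∏ j, h (j+1) / h j = 1 := by
    rw [Finset.prod_div_distrib]
    have : ∏ j : Fin (m+3), h (j+1) = ∏ j : Fin (m+3), h j :=
      Equiv.prod_comp (Equiv.addRight 1) h
    rw [this]
    exact div_self (Finset.prod_ne_zero_iff.mpr (fun j _ => hh j))
  have h2 : (∏ j : Fin (m+3), if j = e2 then ψ else 1) = ψ := by
    rw [Finset.prod_eq_single e2 (fun j _ hj => if_neg hj) (fun habs => absurd (Finset.mem_univ e2) habs)]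
    rw [if_pos rfl]
  rw [h1, h2, one_mul]

lemma tdef_PP (x h : Fin (m+3) → F) (hh : ∀ u, h u ≠ 0) (ψ : F) (e2 : Fin (m+3))
    (b : Fin (m+3)) (L : ℕ) (hav : ∀ i : ℕ, i < L → b + (i : Fin (m+3)) = e2 → ψ = 1) :
    PP (tdef x h ψ e2) b L = (h (b + (L : Fin (m+3))) / h b) * PP x b L := by
  induction L with
  | zero =>
    simp only [PP_zero, Nat.cast_zero, add_zero, mul_one]
    rw [div_self (hh b)]
  | succ L ih =>
    rw [PP_succ, PP_succ, ih (fun i hi => hav i (by omega))]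
    simp only [tdef]
    have hite : (if b + (L : Fin (m+3)) = e2 then ψ else 1) = 1 := by
      by_cases hc : b + (L : Fin (m+3)) = e2
      · rw [if_pos hc, hav L (by omega) hc]
      · rw [if_neg hc]
    have hcast : b + (L : Fin (m+3)) + 1 = b + ((L+1 : ℕ) : Fin (m+3)) := by
      rw [cast_add_one]
      ring
    rw [hite, mul_one, ← hcast]
    field_simp [hh]

lemma tdef_ne {x h : Fin (m+3) → F} (hh : ∀ u, h u ≠ 0) {ψ : F} {e2 : Fin (m+3)}
    (j : Fin (m+3)) (hx : x j ≠ 0)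
    (hne : (h (j+1) / h j) * (if j = e2 then ψ else 1) ≠ 1) :
    tdef x h ψ e2 j ≠ x j := by
  simp only [tdef]
  intro hcon
  apply hne
  exact mul_right_cancel₀ hx (hcon.trans (one_mul (x j)).symm)

end Deform

section Backward
variable {F : Type*} [Field F] {m : ℕ}

lemma PP_one (t : Fin (m+3) → F) (b : Fin (m+3)) : PP t b 1 = t b := by
  simp [PP]

lemma cast_self_eq_zero : (((m+3 : ℕ)) : Fin (m+3)) = 0 := by
  rw [fin_eq_iff, cast_val]
  simp

lemma loop_split (t : Fin (m+3) → F) (b1 b2 : Fin (m+3)) (β : ℕ) (hβ : β ≤ m+3)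
    (h12 : b1 + ((β : ℕ) : Fin (m+3)) = b2)
    (h21 : b2 + ((((m+3) - β : ℕ)) : Fin (m+3)) = b1) :
    PP t b1 (β+1) * PP t b2 ((m+3)-β+1) = (∏ j, t j) * (t b1 * t b2) := by
  rw [PP_succ, PP_succ, h12, h21]
  have hsum : β + ((m+3) - β) = m+3 := by omega
  have hkey : PP t b1 β * PP t b2 ((m+3)-β) = ∏ j, t j := by
    have := PP_add t b1 β ((m+3)-β)
    rw [h12, hsum, PP_total] at this
    exact this.symm
  calc (PP t b1 β * t b2) * (PP t b2 ((m+3)-β) * t b1)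
      = (PP t b1 β * PP t b2 ((m+3)-β)) * (t b1 * t b2) := by ring
    _ = (∏ j, t j) * (t b1 * t b2) := by rw [hkey]

lemma backward (K : Type*) [Field K] (m : ℕ) (B C : Finset (Fin (m + 3)))
    (hU : B ∪ C = Finset.univ)
    (hOr : (B ∩ C).Nonempty ∨ ¬ CyclicallyConsecutive B) :
    GenIdentifiable K (loopEdges (m + 3)) B C := by
  intro Gt hcons hdet hMM
  set x := xg K m with hxdef
  have hGG : genericG K (loopEdges (m+3)) = Hm x := genericG_eq_Hm K m
  set t : Fin (m+3) → EdgeField K (loopEdges (m+3)) := fun j => Gt (j+1) j with ht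
  have hGt : Gt = Hm t := consistent_eq_Hm hcons
  rw [hGt] at hdet
  have hTt : (∏ k, t k) ≠ 1 := prod_ne_one_of_det hdet
  have hTx : (∏ k, x k) ≠ 1 := T_ne_one K m
  have hdx : (1 : EdgeField K (loopEdges (m+3))) - ∏ k, x k ≠ 0 :=
    sub_ne_zero_of_ne (Ne.symm hTx)
  have hx0 : ∀ j, x j ≠ 0 := xg_ne_zero K m
  rw [hGt, hGG] at hMM
  have hM : ∀ b, b ∈ B → ∀ c, c ∈ C →
      (1 - ∏ k, t k)⁻¹ * PP t b ((c - b : Fin (m+3)).val)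
        = (1 - ∏ k, x k)⁻¹ * PP x b ((c - b : Fin (m+3)).val) := by
    intro b hb c hc
    have h2 := congrFun (congrFun hMM ⟨c, hc⟩) ⟨b, hb⟩
    rw [mmat_eq hTt, mmat_eq hTx] at h2
    exact h2
  have main : (∏ k, t k) = (∏ k, x k) ∧ ∃ v, v ∈ B ∧ ∃ w, w ∈ C := by
    rcases hOr with hint | hncons
    · obtain ⟨v, hv⟩ := hint
      rw [Finset.mem_inter] at hv
      have h2 := hM v hv.1 v hv.2
      rw [sub_self, Fin.val_zero, PP_zero, PP_zero, mul_one, mul_one] at h2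
      refine ⟨sub_right_injective (inv_injective h2), v, hv.1, v, hv.2⟩
    · obtain ⟨b1, hb1, b2, hb2, hne, hnb1, hnb2⟩ := two_boundaries hncons
      have hmemU : ∀ z : Fin (m+3), z ∈ B ∨ z ∈ C := by
        intro z
        have : z ∈ B ∪ C := hU ▸ Finset.mem_univ z
        exact Finset.mem_union.mp this
      have hc1 : b1 + 1 ∈ C := (hmemU (b1+1)).resolve_left hnb1
      have hc2 : b2 + 1 ∈ C := (hmemU (b2+1)).resolve_left hnb2
      set β := ((b2 - b1 : Fin (m+3))).val with hβ
      have hβlt : β < m+3 := (b2 - b1).isLt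
      have h12 : b1 + ((β : ℕ) : Fin (m+3)) = b2 := by
        rw [hβ, Fin.cast_val_eq_self]
        ring
      have hcastm : (((m+3) - β : ℕ) : Fin (m+3)) = b1 - b2 := by
        have hn : ((m+3) - β) + β = m+3 := by omega
        have h0 : ((((m+3) - β) + β : ℕ) : Fin (m+3)) = 0 := by rw [hn, cast_self_eq_zero]
        push_cast at h0
        have : (((m+3) - β : ℕ) : Fin (m+3)) = -((β : ℕ) : Fin (m+3)) := by
          linear_combination h0
        rw [this, hβ, Fin.cast_val_eq_self]
        ring
      have h21 : b2 + ((((m+3) - β : ℕ)) : Fin (m+3)) = b1 := by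
        rw [hcastm]
        ring
      have hβ0 : β ≠ 0 := by
        intro h0
        apply hne
        have : b2 - b1 = 0 := val_eq_zero_iff.mp (hβ ▸ h0)
        have := sub_eq_zero.mp this
        exact this.symm
      have hβ1 : β ≠ 1 := by
        intro h1
        apply hnb1
        have : b2 - b1 = 1 := by
          rw [← Fin.cast_val_eq_self (b2 - b1), ← hβ, h1]
          simp
        have : b2 = b1 + 1 := by
          rw [← this]
          ring
        rw [← this]
        exact hb2
      have hβm : β ≠ m+2 := by
        intro h2
        apply hnb2
        have : (((m+3) - β : ℕ) : Fin (m+3)) = 1 := by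
          have hn : (m+3) - β = 1 := by rw [h2]; omega
          rw [hn, Nat.cast_one]
        rw [this] at h21
        rw [h21]
        exact hb1
      -- the four data equations
      have hL1 : (((b2 + 1) - b1 : Fin (m+3))).val = β + 1 := by
        have : (b2 + 1) - b1 = ((β + 1 : ℕ) : Fin (m+3)) := by
          rw [cast_add_one, h12.symm]
          ring
        rw [this, cast_val_lt (by omega)]
      have hL2 : (((b1 + 1) - b2 : Fin (m+3))).val = (m+3) - β + 1 := by
        have : (b1 + 1) - b2 = (((m+3) - β + 1 : ℕ) : Fin (m+3)) := by
          rw [cast_add_one, hcastm]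
          ring
        rw [this, cast_val_lt (by omega)]
      have hL0 : (((b1 + 1) - b1 : Fin (m+3))).val = 1 := by
        have : (b1 + 1) - b1 = 1 := by ring
        rw [this, one_val]
      have hL0' : (((b2 + 1) - b2 : Fin (m+3))).val = 1 := by
        have : (b2 + 1) - b2 = 1 := by ring
        rw [this, one_val]
      have E1 := hM b1 hb1 (b1+1) hc1
      rw [hL0, PP_one, PP_one] at E1
      have E2 := hM b2 hb2 (b2+1) hc2
      rw [hL0', PP_one, PP_one] at E2
      have E3 := hM b1 hb1 (b2+1) hc2
      rw [hL1] at E3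
      have E4 := hM b2 hb2 (b1+1) hc1
      rw [hL2] at E4
      have idt := loop_split t b1 b2 β (by omega) h12 h21
      have idx := loop_split x b1 b2 β (by omega) h12 h21
      set dt := ((1 : EdgeField K (loopEdges (m+3))) - ∏ k, t k)⁻¹ with hdt
      set dx' := ((1 : EdgeField K (loopEdges (m+3))) - ∏ k, x k)⁻¹ with hdx'
      have key1 : (dt * t b1) * (dt * t b2) = (dx' * x b1) * (dx' * x b2) := by
        rw [E1, E2]
      have key2 : (∏ k, t k) * ((dt * t b1) * (dt * t b2))
          = (∏ k, x k) * ((dx' * x b1) * (dx' * x b2)) := by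
        calc (∏ k, t k) * ((dt * t b1) * (dt * t b2))
            = (dt * PP t b1 (β+1)) * (dt * PP t b2 ((m+3)-β+1)) := by
              rw [show (dt * PP t b1 (β+1)) * (dt * PP t b2 ((m+3)-β+1))
                  = (dt * dt) * (PP t b1 (β+1) * PP t b2 ((m+3)-β+1)) from by ring, idt]
              ring
          _ = (dx' * PP x b1 (β+1)) * (dx' * PP x b2 ((m+3)-β+1)) := by rw [E3, E4]
          _ = (∏ k, x k) * ((dx' * x b1) * (dx' * x b2)) := by
              rw [show (dx' * PP x b1 (β+1)) * (dx' * PP x b2 ((m+3)-β+1))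
                  = (dx' * dx') * (PP x b1 (β+1) * PP x b2 ((m+3)-β+1)) from by ring, idx]
              ring
      rw [key1] at key2
      have hQ : (dx' * x b1) * (dx' * x b2) ≠ 0 := by
        apply mul_ne_zero <;> apply mul_ne_zero
        · exact inv_ne_zero hdx
        · exact hx0 b1
        · exact inv_ne_zero hdx
        · exact hx0 b2
      exact ⟨mul_right_cancel₀ hQ key2, b1, hb1, b1+1, hc1⟩
  obtain ⟨hTeq, v, hvB, w, hwC⟩ := main
  have hP : ∀ b ∈ B, ∀ c ∈ C,
      PP t b ((c - b : Fin (m+3)).val) = PP x b ((c - b : Fin (m+3)).val) := by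
    intro b hb c hc
    have h1 := hM b hb c hc
    rw [hTeq] at h1
    exact mul_left_cancel₀ (inv_ne_zero hdx) h1
  have hfinal : t = x := key_ident hx0 hU hvB hwC hTeq hP
  rw [hGt, hfinal, ← hGG]

end Backward

section Forward
variable (K : Type*) [Field K] (m : ℕ)

lemma xg_ne_one (j : Fin (m+3)) : xg K m j ≠ 1 := by
  have := prod_xg_ne_one K m {j} ⟨j, Finset.mem_singleton_self j⟩
  rwa [Finset.prod_singleton] at this

lemma not_genid_of_empty (B C : Finset (Fin (m + 3))) (h : B = ∅ ∨ C = ∅) :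
    ¬ GenIdentifiable K (loopEdges (m + 3)) B C := by
  intro hGI
  have hMMeq : MMat (0 : Matrix (Fin (m+3)) (Fin (m+3)) (EdgeField K (loopEdges (m+3)))) C B
      = MMat (genericG K (loopEdges (m+3))) C B := by
    funext c b
    rcases h with h | h
    · subst h; exact absurd b.2 (Finset.notMem_empty _)
    · subst h; exact absurd c.2 (Finset.notMem_empty _)
  have h0 := hGI 0 (fun i j _ => rfl) (by simp) hMMeq
  rw [genericG_eq_Hm K m] at h0
  have h1 := congrFun (congrFun h0 (0+1)) 0
  simp only [Hm, eq_self_iff_true, if_true, Matrix.zero_apply] at h1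
  exact xg_ne_zero K m 0 h1.symm

lemma forward (B C : Finset (Fin (m + 3)))
    (hn : ¬ (B ∪ C = Finset.univ ∧ ((B ∩ C).Nonempty ∨ ¬ CyclicallyConsecutive B))) :
    ¬ GenIdentifiable K (loopEdges (m + 3)) B C := by
  intro hGI
  by_cases hU : B ∪ C = Finset.univ
  · -- B ∪ C = univ but B ∩ C = ∅ and B cyclically consecutive
    have hQ : ¬ ((B ∩ C).Nonempty ∨ ¬ CyclicallyConsecutive B) := fun q => hn ⟨hU, q⟩
    push_neg at hQ
    obtain ⟨hint, hcyc⟩ := hQ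
    have hBCdisj : ∀ z, z ∈ B → z ∈ C → False := fun z hb hc =>
      Finset.not_nonempty_iff_eq_empty.mpr hint ⟨z, Finset.mem_inter.mpr ⟨hb, hc⟩⟩
    by_cases hB0 : B = ∅
    · exact not_genid_of_empty K m B C (Or.inl hB0) hGI
    by_cases hC0 : C = ∅
    · exact not_genid_of_empty K m B C (Or.inr hC0) hGI
    obtain ⟨a, k, hk, hBeq⟩ := hcyc
    have hmemB : ∀ z, z ∈ B ↔ ((z - a : Fin (m+3))).val < k := fun z => by
      rw [hBeq]; exact mem_arc hk z
    have hk1 : 1 ≤ k := by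
      rcases Nat.eq_zero_or_pos k with h0 | h
      · exfalso; apply hB0; rw [hBeq, h0]; simp
      · exact h
    have hk2 : k ≤ m+2 := by
      obtain ⟨c0, hc0⟩ := Finset.nonempty_iff_ne_empty.mpr hC0
      have hc0B : c0 ∉ B := fun hb => hBCdisj c0 hb hc0
      have h3 : ¬ (((c0 - a : Fin (m+3))).val < k) := fun hlt => hc0B ((hmemB c0).mpr hlt)
      have := (c0 - a).isLt
      omega
    set x := xg K m with hxdef
    set T := ∏ j, x j with hTdef
    set e1 := a + ((k-1 : ℕ) : Fin (m+3)) with he1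
    set e2 := a + ((m+2 : ℕ) : Fin (m+3)) with he2
    set θ := x e1 with hθdef
    have hθ0 : θ ≠ 0 := xg_ne_zero K m e1
    have hθ1 : θ ≠ 1 := xg_ne_one K m e1
    set hf : Fin (m+3) → EdgeField K (loopEdges (m+3)) :=
      fun u => if ((u - a : Fin (m+3))).val < k then 1 else θ with hhd
    have hh0 : ∀ u, hf u ≠ 0 := by
      intro u
      rw [hhd]
      dsimp only
      split_ifs
      · exact one_ne_zero
      · exact hθ0
    set ψ := (1 - θ + θ * T) / T with hψdef
    set t := tdef x hf ψ e2 with htd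
    have hT0 : T ≠ 0 := T_ne_zero K m
    have hT1 : T ≠ 1 := T_ne_one K m
    have hdx : (1 : EdgeField K (loopEdges (m+3))) - T ≠ 0 := sub_ne_zero_of_ne (Ne.symm hT1)
    have hprod : ∏ j, t j = ψ * T := by rw [htd]; exact tdef_prod x hf hh0 ψ e2
    have hψT : ψ * T = 1 - θ + θ * T := div_mul_cancel₀ _ hT0
    have hdt : 1 - ∏ j, t j = θ * (1 - T) := by rw [hprod, hψT]; ring
    have hTt : ∏ j, t j ≠ 1 := by
      intro hone
      rw [hone, sub_self] at hdt
      exact (mul_ne_zero hθ0 hdx) hdt.symm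
    have hMM : MMat (Hm t) C B = MMat (genericG K (loopEdges (m+3))) C B := by
      rw [genericG_eq_Hm K m]
      funext c b
      rw [mmat_eq hTt, mmat_eq hT1]
      set L := ((c.1 - b.1 : Fin (m+3))).val with hLdef
      have hβb : ((b.1 - a : Fin (m+3))).val < k := (hmemB b.1).mp b.2
      have hcB : c.1 ∉ B := fun hcb => hBCdisj c.1 hcb c.2
      have hγ : ¬ (((c.1 - a : Fin (m+3))).val < k) := fun hlt => hcB ((hmemB c.1).mpr hlt)
      have hγlt := (c.1 - a : Fin (m+3)).isLt
      have hLval : L = ((c.1 - a : Fin (m+3))).val - ((b.1 - a : Fin (m+3))).val := by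
        have hsplit : c.1 - b.1 = (c.1 - a) - (b.1 - a) := by ring
        rw [hLdef, hsplit, sub_val, mod_small _ _ (by omega) (by omega)]
        split_ifs <;> omega
      have hav : ∀ i : ℕ, i < L → b.1 + ((i : ℕ) : Fin (m+3)) = e2 → ψ = 1 := by
        intro i hiL hie
        exfalso
        have hLlt : L < m+3 := (c.1 - b.1 : Fin (m+3)).isLt
        have hiv : i = ((e2 - b.1 : Fin (m+3))).val := by
          have h5 : ((i : ℕ) : Fin (m+3)) = e2 - b.1 := by rw [← hie]; ring
          rw [← h5, cast_val_lt (by omega)]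
        have he2b : ((e2 - b.1 : Fin (m+3))).val = m+2 - ((b.1 - a : Fin (m+3))).val := by
          have h6 : e2 - b.1 = ((m+2 : ℕ) : Fin (m+3)) - (b.1 - a) := by rw [he2]; ring
          rw [h6, sub_val, cast_val_lt (by omega), mod_small _ _ (by omega) (by omega)]
          have := (b.1 - a : Fin (m+3)).isLt
          split_ifs <;> omega
        omega
      rw [htd, tdef_PP x hf hh0 ψ e2 b.1 L hav]
      have hbL : b.1 + ((L : ℕ) : Fin (m+3)) = c.1 := by
        rw [hLdef, Fin.cast_val_eq_self]
        ring
      rw [hbL, hhd]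
      dsimp only
      rw [if_neg hγ, if_pos hβb, hdt]
      rw [← hTdef, mul_inv, div_one, mul_comm θ⁻¹, mul_assoc, inv_mul_cancel_left₀ hθ0]
    have heq := hGI (Hm t) (consistent_Hm t) (det_unit hTt) hMM
    rw [genericG_eq_Hm K m] at heq
    have h1 := congrFun (congrFun heq (e1+1)) e1
    simp only [Hm, eq_self_iff_true, if_true] at h1
    have he1a : ((e1 - a : Fin (m+3))).val = k-1 := by
      rw [he1, add_sub_cancel_left, cast_val_lt (by omega)]
    have he1b : ((e1 + 1 - a : Fin (m+3))).val = k := by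
      have h7 : e1 + 1 = a + ((k : ℕ) : Fin (m+3)) := by
        have h8 : (k - 1) + 1 = k := by omega
        have h9 : ((k - 1 : ℕ) : Fin (m+3)) + 1 = ((k : ℕ) : Fin (m+3)) := by
          calc ((k - 1 : ℕ) : Fin (m+3)) + 1 = (((k-1) + 1 : ℕ) : Fin (m+3)) :=
                (cast_add_one (k-1)).symm
            _ = ((k : ℕ) : Fin (m+3)) := by rw [h8]
        rw [he1, add_assoc, h9]
      rw [h7, add_sub_cancel_left, cast_val_lt (by omega)]
    have hne2 : e1 ≠ e2 := by
      intro he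
      have h9 := congrArg (fun z : Fin (m+3) => ((z - a : Fin (m+3))).val) he
      rw [he1a, he2, add_sub_cancel_left, cast_val_lt (by omega)] at h9
      omega
    have ht1 : t e1 = θ * x e1 := by
      rw [htd]
      simp only [tdef, hhd]
      rw [if_neg hne2, he1b, he1a, if_neg (by omega : ¬ k < k), if_pos (by omega : k - 1 < k)]
      field_simp
    rw [ht1] at h1
    exact hθ1 (mul_right_cancel₀ (xg_ne_zero K m e1) (h1.trans (one_mul _).symm))
  · -- B ∪ C ≠ univ
    have ⟨v, hv⟩ : ∃ v, v ∉ B ∪ C := by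
      by_contra hh
      push_neg at hh
      exact hU (Finset.eq_univ_iff_forall.mpr hh)
    set x := xg K m with hxdef
    set lam := x v with hlam
    set hf : Fin (m+3) → EdgeField K (loopEdges (m+3)) :=
      fun u => if u = v then lam else 1 with hhd
    have hh0 : ∀ u, hf u ≠ 0 := by
      intro u
      rw [hhd]
      dsimp only
      split_ifs
      · exact xg_ne_zero K m v
      · exact one_ne_zero
    set t := tdef x hf 1 v with htd
    have hprod : ∏ j, t j = ∏ j, x j := by
      rw [htd, tdef_prod x hf hh0 1 v, one_mul]
    have hTt : ∏ j, t j ≠ 1 := by rw [hprod]; exact T_ne_one K m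
    have hMM : MMat (Hm t) C B = MMat (genericG K (loopEdges (m+3))) C B := by
      rw [genericG_eq_Hm K m]
      funext c b
      rw [mmat_eq hTt, mmat_eq (T_ne_one K m), hprod]
      congr 1
      set L := ((c.1 - b.1 : Fin (m+3))).val with hLdef
      rw [htd, tdef_PP x hf hh0 1 v b.1 L (fun _ _ _ => rfl)]
      have hbv : b.1 ≠ v := fun he => hv (Finset.mem_union_left C (he ▸ b.2))
      have hcv : c.1 ≠ v := fun he => hv (Finset.mem_union_right B (he ▸ c.2))
      have hbL : b.1 + ((L : ℕ) : Fin (m+3)) = c.1 := by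
        rw [hLdef, Fin.cast_val_eq_self]
        ring
      rw [hbL, hhd]
      dsimp only
      rw [if_neg hcv, if_neg hbv]
      simp
      rfl
    have heq := hGI (Hm t) (consistent_Hm t) (det_unit hTt) hMM
    rw [genericG_eq_Hm K m] at heq
    have h1 := congrFun (congrFun heq (v+1)) v
    simp only [Hm, eq_self_iff_true, if_true] at h1
    have hv1 : v + 1 ≠ v := by
      intro he
      have := add_one_ne_self v
      exact this he
    have ht1 : t v = lam⁻¹ * x v := by
      rw [htd]
      simp only [tdef, hhd]
      simp only [ite_self]
      rw [if_neg hv1]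
      simp [one_div]
    rw [ht1] at h1
    have hlam1 : lam⁻¹ = 1 := mul_right_cancel₀ (xg_ne_zero K m v) (h1.trans (one_mul _).symm)
    have : lam = 1 := by
      rw [← inv_inv lam, hlam1, inv_one]
    exact (xg_ne_one K m v) this

end Forward


end S6

theorem statement6 (K : Type*) [Field K] [Infinite K] (m : ℕ)
    (B C : Finset (Fin (m + 3))) :
    GenIdentifiable K (loopEdges (m + 3)) B C ↔
      (B ∪ C = Finset.univ ∧ ((B ∩ C).Nonempty ∨ ¬ CyclicallyConsecutive B)) := by
  constructor
  · intro hGI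
    by_contra hn
    exact S6.forward K m B C hn hGI
  · rintro ⟨hU, hOr⟩
    exact S6.backward K m B C hU hOr

end
end

section
/- Let (V,E) be a parallel paths network on V = {1,…,n} with paths P_1, …, P_{n_p} (n_p ≥ 2) from the source 1 to the sink n, and let (B,C) be an EMP. Then the network ((V,E),B,C) is generically identifiable if and only if 1 ∈ B, n ∈ C, B ∪ C = V, and there are at least n_p − 1 indices j such that path P_j has internal nodes u and v with u ⪯_j v, u ∈ B and v ∈ C. -/
/-!
STATEMENT 7: A parallel paths network with paths `P₁, …, P_{n_p}` (`n_p ≥ 2`) from the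
source (node `1`, here `0 : Fin (m+2)`) to the sink (node `n`, here `Fin.last (m+1)`)
is generically identifiable if and only if the source is excited, the sink is measured,
`B ∪ C = V`, and at least `n_p - 1` of the paths contain internal nodes `u ⪯ v` with
`u ∈ B` and `v ∈ C`.
-/

open Matrix

noncomputable section

/-- `(V, E)` with `V = Fin (m+2)` is a parallel paths network with paths
`P j` (each given as the list of its nodes from source `0` to sink `Fin.last (m+1)`). -/
structure IsPPN (m : ℕ) (E : Finset (Fin (m + 2) × Fin (m + 2))) (np : ℕ)
    (P : Fin np → List (Fin (m + 2))) : Prop where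
  /-- there are at least two paths -/
  two_le : 2 ≤ np
  /-- no self-loops -/
  no_self : ∀ v : Fin (m + 2), (v, v) ∉ E
  /-- each path starts at the source, node `0` -/
  head : ∀ j, (P j).head? = some 0
  /-- each path ends at the sink, node `Fin.last (m+1)` -/
  last : ∀ j, (P j).getLast? = some (Fin.last (m + 1))
  /-- each path visits distinct nodes -/
  nodup : ∀ j, (P j).Nodup
  /-- consecutive nodes of each path are joined by edges -/
  chain : ∀ j, (P j).Chain' (fun u v => (u, v) ∈ E)
  /-- `E` is exactly the union of the edge sets of the paths -/
  edges : ∀ e : Fin (m + 2) × Fin (m + 2), e ∈ E ↔ ∃ j, e ∈ (P j).zip (P j).tail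
  /-- two distinct paths share only the source and the sink -/
  inter : ∀ j k, j ≠ k → ∀ v, v ∈ P j → v ∈ P k → v = 0 ∨ v = Fin.last (m + 1)
  /-- every node lies on at least one path -/
  cover : ∀ v : Fin (m + 2), ∃ j, v ∈ P j
  /-- at most one path is the single edge `source → sink` (i.e. has no internal node);
  every other path has at least one internal node -/
  single_edge_unique : ∀ j k, (P j).length = 2 → (P k).length = 2 → j = k
  /-- the source is the unique source of the digraph -/
  unique_source : ∀ v : Fin (m + 2), (∀ u, (u, v) ∉ E) → v = 0
  /-- the sink is the unique sink of the digraph -/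
  unique_sink : ∀ v : Fin (m + 2), (∀ u, (v, u) ∉ E) → v = Fin.last (m + 1)

/-- `v` is an internal node of the path `P j`: it lies on `P j` and is neither the
source nor the sink. -/
def Internal (m : ℕ) {np : ℕ} (P : Fin np → List (Fin (m + 2))) (j : Fin np)
    (v : Fin (m + 2)) : Prop :=
  v ∈ P j ∧ v ≠ 0 ∧ v ≠ Fin.last (m + 1)

namespace S7

variable {m np : ℕ} {E : Finset (Fin (m + 2) × Fin (m + 2))} {P : Fin np → List (Fin (m + 2))}

/-- `i`-th node of path `j` (junk `0` out of range). -/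
def w (P : Fin np → List (Fin (m + 2))) (j : Fin np) (i : ℕ) : Fin (m + 2) :=
  (P j).getD i 0

/-- length of path `j`. -/
def L (P : Fin np → List (Fin (m + 2))) (j : Fin np) : ℕ := (P j).length

lemma mem_zip_tail {α : Type*} (l : List α) (e : α × α) :
    e ∈ l.zip l.tail ↔ ∃ i, i + 1 < l.length ∧ l[i]? = some e.1 ∧ l[i + 1]? = some e.2 := by
  rw [List.mem_iff_getElem]
  constructor
  · rintro ⟨i, h, he⟩
    have hlen : i < l.length - 1 := by
      simpa [List.length_zip, List.length_tail] using h
    refine ⟨i, by omega, ?_, ?_⟩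
    · have h1 : i < l.length := by omega
      rw [List.getElem_zip] at he
      rw [List.getElem?_eq_getElem h1, ← he]
    · have h2 : i + 1 < l.length := by omega
      rw [List.getElem_zip] at he
      rw [List.getElem?_eq_getElem h2, ← he, List.getElem_tail]
  · rintro ⟨i, h, h1, h2⟩
    have hi : i < (l.zip l.tail).length := by
      simp [List.length_zip, List.length_tail]; omega
    refine ⟨i, hi, ?_⟩
    rw [List.getElem_zip]
    have e1 : l[i] = e.1 := by
      have := List.getElem?_eq_getElem (show i < l.length by omega) (l := l)
      rw [this] at h1; exact Option.some.inj h1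
    have e2 : l.tail[i]'(by simp [List.length_tail]; omega) = e.2 := by
      rw [List.getElem_tail]
      have := List.getElem?_eq_getElem h (l := l)
      rw [this] at h2; exact Option.some.inj h2
    rw [e1, e2]

section PPN
variable (h : IsPPN m E np P)
include h
set_option linter.unusedSectionVars false

lemma L_pos (j : Fin np) : 0 < L P j := by
  have := h.head j
  cases hl : P j with
  | nil => rw [hl] at this; simp at this
  | cons a t => simp [L, hl]

lemma w_eq (j : Fin np) {i : ℕ} (hi : i < L P j) : w P j i = (P j)[i] :=
  List.getD_eq_getElem _ _ hi

lemma w_zero (j : Fin np) : w P j 0 = 0 := by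
  have hh := h.head j
  have h0 : 0 < L P j := L_pos h j
  rw [w_eq h j h0]
  rw [List.head?_eq_getElem?, List.getElem?_eq_getElem h0] at hh
  exact Option.some.inj hh

lemma w_last (j : Fin np) : w P j (L P j - 1) = Fin.last (m + 1) := by
  have hh := h.last j
  have h0 : 0 < L P j := L_pos h j
  have h1 : L P j - 1 < L P j := by omega
  rw [w_eq h j h1]
  rw [List.getLast?_eq_getElem?] at hh
  have h1' : (P j).length - 1 < (P j).length := h1
  rw [List.getElem?_eq_getElem h1'] at hh
  exact Option.some.inj hh

lemma two_le_L (j : Fin np) : 2 ≤ L P j := by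
  by_contra hc
  have h1 : L P j = 1 := by have := L_pos h j; omega
  have h2 := w_zero h j
  have h3 := w_last h j
  rw [h1] at h3
  simp only [Nat.sub_self] at h3
  rw [h2] at h3
  have : ((0 : Fin (m + 2)) : ℕ) = (Fin.last (m + 1) : Fin (m + 2)) := congrArg _ h3
  simp at this

lemma w_inj (j : Fin np) {i i' : ℕ} (hi : i < L P j) (hi' : i' < L P j)
    (he : w P j i = w P j i') : i = i' := by
  rw [w_eq h j hi, w_eq h j hi'] at he
  exact ((h.nodup j).getElem_inj_iff).mp he

lemma w_mem (j : Fin np) {i : ℕ} (hi : i < L P j) : w P j i ∈ P j := by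
  rw [w_eq h j hi]; exact List.getElem_mem _

lemma mem_iff_w (j : Fin np) (v : Fin (m + 2)) :
    v ∈ P j ↔ ∃ i, i < L P j ∧ w P j i = v := by
  constructor
  · intro hv
    rcases List.mem_iff_getElem.mp hv with ⟨i, hi, he⟩
    exact ⟨i, hi, by rw [w_eq h j hi]; exact he⟩
  · rintro ⟨i, hi, rfl⟩; exact w_mem h j hi

lemma idx_w (j : Fin np) {i : ℕ} (hi : i < L P j) : (P j).idxOf (w P j i) = i := by
  have hmem : w P j i ∈ P j := w_mem h j hi
  have hlt : (P j).idxOf (w P j i) < L P j := List.idxOf_lt_length_iff.2 hmem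
  have : w P j ((P j).idxOf (w P j i)) = w P j i := by
    rw [w_eq h j hlt]; exact List.getElem_idxOf hlt
  exact w_inj h j hlt hi this

lemma w_idx (j : Fin np) {v : Fin (m + 2)} (hv : v ∈ P j) : w P j ((P j).idxOf v) = v := by
  have hlt : (P j).idxOf v < L P j := List.idxOf_lt_length_iff.2 hv
  rw [w_eq h j hlt]; exact List.getElem_idxOf hlt

lemma idx_lt (j : Fin np) {v : Fin (m + 2)} (hv : v ∈ P j) : (P j).idxOf v < L P j :=
  List.idxOf_lt_length_iff.2 hv

lemma w_ne_zero (j : Fin np) {i : ℕ} (h1 : 1 ≤ i) (hi : i < L P j) : w P j i ≠ 0 := by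
  intro hc
  have heq : w P j i = w P j 0 := by rw [hc, w_zero h j]
  have := w_inj h j hi (L_pos h j) heq
  omega

lemma w_ne_last (j : Fin np) {i : ℕ} (hi : i < L P j - 1) : w P j i ≠ Fin.last (m + 1) := by
  intro hc
  have heq : w P j i = w P j (L P j - 1) := by rw [hc, w_last h j]
  have := w_inj h j (by omega) (show L P j - 1 < L P j by have := L_pos h j; omega) heq
  omega

lemma last_ne_zero : (Fin.last (m + 1) : Fin (m + 2)) ≠ 0 := by
  simp [Fin.ext_iff]

/-- edge characterisation -/
lemma edge_iff (u v : Fin (m + 2)) :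
    (u, v) ∈ E ↔ ∃ j i, i + 1 < L P j ∧ w P j i = u ∧ w P j (i + 1) = v := by
  rw [h.edges]
  constructor
  · rintro ⟨j, hj⟩
    rcases (mem_zip_tail (P j) (u, v)).mp hj with ⟨i, hi, h1, h2⟩
    have hL : L P j = (P j).length := rfl
    refine ⟨j, i, by omega, ?_, ?_⟩
    · rw [w_eq h j (show i < L P j by omega)]
      exact Option.some.inj ((List.getElem?_eq_getElem (show i < (P j).length by omega)).symm.trans h1)
    · rw [w_eq h j (show i + 1 < L P j by omega)]
      exact Option.some.inj ((List.getElem?_eq_getElem hi).symm.trans h2)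
  · rintro ⟨j, i, hi, h1, h2⟩
    have hL : L P j = (P j).length := rfl
    refine ⟨j, (mem_zip_tail (P j) (u, v)).mpr ⟨i, by omega, ?_, ?_⟩⟩
    · rw [List.getElem?_eq_getElem (show i < (P j).length by omega)]
      rw [w_eq h j (show i < L P j by omega)] at h1; exact congrArg some h1
    · rw [List.getElem?_eq_getElem (show i + 1 < (P j).length by omega)]
      rw [w_eq h j hi] at h2; exact congrArg some h2

lemma edge_w (j : Fin np) {i : ℕ} (hi : i + 1 < L P j) : (w P j i, w P j (i + 1)) ∈ E :=
  (edge_iff h _ _).mpr ⟨j, i, hi, rfl, rfl⟩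

/-- internal nodes lie on a unique path -/
lemma internal_unique {j k : Fin np} {v : Fin (m + 2)} (hv : v ≠ 0) (hv' : v ≠ Fin.last (m + 1))
    (h1 : v ∈ P j) (h2 : v ∈ P k) : j = k := by
  by_contra hc
  rcases h.inter j k hc v h1 h2 with h' | h' <;> [exact hv h'; exact hv' h']

/-- no edges into the source -/
lemma no_edge_into_source (u : Fin (m + 2)) : (u, (0 : Fin (m + 2))) ∉ E := by
  intro hc
  rcases (edge_iff h u 0).mp hc with ⟨j, i, hi, h1, h2⟩
  exact w_ne_zero h j (by omega) (by omega) h2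

/-- no edges out of the sink -/
lemma no_edge_out_sink (u : Fin (m + 2)) : ((Fin.last (m + 1) : Fin (m + 2)), u) ∉ E := by
  intro hc
  rcases (edge_iff h _ u).mp hc with ⟨j, i, hi, h1, h2⟩
  exact w_ne_last h j (by omega) h1

/-- unique in-edge of an internal node -/
lemma edge_into_internal {j : Fin np} {i : ℕ} (h1 : 1 ≤ i) (hi : i < L P j - 1)
    (u : Fin (m + 2)) : (u, w P j i) ∈ E ↔ u = w P j (i - 1) := by
  constructor
  · intro hc
    rcases (edge_iff h u _).mp hc with ⟨k, i', hi', hu, hv⟩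
    have hne0 : w P j i ≠ 0 := w_ne_zero h j h1 (by omega)
    have hnet : w P j i ≠ Fin.last (m + 1) := w_ne_last h j hi
    have hkj : k = j := internal_unique h (by rw [hv]; exact hne0) (by rw [hv]; exact hnet)
      (w_mem h k hi') (by rw [hv]; exact w_mem h j (show i < L P j by omega))
    subst hkj
    have : i' + 1 = i := w_inj h k hi' (by omega) hv
    rw [← hu]
    congr 1
    omega
  · rintro rfl
    have : (i - 1) + 1 = i := by omega
    have he := edge_w h j (i := i - 1) (by omega)
    rwa [this] at he

/-- in-edges of the sink come from penultimate nodes -/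
lemma edge_into_sink (u : Fin (m + 2)) :
    (u, (Fin.last (m + 1) : Fin (m + 2))) ∈ E ↔ ∃ j, u = w P j (L P j - 2) := by
  constructor
  · intro hc
    rcases (edge_iff h u _).mp hc with ⟨k, i, hi, hu, hv⟩
    have : i + 1 = L P k - 1 := by
      by_contra hne
      exact w_ne_last h k (by omega) hv
    exact ⟨k, by rw [← hu]; congr 1; omega⟩
  · rintro ⟨j, rfl⟩
    have h2 := two_le_L h j
    have he := edge_w h j (i := L P j - 2) (by omega)
    have : L P j - 2 + 1 = L P j - 1 := by omega
    rw [this, w_last h j] at he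
    exact he

/-- the penultimate node determines the path -/
lemma pen_inj {j k : Fin np} (he : w P j (L P j - 2) = w P k (L P k - 2)) : j = k := by
  have h2j := two_le_L h j
  have h2k := two_le_L h k
  by_cases h0 : w P j (L P j - 2) = 0
  · have hj2 : L P j = 2 := by
      by_contra hc
      exact w_ne_zero h j (by omega) (by omega) h0
    have hk2 : L P k = 2 := by
      by_contra hc
      exact w_ne_zero h k (i := L P k - 2) (by omega) (by omega) (he ▸ h0)
    exact h.single_edge_unique j k hj2 hk2
  · have hnt : w P j (L P j - 2) ≠ Fin.last (m + 1) := w_ne_last h j (by omega)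
    exact internal_unique h h0 hnt (w_mem h j (by omega)) (by rw [he]; exact w_mem h k (by omega))

lemma L_le (j : Fin np) : L P j ≤ m + 2 := by
  have := (h.nodup j).length_le_card
  simpa [L] using this


end PPN

section Matrices2

variable {F : Type*} [Field F]

/-- product of the weights of the edges of path `j` from position `a` to position `b`. -/
def seg (H : Matrix (Fin (m + 2)) (Fin (m + 2)) F) (P : Fin np → List (Fin (m + 2)))
    (j : Fin np) (a b : ℕ) : F :=
  ∏ k ∈ Finset.Ico a b, H (w P j (k + 1)) (w P j k)

lemma seg_succ (H : Matrix (Fin (m + 2)) (Fin (m + 2)) F) (j : Fin np) {a b : ℕ} (hab : a ≤ b) :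
    seg H P j a (b + 1) = seg H P j a b * H (w P j (b + 1)) (w P j b) :=
  Finset.prod_Ico_succ_top hab _

lemma seg_same (H : Matrix (Fin (m + 2)) (Fin (m + 2)) F) (j : Fin np) (a : ℕ) :
    seg H P j a a = 1 := by simp [seg]

variable (h : IsPPN m E np P)
include h
set_option linter.unusedSectionVars false

/-- a path containing `v`. -/
def pathOf (h : IsPPN m E np P) (v : Fin (m + 2)) : Fin np := (h.cover v).choose

lemma mem_pathOf (v : Fin (m + 2)) : v ∈ P (pathOf h v) := (h.cover v).choose_spec

lemma idx_zero (k : Fin np) : (P k).idxOf (0 : Fin (m + 2)) = 0 := by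
  have h0 : w P k 0 = 0 := w_zero h k
  conv_lhs => rw [← h0]
  exact idx_w h k (L_pos h k)

/-- rank function establishing acyclicity -/
def rho (h : IsPPN m E np P) (v : Fin (m + 2)) : ℕ :=
  if v = Fin.last (m + 1) then m + 2 else (P (pathOf h v)).idxOf v

lemma rho_le (v : Fin (m + 2)) : rho h v ≤ m + 2 := by
  unfold rho
  split
  · exact le_refl _
  · have := idx_lt h (pathOf h v) (mem_pathOf h v)
    have := L_le h (pathOf h v)
    omega

lemma rho_lt_of_edge {u v : Fin (m + 2)} (he : (u, v) ∈ E) : rho h u < rho h v := by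
  rcases (edge_iff h u v).mp he with ⟨j, i, hi, hu, hv⟩
  have hunt : u ≠ Fin.last (m + 1) := by rw [← hu]; exact w_ne_last h j (by omega)
  have hvn0 : v ≠ 0 := by rw [← hv]; exact w_ne_zero h j (by omega) (by omega)
  have hru : rho h u = i := by
    unfold rho
    rw [if_neg hunt]
    by_cases hu0 : u = 0
    · subst hu0
      have : w P j 0 = 0 := w_zero h j
      have hi0 : i = 0 := w_inj h j (by omega) (L_pos h j) (by rw [hu, this])
      rw [hi0]
      exact idx_zero h _
    · have hpj : pathOf h u = j :=
        internal_unique h hu0 hunt (mem_pathOf h u) (by rw [← hu]; exact w_mem h j (by omega))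
      rw [hpj, ← hu, idx_w h j (by omega)]
  rw [hru]
  unfold rho
  by_cases hvt : v = Fin.last (m + 1)
  · rw [if_pos hvt]
    have := L_le h j
    omega
  · rw [if_neg hvt]
    have hpj : pathOf h v = j :=
      internal_unique h hvn0 hvt (mem_pathOf h v) (by rw [← hv]; exact w_mem h j hi)
    rw [hpj, ← hv, idx_w h j hi]
    omega

lemma pow_entry_zero {H : Matrix (Fin (m + 2)) (Fin (m + 2)) F} (hc : Consistent E H)
    (n : ℕ) (i j : Fin (m + 2)) (hn : (H ^ n) i j ≠ 0) : rho h j + n ≤ rho h i := by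
  induction n generalizing i with
  | zero =>
    simp only [pow_zero] at hn
    by_cases hij : i = j
    · subst hij; simp
    · rw [Matrix.one_apply_ne hij] at hn; exact absurd rfl hn
  | succ n ih =>
    rw [pow_succ'] at hn
    -- (H * H ^ n) i j = ∑ k, H i k * (H ^ n) k j
    rw [Matrix.mul_apply] at hn
    rcases Finset.exists_ne_zero_of_sum_ne_zero hn with ⟨k, -, hk⟩
    have h1 : H i k ≠ 0 := fun hz => hk (by rw [hz, zero_mul])
    have h2 : (H ^ n) k j ≠ 0 := fun hz => hk (by rw [hz, mul_zero])
    have hE : (k, i) ∈ E := by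
      by_contra hnE
      exact h1 (hc i k hnE)
    have := rho_lt_of_edge h hE
    have := ih k h2
    omega

lemma consistent_nilpotent {H : Matrix (Fin (m + 2)) (Fin (m + 2)) F} (hc : Consistent E H) :
    H ^ (m + 3) = 0 := by
  ext i j
  by_contra hn
  have := pow_entry_zero h hc (m + 3) i j hn
  have h1 := rho_le h i
  omega

lemma consistent_isUnit {H : Matrix (Fin (m + 2)) (Fin (m + 2)) F} (hc : Consistent E H) :
    IsUnit (1 - H) :=
  IsNilpotent.isUnit_one_sub ⟨m + 3, consistent_nilpotent h hc⟩

lemma consistent_isUnit_det {H : Matrix (Fin (m + 2)) (Fin (m + 2)) F} (hc : Consistent E H) :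
    IsUnit (1 - H).det :=
  (Matrix.isUnit_iff_isUnit_det _).mp (consistent_isUnit h hc)

omit h in
lemma col_unique {H : Matrix (Fin (m + 2)) (Fin (m + 2)) F} (hd : IsUnit (1 - H).det)
    {b : Fin (m + 2)} {x : Fin (m + 2) → F}
    (hx : (1 - H).mulVec x = Pi.single b 1) (v : Fin (m + 2)) : (1 - H)⁻¹ v b = x v := by
  have h1 : (1 - H)⁻¹.mulVec ((1 - H).mulVec x) = x := by
    rw [Matrix.mulVec_mulVec, Matrix.nonsing_inv_mul _ hd, Matrix.one_mulVec]
  rw [hx] at h1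
  have h2 : ((1 - H)⁻¹.mulVec (Pi.single b 1)) v = (1 - H)⁻¹ v b := by
    simp [Matrix.mulVec, dotProduct, Pi.single_apply]
  rw [← h2, h1]

omit h in
lemma mulVec_apply {H : Matrix (Fin (m + 2)) (Fin (m + 2)) F} (x : Fin (m + 2) → F)
    (v : Fin (m + 2)) : ((1 - H).mulVec x) v = x v - ∑ k, H v k * x k := by
  have h1 : ((1 - H).mulVec x) v = ∑ k, ((1 : Matrix (Fin (m + 2)) (Fin (m + 2)) F) v k - H v k) * x k := by
    simp [Matrix.mulVec, dotProduct, Matrix.sub_apply]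
  rw [h1]
  simp only [sub_mul, Finset.sum_sub_distrib]
  congr 1
  rw [Finset.sum_eq_single v]
  · simp [Matrix.one_apply]
  · intro k _ hk; simp [Matrix.one_apply, Ne.symm hk]
  · simp

end Matrices2

section Columns
variable {F : Type*} [Field F]
variable (h : IsPPN m E np P) (H : Matrix (Fin (m + 2)) (Fin (m + 2)) F)
set_option linter.unusedSectionVars false

/-- candidate value of the source column at non-sink nodes -/
def q0 : Fin (m + 2) → F := fun v => seg H P (pathOf h v) 0 ((P (pathOf h v)).idxOf v)

/-- candidate source column of `(1-H)⁻¹` -/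
def col0 : Fin (m + 2) → F := fun v =>
  if v = Fin.last (m + 1) then ∑ k, H (Fin.last (m + 1)) k * q0 h H k else q0 h H v

/-- candidate value of the column of the internal node `w P j a` at non-sink nodes -/
def qb (P : Fin np → List (Fin (m + 2))) (j : Fin np) (a : ℕ) : Fin (m + 2) → F := fun v =>
  if v ∈ P j ∧ a ≤ (P j).idxOf v ∧ (P j).idxOf v < L P j - 1 then
    seg H P j a ((P j).idxOf v) else 0

/-- candidate column of `(1-H)⁻¹` at the internal node `w P j a` -/
def colb (P : Fin np → List (Fin (m + 2))) (j : Fin np) (a : ℕ) : Fin (m + 2) → F := fun v =>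
  if v = Fin.last (m + 1) then ∑ k, H (Fin.last (m + 1)) k * qb H P j a k else qb H P j a v

/-- penultimate node of path `j` -/
def pen (P : Fin np → List (Fin (m + 2))) (j : Fin np) : Fin (m + 2) := w P j (L P j - 2)

/-- total weight of path `j` -/
def full (P : Fin np → List (Fin (m + 2))) (j : Fin np) : F := seg H P j 0 (L P j - 1)

lemma col0_last : col0 h H (Fin.last (m + 1)) = ∑ k, H (Fin.last (m + 1)) k * q0 h H k :=
  if_pos rfl

lemma col0_ne {v : Fin (m + 2)} (hv : v ≠ Fin.last (m + 1)) : col0 h H v = q0 h H v :=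
  if_neg hv

lemma colb_last (j : Fin np) (a : ℕ) :
    colb H P j a (Fin.last (m + 1)) = ∑ k, H (Fin.last (m + 1)) k * qb H P j a k :=
  if_pos rfl

lemma colb_ne {v : Fin (m + 2)} (j : Fin np) (a : ℕ) (hv : v ≠ Fin.last (m + 1)) :
    colb H P j a v = qb H P j a v :=
  if_neg hv

include h

lemma qb_w {j : Fin np} {a i : ℕ} (hiL : i < L P j - 1) (hai : a ≤ i) :
    qb H P j a (w P j i) = seg H P j a i := by
  have hidx : (P j).idxOf (w P j i) = i := idx_w h j (by omega)
  have : qb H P j a (w P j i) =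
      if w P j i ∈ P j ∧ a ≤ (P j).idxOf (w P j i) ∧ (P j).idxOf (w P j i) < L P j - 1 then
        seg H P j a ((P j).idxOf (w P j i)) else 0 := rfl
  rw [this, if_pos ⟨w_mem h j (by omega), by omega, by omega⟩, hidx]

lemma qb_w_zero {j : Fin np} {a i : ℕ} (hiL : i < L P j) (hai : i < a) :
    qb H P j a (w P j i) = 0 := by
  have hidx : (P j).idxOf (w P j i) = i := idx_w h j hiL
  have : qb H P j a (w P j i) =
      if w P j i ∈ P j ∧ a ≤ (P j).idxOf (w P j i) ∧ (P j).idxOf (w P j i) < L P j - 1 then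
        seg H P j a ((P j).idxOf (w P j i)) else 0 := rfl
  rw [this, if_neg]
  intro hcon
  omega

lemma qb_off {j : Fin np} {a : ℕ} {v : Fin (m + 2)} (hv : v ∉ P j) :
    qb H P j a v = 0 := by
  have : qb H P j a v =
      if v ∈ P j ∧ a ≤ (P j).idxOf v ∧ (P j).idxOf v < L P j - 1 then
        seg H P j a ((P j).idxOf v) else 0 := rfl
  rw [this, if_neg (fun hcon => hv hcon.1)]

lemma qb_source {j : Fin np} {a : ℕ} (ha : 1 ≤ a) : qb H P j a (0 : Fin (m + 2)) = 0 := by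
  have h0 : w P j 0 = 0 := w_zero h j
  rw [← h0]
  exact qb_w_zero h H (L_pos h j) ha

lemma qb_last {j : Fin np} {a : ℕ} : qb H P j a (Fin.last (m + 1)) = 0 := by
  have hl : w P j (L P j - 1) = Fin.last (m + 1) := w_last h j
  rw [← hl]
  have hidx : (P j).idxOf (w P j (L P j - 1)) = L P j - 1 :=
    idx_w h j (by have := L_pos h j; omega)
  have : qb H P j a (w P j (L P j - 1)) =
      if w P j (L P j - 1) ∈ P j ∧ a ≤ (P j).idxOf (w P j (L P j - 1)) ∧
          (P j).idxOf (w P j (L P j - 1)) < L P j - 1 then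
        seg H P j a ((P j).idxOf (w P j (L P j - 1))) else 0 := rfl
  rw [this, if_neg]
  intro hcon
  omega

lemma q0_eq {v : Fin (m + 2)} {j : Fin np} (hv : v ∈ P j) (hvt : v ≠ Fin.last (m + 1)) :
    q0 h H v = seg H P j 0 ((P j).idxOf v) := by
  by_cases hv0 : v = 0
  · subst hv0
    unfold q0
    rw [idx_zero h, idx_zero h, seg_same, seg_same]
  · unfold q0
    rw [internal_unique h hv0 hvt (mem_pathOf h v) hv]

lemma q0_w {j : Fin np} {i : ℕ} (hi : i < L P j - 1) :
    q0 h H (w P j i) = seg H P j 0 i := by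
  rw [q0_eq h H (w_mem h j (by omega)) (w_ne_last h j (by omega)), idx_w h j (by omega)]

lemma int_repr {v : Fin (m + 2)} (hv0 : v ≠ 0) (hvt : v ≠ Fin.last (m + 1)) :
    ∃ (j : Fin np) (i : ℕ), i + 2 < L P j ∧ w P j (i + 1) = v := by
  set j := pathOf h v
  have hv : v ∈ P j := mem_pathOf h v
  set i := (P j).idxOf v with hidef
  have hiL : i < L P j := idx_lt h j hv
  have hwi : w P j i = v := w_idx h j hv
  have hi1 : 1 ≤ i := by
    rcases Nat.eq_zero_or_pos i with h0 | h0
    · exfalso; apply hv0; rw [← hwi, h0, w_zero h j]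
    · exact h0
  have hine : i ≠ L P j - 1 := by
    intro hc; apply hvt; rw [← hwi, hc, w_last h j]
  exact ⟨j, i - 1, by omega, by rw [show i - 1 + 1 = i by omega]; exact hwi⟩

variable {H}

lemma sum_source (hc : Consistent E H) (x : Fin (m + 2) → F) :
    ∑ k, H 0 k * x k = 0 := by
  apply Finset.sum_eq_zero
  intro k _
  rw [hc 0 k (no_edge_into_source h k), zero_mul]

lemma sum_internal (hc : Consistent E H) {j : Fin np} {i : ℕ} (h1 : 1 ≤ i)
    (hi : i < L P j - 1) (x : Fin (m + 2) → F) :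
    ∑ k, H (w P j i) k * x k = H (w P j i) (w P j (i - 1)) * x (w P j (i - 1)) := by
  apply Finset.sum_eq_single
  · intro k _ hk
    rw [hc _ k (fun hE => hk ((edge_into_internal h h1 hi k).mp hE)), zero_mul]
  · intro hk; exact absurd (Finset.mem_univ _) hk

lemma sum_sink (hc : Consistent E H) (x : Fin (m + 2) → F) :
    ∑ k, H (Fin.last (m + 1)) k * x k = ∑ j, H (Fin.last (m + 1)) (pen P j) * x (pen P j) := by
  rw [← Finset.sum_image (g := fun j => pen P j) (f := fun k => H (Fin.last (m + 1)) k * x k)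
    (fun j _ k _ he => pen_inj h he)]
  apply (Finset.sum_subset (Finset.subset_univ _) _).symm
  intro k _ hk
  have : (k, Fin.last (m + 1)) ∉ E := by
    intro hE
    rcases (edge_into_sink h k).mp hE with ⟨j, rfl⟩
    exact hk (Finset.mem_image.mpr ⟨j, Finset.mem_univ j, rfl⟩)
  rw [hc _ k this, zero_mul]

lemma sum_sink_congr (hc : Consistent E H) (x y : Fin (m + 2) → F)
    (hxy : ∀ v, v ≠ Fin.last (m + 1) → x v = y v) :
    ∑ k, H (Fin.last (m + 1)) k * x k = ∑ k, H (Fin.last (m + 1)) k * y k := by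
  apply Finset.sum_congr rfl
  intro k _
  by_cases hk : k = Fin.last (m + 1)
  · subst hk; rw [hc _ _ (h.no_self _), zero_mul, zero_mul]
  · rw [hxy k hk]

lemma col0_spec (hc : Consistent E H) :
    (1 - H).mulVec (col0 h H) = Pi.single (0 : Fin (m + 2)) 1 := by
  funext v
  rw [mulVec_apply]
  by_cases hv0 : v = 0
  · subst hv0
    rw [sum_source h hc]
    have e1 : col0 h H 0 = 1 := by
      rw [col0_ne h H (Ne.symm (last_ne_zero h))]
      unfold q0
      rw [idx_zero h, seg_same]
    rw [e1]; simp
  · rw [Pi.single_apply, if_neg hv0]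
    by_cases hvt : v = Fin.last (m + 1)
    · subst hvt
      rw [col0_last h, sum_sink_congr h hc (col0 h H) (q0 h H)
        (fun u hu => col0_ne h H hu)]
      exact sub_self _
    · rcases int_repr h hv0 hvt with ⟨j, i, hiL, hvw⟩
      subst hvw
      rw [sum_internal h hc (by omega) (by omega) (col0 h H)]
      simp only [Nat.add_sub_cancel]
      have hnt' : w P j i ≠ Fin.last (m + 1) := w_ne_last h j (by omega)
      have hvt' : w P j (i + 1) ≠ Fin.last (m + 1) := w_ne_last h j (by omega)
      rw [col0_ne h H hvt', col0_ne h H hnt', q0_w h H (show i + 1 < L P j - 1 by omega),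
        q0_w h H (show i < L P j - 1 by omega), seg_succ H j (Nat.zero_le i), mul_comm, sub_self]

lemma colb_spec (hc : Consistent E H) {j : Fin np} {a : ℕ} (ha1 : 1 ≤ a)
    (ha2 : a < L P j - 1) :
    (1 - H).mulVec (colb H P j a) = Pi.single (w P j a) 1 := by
  have hb0 : w P j a ≠ 0 := w_ne_zero h j ha1 (by omega)
  have hbt : w P j a ≠ Fin.last (m + 1) := w_ne_last h j ha2
  funext v
  rw [mulVec_apply, Pi.single_apply]
  by_cases hv0 : v = 0
  · subst hv0
    rw [sum_source h hc, if_neg (fun hx => hb0 hx.symm),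
      colb_ne H j a (Ne.symm (last_ne_zero h)), qb_source h H ha1]
    simp
  · by_cases hvt : v = Fin.last (m + 1)
    · subst hvt
      rw [colb_last H j a, sum_sink_congr h hc (colb H P j a) (qb H P j a)
        (fun u hu => colb_ne H j a hu)]
      rw [if_neg (fun hx => hbt hx.symm)]
      exact sub_self _
    · rcases int_repr h hv0 hvt with ⟨k, i, hiL, hvw⟩
      subst hvw
      rw [sum_internal h hc (by omega) (by omega) (colb H P j a)]
      simp only [Nat.add_sub_cancel]
      have hkt' : w P k i ≠ Fin.last (m + 1) := w_ne_last h k (by omega)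
      have hvt' : w P k (i + 1) ≠ Fin.last (m + 1) := w_ne_last h k (by omega)
      rw [colb_ne H j a hvt', colb_ne H j a hkt']
      by_cases hkj : k = j
      · subst hkj
        by_cases hai : a ≤ i
        · have hne : w P k (i + 1) ≠ w P k a := by
            intro hcon
            have := w_inj h k (by omega) (by omega) hcon
            omega
          rw [qb_w h H (show i + 1 < L P k - 1 by omega) (by omega),
            qb_w h H (show i < L P k - 1 by omega) hai,
            if_neg hne, seg_succ H k hai, mul_comm, sub_self]
        · by_cases hai' : a = i + 1
          · have heq : w P k (i + 1) = w P k a := by rw [hai']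
            rw [qb_w h H (show i + 1 < L P k - 1 by omega) (by omega),
              qb_w_zero h H (show i < L P k by omega) (by omega),
              if_pos heq, mul_zero, sub_zero, ← hai', seg_same]
          · have hne : w P k (i + 1) ≠ w P k a := by
              intro hcon
              have := w_inj h k (by omega) (by omega) hcon
              omega
            rw [qb_w_zero h H (show i + 1 < L P k by omega) (by omega),
              qb_w_zero h H (show i < L P k by omega) (by omega),
              if_neg hne, mul_zero, sub_zero]
      · have hoff : ∀ i' : ℕ, 1 ≤ i' → i' + 1 < L P k → w P k i' ∉ P j := by
          intro i' h1 h2 hcon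
          exact hkj (internal_unique h (w_ne_zero h k h1 (by omega))
            (w_ne_last h k (by omega)) (w_mem h k (by omega)) hcon)
        have q1 : qb H P j a (w P k (i + 1)) = 0 :=
          qb_off h H (hoff (i + 1) (by omega) (by omega))
        have q2 : qb H P j a (w P k i) = 0 := by
          by_cases hi0 : i = 0
          · subst hi0
            rw [w_zero h k]
            exact qb_source h H ha1
          · exact qb_off h H (hoff i (by omega) (by omega))
        have hne : w P k (i + 1) ≠ w P j a := by
          intro hcon
          exact (hoff (i + 1) (by omega) (by omega)) (hcon ▸ w_mem h j (show a < L P j by omega))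
        rw [q1, q2, if_neg hne, mul_zero, sub_zero]

-- entry lemmas
lemma entry_sink_col (hc : Consistent E H) (v : Fin (m + 2)) :
    (1 - H)⁻¹ v (Fin.last (m + 1)) = if v = Fin.last (m + 1) then 1 else 0 := by
  have hx : (1 - H).mulVec (Pi.single (Fin.last (m + 1)) 1) = Pi.single (Fin.last (m + 1)) 1 := by
    funext u
    rw [mulVec_apply]
    have e0 : ∑ k, H u k * (Pi.single (Fin.last (m + 1)) (1 : F) : Fin (m + 2) → F) k = 0 := by
      apply Finset.sum_eq_zero
      intro k _
      by_cases hk : k = Fin.last (m + 1)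
      · subst hk; rw [hc u _ (no_edge_out_sink h u), zero_mul]
      · rw [Pi.single_apply, if_neg hk, mul_zero]
    rw [e0, sub_zero]
  rw [col_unique (consistent_isUnit_det h hc) hx v, Pi.single_apply]

lemma entry_col0 (hc : Consistent E H) (v : Fin (m + 2)) :
    (1 - H)⁻¹ v 0 = col0 h H v :=
  col_unique (consistent_isUnit_det h hc) (col0_spec h hc) v

lemma entry_colb (hc : Consistent E H) {j : Fin np} {a : ℕ} (ha1 : 1 ≤ a)
    (ha2 : a < L P j - 1) (v : Fin (m + 2)) :
    (1 - H)⁻¹ v (w P j a) = colb H P j a v :=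
  col_unique (consistent_isUnit_det h hc) (colb_spec h hc ha1 ha2) v

lemma q0_pen (j : Fin np) : q0 h H (pen P j) = seg H P j 0 (L P j - 2) := by
  have h2 := two_le_L h j
  unfold pen
  exact q0_w h H (by omega)

lemma pen_mul (j : Fin np) :
    H (Fin.last (m + 1)) (pen P j) * seg H P j 0 (L P j - 2) = full H P j := by
  have h2 := two_le_L h j
  have e : seg H P j 0 (L P j - 2 + 1) = seg H P j 0 (L P j - 2) *
      H (w P j (L P j - 2 + 1)) (w P j (L P j - 2)) := seg_succ H j (Nat.zero_le _)
  rw [show L P j - 2 + 1 = L P j - 1 by omega] at e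
  rw [w_last h j] at e
  unfold full pen
  rw [e, mul_comm]

lemma entry_sink0 (hc : Consistent E H) :
    (1 - H)⁻¹ (Fin.last (m + 1)) 0 = ∑ j, full H P j := by
  rw [entry_col0 h hc, col0_last h, sum_sink h hc]
  apply Finset.sum_congr rfl
  intro j _
  rw [q0_pen h (H := H) j, pen_mul h j]

lemma entry_sinkb (hc : Consistent E H) {j : Fin np} {a : ℕ} (ha1 : 1 ≤ a)
    (ha2 : a < L P j - 1) :
    (1 - H)⁻¹ (Fin.last (m + 1)) (w P j a) = seg H P j a (L P j - 1) := by
  rw [entry_colb h hc ha1 ha2, colb_last H j a, sum_sink h hc]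
  rw [Finset.sum_eq_single j]
  · have h2 := two_le_L h j
    have hq : qb H P j a (pen P j) = seg H P j a (L P j - 2) := by
      unfold pen
      exact qb_w h H (by omega) (by omega)
    rw [hq]
    have e : seg H P j a (L P j - 2 + 1) = seg H P j a (L P j - 2) *
        H (w P j (L P j - 2 + 1)) (w P j (L P j - 2)) := seg_succ H j (by omega)
    rw [show L P j - 2 + 1 = L P j - 1 by omega] at e
    rw [w_last h j] at e
    rw [e, mul_comm]
    rfl
  · intro k _ hkj
    have h2 := two_le_L h k
    have hq : qb H P j a (pen P k) = 0 := by
      by_cases h0 : pen P k = 0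
      · rw [h0]; exact qb_source h H ha1
      · refine qb_off h H ?_
        intro hcon
        exact hkj (internal_unique h h0 (w_ne_last h k (by omega))
          (w_mem h k (by omega)) hcon)
    rw [hq, mul_zero]
  · intro hj; exact absurd (Finset.mem_univ j) hj

end Columns

section Recover
variable {F : Type*} [Field F]
variable (h : IsPPN m E np P)
set_option linter.unusedSectionVars false
include h

lemma seg_split (H : Matrix (Fin (m + 2)) (Fin (m + 2)) F) (j : Fin np) {x y z : ℕ}
    (hxy : x ≤ y) (hyz : y ≤ z) : seg H P j x z = seg H P j x y * seg H P j y z :=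
  (Finset.prod_Ico_consecutive _ hxy hyz).symm

lemma internal_idx {j : Fin np} {u : Fin (m + 2)} (hu : u ∈ P j) (hu0 : u ≠ 0)
    (hut : u ≠ Fin.last (m + 1)) :
    1 ≤ (P j).idxOf u ∧ (P j).idxOf u < L P j - 1 ∧ w P j ((P j).idxOf u) = u := by
  have hlt : (P j).idxOf u < L P j := idx_lt h j hu
  have hw : w P j ((P j).idxOf u) = u := w_idx h j hu
  have h1 : 1 ≤ (P j).idxOf u := by
    rcases Nat.eq_zero_or_pos ((P j).idxOf u) with h0 | h0
    · exfalso; apply hu0; rw [← hw, h0, w_zero h j]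
    · exact h0
  have h2 : (P j).idxOf u ≠ L P j - 1 := by
    intro hcon; apply hut; rw [← hw, hcon, w_last h j]
  exact ⟨h1, by omega, hw⟩

theorem recover {H1 H2 : Matrix (Fin (m + 2)) (Fin (m + 2)) F}
    (hc1 : Consistent E H1) (hc2 : Consistent E H2)
    (hnz : ∀ (j : Fin np) (a b' : ℕ), a ≤ b' → b' ≤ L P j - 1 → seg H2 P j a b' ≠ 0)
    {B C : Finset (Fin (m + 2))}
    (hB0 : (0 : Fin (m + 2)) ∈ B) (htC : Fin.last (m + 1) ∈ C)
    (hBC : ∀ v : Fin (m + 2), v ∈ B ∨ v ∈ C)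
    (J : Finset (Fin np)) (hJcard : np - 1 ≤ J.card)
    (hJ : ∀ j ∈ J, ∃ u v : Fin (m + 2),
      (u ∈ P j ∧ u ≠ 0 ∧ u ≠ Fin.last (m + 1)) ∧
      (v ∈ P j ∧ v ≠ 0 ∧ v ≠ Fin.last (m + 1)) ∧
      (P j).idxOf u ≤ (P j).idxOf v ∧ u ∈ B ∧ v ∈ C)
    (hM : ∀ c ∈ C, ∀ b ∈ B, (1 - H1)⁻¹ c b = (1 - H2)⁻¹ c b) :
    H1 = H2 := by
  -- Step A: full weights agree on good paths
  have stepA : ∀ j ∈ J, full H1 P j = full H2 P j := by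
    intro j hj
    obtain ⟨u, v, ⟨huP, hu0, hut⟩, ⟨hvP, hv0, hvt⟩, huv, huB, hvC⟩ := hJ j hj
    obtain ⟨ha1, ha2, hwa⟩ := internal_idx h huP hu0 hut
    obtain ⟨hb1, hb2, hwb⟩ := internal_idx h hvP hv0 hvt
    set a := (P j).idxOf u with hadef
    set b := (P j).idxOf v with hbdef
    have e1 : seg H1 P j a (L P j - 1) = seg H2 P j a (L P j - 1) := by
      have hMt := hM _ htC u huB
      rw [← hwa, entry_sinkb h hc1 ha1 ha2, entry_sinkb h hc2 ha1 ha2] at hMt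
      exact hMt
    have e2 : seg H1 P j a b = seg H2 P j a b := by
      have hMv := hM v hvC u huB
      rw [← hwa, entry_colb h hc1 ha1 ha2 v, entry_colb h hc2 ha1 ha2 v,
        colb_ne H1 j a hvt, colb_ne H2 j a hvt, ← hwb,
        qb_w h H1 hb2 huv, qb_w h H2 hb2 huv] at hMv
      exact hMv
    have e3 : seg H1 P j 0 b = seg H2 P j 0 b := by
      have hMv := hM v hvC 0 hB0
      rw [entry_col0 h hc1 v, entry_col0 h hc2 v, col0_ne h H1 hvt, col0_ne h H2 hvt,
        q0_eq h H1 hvP hvt, q0_eq h H2 hvP hvt] at hMv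
      exact hMv
    have idA : ∀ H : Matrix (Fin (m + 2)) (Fin (m + 2)) F,
        full H P j * seg H P j a b = seg H P j 0 b * seg H P j a (L P j - 1) := by
      intro H
      have s1 : seg H P j 0 b = seg H P j 0 a * seg H P j a b := seg_split h H j (by omega) huv
      have s2 : seg H P j a (L P j - 1) = seg H P j a b * seg H P j b (L P j - 1) :=
        seg_split h H j huv (by omega)
      have s3 : full H P j = seg H P j 0 a * seg H P j a (L P j - 1) :=
        seg_split h H j (by omega) (by omega)
      rw [s3, s2, s1]
      ring
    have key : full H1 P j * seg H2 P j a b = full H2 P j * seg H2 P j a b := by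
      calc full H1 P j * seg H2 P j a b
          = full H1 P j * seg H1 P j a b := by rw [e2]
        _ = seg H1 P j 0 b * seg H1 P j a (L P j - 1) := idA H1
        _ = seg H2 P j 0 b * seg H2 P j a (L P j - 1) := by rw [e1, e3]
        _ = full H2 P j * seg H2 P j a b := (idA H2).symm
    exact mul_right_cancel₀ (hnz j a b huv (by omega)) key
  -- Step B + C: all full weights agree
  have fullEq : ∀ j, full H1 P j = full H2 P j := by
    have hsum : ∑ j, full H1 P j = ∑ j, full H2 P j := by
      have hMt := hM _ htC 0 hB0
      rwa [entry_sink0 h hc1, entry_sink0 h hc2] at hMt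
    intro j0
    by_cases hj0 : j0 ∈ J
    · exact stepA j0 hj0
    · have hz : ∑ j, (full H1 P j - full H2 P j) = 0 := by
        rw [Finset.sum_sub_distrib, hsum, sub_self]
      have honly : ∀ j ∈ (Finset.univ : Finset (Fin np)), j ≠ j0 →
          full H1 P j - full H2 P j = 0 := by
        intro j _ hne
        have hjJ : j ∈ J := by
          by_contra hjJ
          have hsub : J ⊆ (Finset.univ.erase j).erase j0 := by
            intro x hx
            refine Finset.mem_erase.mpr ⟨fun hc => hj0 (hc ▸ hx), ?_⟩
            exact Finset.mem_erase.mpr ⟨fun hc => hjJ (hc ▸ hx), Finset.mem_univ x⟩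
          have hcard := Finset.card_le_card hsub
          rw [Finset.card_erase_of_mem (Finset.mem_erase.mpr ⟨hne.symm, Finset.mem_univ j0⟩),
            Finset.card_erase_of_mem (Finset.mem_univ j), Finset.card_univ, Fintype.card_fin]
            at hcard
          have := h.two_le
          omega
        rw [stepA j hjJ, sub_self]
      have hsingle := Finset.sum_eq_single_of_mem j0 (Finset.mem_univ j0) honly
      have hfj : full H1 P j0 - full H2 P j0 = 0 := by rw [← hsingle, hz]
      exact sub_eq_zero.mp hfj
  -- Step D: all prefixes agree
  have prefixEq : ∀ (j : Fin np) (i : ℕ), i ≤ L P j - 1 →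
      seg H1 P j 0 i = seg H2 P j 0 i := by
    intro j i hi
    rcases Nat.eq_zero_or_pos i with h0 | h1
    · subst h0; rw [seg_same, seg_same]
    · by_cases hiL : i = L P j - 1
      · subst hiL; exact fullEq j
      · have hi2 : i < L P j - 1 := by omega
        rcases hBC (w P j i) with hB | hC
        · -- measured via sink: suffix agrees, divide
          have e1 : seg H1 P j i (L P j - 1) = seg H2 P j i (L P j - 1) := by
            have hMt := hM _ htC _ hB
            rwa [entry_sinkb h hc1 h1 hi2, entry_sinkb h hc2 h1 hi2] at hMt
          have hsplit1 : full H1 P j = seg H1 P j 0 i * seg H1 P j i (L P j - 1) :=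
            seg_split h H1 j (by omega) (by omega)
          have hsplit2 : full H2 P j = seg H2 P j 0 i * seg H2 P j i (L P j - 1) :=
            seg_split h H2 j (by omega) (by omega)
          have hkey : seg H1 P j 0 i * seg H2 P j i (L P j - 1) =
              seg H2 P j 0 i * seg H2 P j i (L P j - 1) := by
            rw [← e1, ← hsplit1, fullEq j, hsplit2, e1]
          exact mul_right_cancel₀ (hnz j i (L P j - 1) (by omega) (le_refl _)) hkey
        · have hMv := hM _ hC 0 hB0
          rwa [entry_col0 h hc1 _, entry_col0 h hc2 _,
            col0_ne h H1 (w_ne_last h j hi2), col0_ne h H2 (w_ne_last h j hi2),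
            q0_w h H1 hi2, q0_w h H2 hi2] at hMv
  -- Step E: entries agree
  ext i k
  by_cases hE : (k, i) ∈ E
  · rcases (edge_iff h k i).mp hE with ⟨j, i0, hi0, hk, hiw⟩
    subst hk; subst hiw
    have p1 : seg H1 P j 0 i0 = seg H2 P j 0 i0 := prefixEq j i0 (by omega)
    have p2 : seg H1 P j 0 (i0 + 1) = seg H2 P j 0 (i0 + 1) := prefixEq j (i0 + 1) (by omega)
    have hnz0 : seg H2 P j 0 i0 ≠ 0 := hnz j 0 i0 (Nat.zero_le _) (by omega)
    have s1 : seg H1 P j 0 (i0 + 1) = seg H1 P j 0 i0 * H1 (w P j (i0 + 1)) (w P j i0) :=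
      seg_succ H1 j (Nat.zero_le _)
    have s2 : seg H2 P j 0 (i0 + 1) = seg H2 P j 0 i0 * H2 (w P j (i0 + 1)) (w P j i0) :=
      seg_succ H2 j (Nat.zero_le _)
    have hkey : seg H2 P j 0 i0 * H1 (w P j (i0 + 1)) (w P j i0) =
        seg H2 P j 0 i0 * H2 (w P j (i0 + 1)) (w P j i0) := by
      calc seg H2 P j 0 i0 * H1 (w P j (i0 + 1)) (w P j i0)
          = seg H1 P j 0 i0 * H1 (w P j (i0 + 1)) (w P j i0) := by rw [p1]
        _ = seg H1 P j 0 (i0 + 1) := s1.symm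
        _ = seg H2 P j 0 (i0 + 1) := p2
        _ = seg H2 P j 0 i0 * H2 (w P j (i0 + 1)) (w P j i0) := s2
    exact mul_left_cancel₀ hnz0 hkey
  · rw [hc1 i k hE, hc2 i k hE]

end Recover

section Modif
variable {F : Type*} [Field F]
variable (h : IsPPN m E np P)
set_option linter.unusedSectionVars false

/-- the matrix obtained by replacing the weight of the `r`-th edge of path `js` by `val` -/
def modif (G' : Matrix (Fin (m + 2)) (Fin (m + 2)) F) (P : Fin np → List (Fin (m + 2)))
    (js : Fin np) (r : ℕ) (val : F) : Matrix (Fin (m + 2)) (Fin (m + 2)) F := fun i k =>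
  if k = w P js r ∧ i = w P js (r + 1) then val else G' i k

include h

lemma seg_one (H : Matrix (Fin (m + 2)) (Fin (m + 2)) F) (j : Fin np) (x : ℕ) :
    seg H P j x (x + 1) = H (w P j (x + 1)) (w P j x) := by
  rw [seg_succ H j (le_refl x), seg_same, one_mul]

lemma edge_unique {j j' : Fin np} {k r : ℕ} (hk : k + 1 < L P j) (hr : r + 1 < L P j')
    (h1 : w P j k = w P j' r) (h2 : w P j (k + 1) = w P j' (r + 1)) : j = j' ∧ k = r := by
  by_cases hvt : w P j (k + 1) = Fin.last (m + 1)
  · have hk1 : k + 1 = L P j - 1 := by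
      have := w_inj h j (i := k + 1) (i' := L P j - 1) (by omega) (by omega)
        (by rw [hvt, w_last h j])
      omega
    have hvt' : w P j' (r + 1) = Fin.last (m + 1) := by rw [← h2]; exact hvt
    have hr1 : r + 1 = L P j' - 1 := by
      have := w_inj h j' (i := r + 1) (i' := L P j' - 1) (by omega) (by omega)
        (by rw [hvt', w_last h j'])
      omega
    have hjj : j = j' := by
      apply pen_inj h
      rw [show L P j - 2 = k by omega, show L P j' - 2 = r by omega]
      exact h1
    subst hjj
    exact ⟨rfl, by omega⟩
  · have hv0 : w P j (k + 1) ≠ 0 := w_ne_zero h j (by omega) (by omega)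
    have hjj : j = j' :=
      internal_unique h hv0 hvt (w_mem h j (by omega)) (by rw [h2]; exact w_mem h j' hr)
    subst hjj
    exact ⟨rfl, by have := w_inj h j (by omega) (by omega) h2; omega⟩

lemma modif_apply_ne (G' : Matrix (Fin (m + 2)) (Fin (m + 2)) F) {js : Fin np} {r : ℕ}
    (val : F) (hr : r + 1 < L P js) {j : Fin np} {k : ℕ} (hk : k + 1 < L P j)
    (hne : j ≠ js ∨ k ≠ r) :
    modif G' P js r val (w P j (k + 1)) (w P j k) = G' (w P j (k + 1)) (w P j k) := by
  have : modif G' P js r val (w P j (k + 1)) (w P j k) =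
      if w P j k = w P js r ∧ w P j (k + 1) = w P js (r + 1) then val
      else G' (w P j (k + 1)) (w P j k) := rfl
  rw [this, if_neg]
  rintro ⟨h1, h2⟩
  obtain ⟨hj, hk'⟩ := edge_unique h hk hr h1 h2
  rcases hne with hne | hne
  · exact hne hj
  · exact hne hk'

omit h in
lemma modif_apply_self (G' : Matrix (Fin (m + 2)) (Fin (m + 2)) F) (js : Fin np) (r : ℕ)
    (val : F) :
    modif G' P js r val (w P js (r + 1)) (w P js r) = val := if_pos ⟨rfl, rfl⟩

lemma modif_consistent {G' : Matrix (Fin (m + 2)) (Fin (m + 2)) F} (hc : Consistent E G')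
    {js : Fin np} {r : ℕ} (val : F) (hr : r + 1 < L P js) :
    Consistent E (modif G' P js r val) := by
  intro i k hE
  show (if k = w P js r ∧ i = w P js (r + 1) then val else G' i k) = 0
  split_ifs with hcond
  · exfalso
    obtain ⟨rfl, rfl⟩ := hcond
    exact hE (edge_w h js hr)
  · exact hc i k hE

omit h in
lemma modif_ne {G' : Matrix (Fin (m + 2)) (Fin (m + 2)) F} {js : Fin np} {r : ℕ} {val : F}
    (hval : val ≠ G' (w P js (r + 1)) (w P js r)) : modif G' P js r val ≠ G' := by
  intro hEq
  apply hval
  rw [← modif_apply_self (P := P) G' js r val, hEq]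

omit h in
lemma seg_congr {H1 H2 : Matrix (Fin (m + 2)) (Fin (m + 2)) F} (j : Fin np) {a b' : ℕ}
    (hk : ∀ k, a ≤ k → k < b' →
      H1 (w P j (k + 1)) (w P j k) = H2 (w P j (k + 1)) (w P j k)) :
    seg H1 P j a b' = seg H2 P j a b' := by
  apply Finset.prod_congr rfl
  intro k hkm
  rw [Finset.mem_Ico] at hkm
  exact hk k hkm.1 hkm.2

lemma seg_pair {H1 H2 : Matrix (Fin (m + 2)) (Fin (m + 2)) F} (j : Fin np) {a b' i1 : ℕ}
    (ha : a ≤ i1) (hb : i1 + 2 ≤ b')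
    (hoff : ∀ k, a ≤ k → k < b' → k ≠ i1 → k ≠ i1 + 1 →
      H1 (w P j (k + 1)) (w P j k) = H2 (w P j (k + 1)) (w P j k))
    (hpair : H1 (w P j (i1 + 1)) (w P j i1) * H1 (w P j (i1 + 2)) (w P j (i1 + 1)) =
      H2 (w P j (i1 + 1)) (w P j i1) * H2 (w P j (i1 + 2)) (w P j (i1 + 1))) :
    seg H1 P j a b' = seg H2 P j a b' := by
  have dec : ∀ H : Matrix (Fin (m + 2)) (Fin (m + 2)) F, seg H P j a b' =
      seg H P j a i1 * (H (w P j (i1 + 1)) (w P j i1) * H (w P j (i1 + 2)) (w P j (i1 + 1))) *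
        seg H P j (i1 + 2) b' := by
    intro H
    have s1 : seg H P j a b' = seg H P j a i1 * seg H P j i1 b' := seg_split h H j ha (by omega)
    have s2 : seg H P j i1 b' = seg H P j i1 (i1 + 2) * seg H P j (i1 + 2) b' :=
      seg_split h H j (by omega) hb
    have s3 : seg H P j i1 (i1 + 2) = seg H P j i1 (i1 + 1) *
        H (w P j (i1 + 2)) (w P j (i1 + 1)) := seg_succ H j (by omega)
    rw [s1, s2, s3, seg_one h H j i1]
    ring
  rw [dec H1, dec H2, hpair,
    seg_congr (P := P) j (fun k hk1 hk2 => hoff k hk1 (by omega) (by omega) (by omega)),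
    seg_congr (P := P) j (fun k hk1 hk2 => hoff k (by omega) hk2 (by omega) (by omega))]

lemma full_modif {G' : Matrix (Fin (m + 2)) (Fin (m + 2)) F} {js : Fin np} {r : ℕ} (val : F)
    (hr : r + 1 < L P js) :
    full (modif G' P js r val) P js =
      seg G' P js 0 r * val * seg G' P js (r + 1) (L P js - 1) := by
  have s1 : full (modif G' P js r val) P js = seg (modif G' P js r val) P js 0 r *
      seg (modif G' P js r val) P js r (r + 1) * seg (modif G' P js r val) P js (r + 1) (L P js - 1) := by
    unfold full
    rw [← seg_split h _ js (by omega) (by omega), ← seg_split h _ js (by omega) (by omega)]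
  rw [s1, seg_one h _ js r, modif_apply_self (P := P)]
  congr 1
  · congr 1
    exact seg_congr (P := P) js (fun k h1 h2 => modif_apply_ne h G' val hr (by omega) (Or.inr (by omega)))
  · exact seg_congr (P := P) js (fun k h1 h2 => modif_apply_ne h G' val hr (by omega) (Or.inr (by omega)))

/-- comparing the relevant inverse entries of two consistent matrices -/
lemma inv_entries_eq {H1 H2 : Matrix (Fin (m + 2)) (Fin (m + 2)) F}
    (hc1 : Consistent E H1) (hc2 : Consistent E H2) {B C : Finset (Fin (m + 2))}
    (h00 : (0 : Fin (m + 2)) ∈ B → ∀ c ∈ C, c ≠ Fin.last (m + 1) → q0 h H1 c = q0 h H2 c)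
    (h0t : (0 : Fin (m + 2)) ∈ B → Fin.last (m + 1) ∈ C →
      ∑ j, full H1 P j = ∑ j, full H2 P j)
    (hbc : ∀ (j : Fin np) (a : ℕ), 1 ≤ a → a < L P j - 1 → w P j a ∈ B →
      ∀ c ∈ C, c ≠ Fin.last (m + 1) → qb H1 P j a c = qb H2 P j a c)
    (hbt : ∀ (j : Fin np) (a : ℕ), 1 ≤ a → a < L P j - 1 → w P j a ∈ B →
      Fin.last (m + 1) ∈ C →
      seg H1 P j a (L P j - 1) = seg H2 P j a (L P j - 1)) :
    ∀ c ∈ C, ∀ b ∈ B, (1 - H1)⁻¹ c b = (1 - H2)⁻¹ c b := by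
  intro c hC b hB
  by_cases hb0 : b = 0
  · subst hb0
    by_cases hct : c = Fin.last (m + 1)
    · subst hct
      rw [entry_sink0 h hc1, entry_sink0 h hc2]
      exact h0t hB hC
    · rw [entry_col0 h hc1 c, entry_col0 h hc2 c, col0_ne h H1 hct, col0_ne h H2 hct]
      exact h00 hB c hC hct
  · by_cases hbl : b = Fin.last (m + 1)
    · subst hbl
      rw [entry_sink_col h hc1 c, entry_sink_col h hc2 c]
    · obtain ⟨ha1, ha2, hwa⟩ := internal_idx h (mem_pathOf h b) hb0 hbl
      rw [← hwa]
      have hwB : w P (pathOf h b) ((P (pathOf h b)).idxOf b) ∈ B := by rw [hwa]; exact hB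
      by_cases hct : c = Fin.last (m + 1)
      · subst hct
        rw [entry_sinkb h hc1 ha1 ha2, entry_sinkb h hc2 ha1 ha2]
        exact hbt _ _ ha1 ha2 hwB hC
      · rw [entry_colb h hc1 ha1 ha2 c, entry_colb h hc2 ha1 ha2 c,
          colb_ne H1 _ _ hct, colb_ne H2 _ _ hct]
        exact hbc _ _ ha1 ha2 hwB c hC hct

end Modif

section Necessity
variable {F : Type*} [Field F]
variable (h : IsPPN m E np P)
set_option linter.unusedSectionVars false
include h

lemma q0_def (H : Matrix (Fin (m + 2)) (Fin (m + 2)) F) (c : Fin (m + 2)) :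
    q0 h H c = seg H P (pathOf h c) 0 ((P (pathOf h c)).idxOf c) := rfl

omit h in
lemma qb_congr {H1 H2 : Matrix (Fin (m + 2)) (Fin (m + 2)) F} (j : Fin np) (a : ℕ)
    (c : Fin (m + 2))
    (hseg : c ∈ P j → a ≤ (P j).idxOf c → (P j).idxOf c < L P j - 1 →
      seg H1 P j a ((P j).idxOf c) = seg H2 P j a ((P j).idxOf c)) :
    qb H1 P j a c = qb H2 P j a c := by
  show (if _ ∧ _ ∧ _ then _ else _) = (if _ ∧ _ ∧ _ then _ else _)
  split_ifs with hcond
  · exact hseg hcond.1 hcond.2.1 hcond.2.2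
  · rfl

lemma idx_lt_of_ne_last {j : Fin np} {c : Fin (m + 2)} (hc : c ∈ P j)
    (hct : c ≠ Fin.last (m + 1)) : (P j).idxOf c < L P j - 1 := by
  have h1 : (P j).idxOf c < L P j := idx_lt h j hc
  have h2 : (P j).idxOf c ≠ L P j - 1 := by
    intro hcon
    apply hct
    rw [← w_idx h j hc, hcon, w_last h j]
  omega

/-- modifying the first edge of a path does not change entries in columns other than the
source column -/
lemma modif_first_entries {G' : Matrix (Fin (m + 2)) (Fin (m + 2)) F} (hc : Consistent E G')
    {B C : Finset (Fin (m + 2))} (hB0 : (0 : Fin (m + 2)) ∉ B) (js : Fin np) (val : F) :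
    ∀ c ∈ C, ∀ b ∈ B, (1 - modif G' P js 0 val)⁻¹ c b = (1 - G')⁻¹ c b := by
  have h2 := two_le_L h js
  have hr : 0 + 1 < L P js := by omega
  apply inv_entries_eq h (modif_consistent h hc val hr) hc
  · intro hB; exact absurd hB hB0
  · intro hB; exact absurd hB hB0
  · intro j a ha1 ha2 hwB c hC hct
    apply qb_congr (P := P) j a c
    intro hmem hle hlt
    exact seg_congr (P := P) j (fun k h1 h2' =>
      modif_apply_ne h G' val hr (by omega) (Or.inr (by omega)))
  · intro j a ha1 ha2 hwB htC
    exact seg_congr (P := P) j (fun k h1 h2' =>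
      modif_apply_ne h G' val hr (by omega) (Or.inr (by omega)))

/-- modifying the last edge of a path does not change entries in rows other than the
sink row -/
lemma modif_last_entries {G' : Matrix (Fin (m + 2)) (Fin (m + 2)) F} (hc : Consistent E G')
    {B C : Finset (Fin (m + 2))} (htC : Fin.last (m + 1) ∉ C) (js : Fin np) (val : F) :
    ∀ c ∈ C, ∀ b ∈ B, (1 - modif G' P js (L P js - 2) val)⁻¹ c b = (1 - G')⁻¹ c b := by
  have h2 := two_le_L h js
  have hr : (L P js - 2) + 1 < L P js := by omega
  apply inv_entries_eq h (modif_consistent h hc val hr) hc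
  · intro _ c hC hct
    rw [q0_def h, q0_def h]
    have hmem : c ∈ P (pathOf h c) := mem_pathOf h c
    have hlt : (P (pathOf h c)).idxOf c < L P (pathOf h c) - 1 := idx_lt_of_ne_last h hmem hct
    exact seg_congr (P := P) (pathOf h c) (fun k h1 h2' => by
      apply modif_apply_ne h G' val hr (by omega)
      by_cases hpq : pathOf h c = js
      · right
        rw [hpq] at h2' hlt
        omega
      · exact Or.inl hpq)
  · intro _ hcon; exact absurd hcon htC
  · intro j a ha1 ha2 hwB c hC hct
    apply qb_congr (P := P) j a c
    intro hmem hle hlt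
    exact seg_congr (P := P) j (fun k h1 h2' => by
      apply modif_apply_ne h G' val hr (by omega)
      by_cases hpq : j = js
      · subst hpq; right; omega
      · exact Or.inl hpq)
  · intro j a ha1 ha2 hwB hcon
    exact absurd hcon htC

/-- scaling the in- and out-edge of an unobserved internal node, preserving the product -/
lemma modif_pair_entries {G' : Matrix (Fin (m + 2)) (Fin (m + 2)) F} (hc : Consistent E G')
    {B C : Finset (Fin (m + 2))} {j0 : Fin np} {i1 : ℕ} (hi1 : i1 + 2 < L P j0)
    (hv0B : w P j0 (i1 + 1) ∉ B) (hv0C : w P j0 (i1 + 1) ∉ C) {val1 val2 : F}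
    (hprod : val1 * val2 =
      G' (w P j0 (i1 + 1)) (w P j0 i1) * G' (w P j0 (i1 + 2)) (w P j0 (i1 + 1))) :
    ∀ c ∈ C, ∀ b ∈ B,
      (1 - modif (modif G' P j0 i1 val1) P j0 (i1 + 1) val2)⁻¹ c b = (1 - G')⁻¹ c b := by
  set Gm := modif (modif G' P j0 i1 val1) P j0 (i1 + 1) val2 with hGm
  have hr1 : i1 + 1 < L P j0 := by omega
  have hr2 : (i1 + 1) + 1 < L P j0 := by omega
  have hcm : Consistent E Gm := modif_consistent h (modif_consistent h hc val1 hr1) val2 hr2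
  -- entries of Gm off the two modified edges
  have hGm_ne : ∀ (j : Fin np) (k : ℕ), k + 1 < L P j → (j ≠ j0 ∨ (k ≠ i1 ∧ k ≠ i1 + 1)) →
      Gm (w P j (k + 1)) (w P j k) = G' (w P j (k + 1)) (w P j k) := by
    intro j k hk hne
    have o1 : Gm (w P j (k + 1)) (w P j k) = (modif G' P j0 i1 val1) (w P j (k + 1)) (w P j k) :=
      modif_apply_ne h _ val2 hr2 hk (by tauto)
    rw [o1]
    exact modif_apply_ne h G' val1 hr1 hk (by tauto)
  have hGm_pair : Gm (w P j0 (i1 + 1)) (w P j0 i1) * Gm (w P j0 (i1 + 2)) (w P j0 (i1 + 1)) =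
      G' (w P j0 (i1 + 1)) (w P j0 i1) * G' (w P j0 (i1 + 2)) (w P j0 (i1 + 1)) := by
    have e1 : Gm (w P j0 (i1 + 1)) (w P j0 i1) = val1 := by
      have o1 : Gm (w P j0 (i1 + 1)) (w P j0 i1) =
          (modif G' P j0 i1 val1) (w P j0 (i1 + 1)) (w P j0 i1) :=
        modif_apply_ne h _ val2 hr2 hr1 (Or.inr (by omega))
      rw [o1]
      exact modif_apply_self (P := P) G' j0 i1 val1
    have e2 : Gm (w P j0 (i1 + 2)) (w P j0 (i1 + 1)) = val2 :=
      modif_apply_self (P := P) _ j0 (i1 + 1) val2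
    rw [e1, e2, hprod]
  -- generic segment equality
  have hseg : ∀ (j : Fin np) (a b' : ℕ), b' ≤ L P j - 1 → (j = j0 → a ≠ i1 + 1) →
      (j = j0 → b' ≠ i1 + 1) → seg Gm P j a b' = seg G' P j a b' := by
    intro j a b' hb' hane hbne
    by_cases hj : j = j0
    · subst hj
      by_cases hcase : a ≤ i1 ∧ i1 + 2 ≤ b'
      · refine seg_pair h (P := P) j (by omega) (by omega) ?_ hGm_pair
        intro k h1 h2' h3 h4
        exact hGm_ne j k (by omega) (Or.inr ⟨h3, by omega⟩)
      · refine seg_congr (P := P) j (fun k h1 h2' => ?_)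
        refine hGm_ne j k (by omega) (Or.inr ⟨?_, ?_⟩)
        · intro hcon
          apply hcase
          constructor <;> [omega; (have := hbne rfl; omega)]
        · intro hcon
          apply hcase
          constructor <;> [ (have := hane rfl; omega); omega]
    · exact seg_congr (P := P) j (fun k h1 h2' => hGm_ne j k (by omega) (Or.inl hj))
  apply inv_entries_eq h hcm hc
  · intro _ c hC hct
    rw [q0_def h, q0_def h]
    have hmem : c ∈ P (pathOf h c) := mem_pathOf h c
    have hlt : (P (pathOf h c)).idxOf c < L P (pathOf h c) - 1 := idx_lt_of_ne_last h hmem hct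
    have hwc := w_idx h (pathOf h c) hmem
    refine hseg (pathOf h c) 0 _ (by omega) (fun _ => by omega) (fun hj hcon => ?_)
    apply hv0C
    rw [hcon] at hwc
    rw [hj] at hwc
    rw [hwc]; exact hC
  · intro _ _
    apply Finset.sum_congr rfl
    intro j _
    unfold full
    refine hseg j 0 (L P j - 1) (le_refl _) (fun _ => by omega) (fun hj => by subst hj; omega)
  · intro j a ha1 ha2 hwB c hC hct
    have hane : j = j0 → a ≠ i1 + 1 := by
      intro hj hcon
      apply hv0B
      rw [← hcon, ← hj]
      exact hwB
    apply qb_congr (P := P) j a c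
    intro hmem hle hlt
    refine hseg j a _ (by omega) hane (fun hj hcon => ?_)
    apply hv0C
    have hwc := w_idx h j hmem
    rw [hcon] at hwc
    rw [hj] at hwc
    rw [hwc]; exact hC
  · intro j a ha1 ha2 hwB _
    have hane : j = j0 → a ≠ i1 + 1 := by
      intro hj hcon
      apply hv0B
      rw [← hcon, ← hj]
      exact hwB
    exact hseg j a (L P j - 1) (le_refl _) hane (fun hj => by subst hj; omega)

/-- decomposition of a full path weight at one edge -/
lemma full_decomp (G' : Matrix (Fin (m + 2)) (Fin (m + 2)) F) {js : Fin np} {r : ℕ}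
    (hr : r + 1 < L P js) :
    full G' P js = seg G' P js 0 r * G' (w P js (r + 1)) (w P js r) *
      seg G' P js (r + 1) (L P js - 1) := by
  unfold full
  rw [← seg_one h G' js r, ← seg_split h G' js (by omega) (by omega),
    ← seg_split h G' js (by omega) (by omega)]

/-- rescaling one edge on each of two "bad" paths, preserving the total weight -/
lemma modif_two_entries {G' : Matrix (Fin (m + 2)) (Fin (m + 2)) F} (hc : Consistent E G')
    {B C : Finset (Fin (m + 2))} {p q : Fin np} (hpq : p ≠ q) {rp rq : ℕ}
    (hrp : rp + 1 < L P p) (hrq : rq + 1 < L P q)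
    (hCp : ∀ i, 1 ≤ i → i < L P p - 1 → w P p i ∈ C → i ≤ rp)
    (hBp : ∀ i, 1 ≤ i → i < L P p - 1 → w P p i ∈ B → rp < i)
    (hCq : ∀ i, 1 ≤ i → i < L P q - 1 → w P q i ∈ C → i ≤ rq)
    (hBq : ∀ i, 1 ≤ i → i < L P q - 1 → w P q i ∈ B → rq < i)
    {valp valq : F}
    (hsum : seg G' P p 0 rp * valp * seg G' P p (rp + 1) (L P p - 1) +
        seg G' P q 0 rq * valq * seg G' P q (rq + 1) (L P q - 1) =
      full G' P p + full G' P q) :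
    ∀ c ∈ C, ∀ b ∈ B,
      (1 - modif (modif G' P p rp valp) P q rq valq)⁻¹ c b = (1 - G')⁻¹ c b := by
  set Gm := modif (modif G' P p rp valp) P q rq valq with hGm
  have hcm : Consistent E Gm := modif_consistent h (modif_consistent h hc valp hrp) valq hrq
  have hGm_ne : ∀ (j : Fin np) (k : ℕ), k + 1 < L P j → (j ≠ p ∨ k ≠ rp) → (j ≠ q ∨ k ≠ rq) →
      Gm (w P j (k + 1)) (w P j k) = G' (w P j (k + 1)) (w P j k) := by
    intro j k hk hnep hneq
    have o1 : Gm (w P j (k + 1)) (w P j k) = (modif G' P p rp valp) (w P j (k + 1)) (w P j k) :=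
      modif_apply_ne h _ valq hrq hk hneq
    rw [o1]
    exact modif_apply_ne h G' valp hrp hk hnep
  -- prefix segments (up to C-indices) and suffix segments (from B-indices) are unchanged
  have hfullGm_p : full Gm P p = seg G' P p 0 rp * valp * seg G' P p (rp + 1) (L P p - 1) := by
    rw [full_decomp h Gm hrp]
    have e1 : Gm (w P p (rp + 1)) (w P p rp) = valp := by
      have o1 : Gm (w P p (rp + 1)) (w P p rp) =
          (modif G' P p rp valp) (w P p (rp + 1)) (w P p rp) :=
        modif_apply_ne h _ valq hrq hrp (Or.inl hpq)
      rw [o1]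
      exact modif_apply_self (P := P) G' p rp valp
    rw [e1]
    congr 1
    · congr 1
      exact seg_congr (P := P) p (fun k h1 h2' =>
        hGm_ne p k (by omega) (Or.inr (by omega)) (Or.inl hpq))
    · exact seg_congr (P := P) p (fun k h1 h2' =>
        hGm_ne p k (by omega) (Or.inr (by omega)) (Or.inl hpq))
  have hfullGm_q : full Gm P q = seg G' P q 0 rq * valq * seg G' P q (rq + 1) (L P q - 1) := by
    rw [full_decomp h Gm hrq]
    have e1 : Gm (w P q (rq + 1)) (w P q rq) = valq :=
      modif_apply_self (P := P) _ q rq valq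
    rw [e1]
    congr 1
    · congr 1
      exact seg_congr (P := P) q (fun k h1 h2' =>
        hGm_ne q k (by omega) (Or.inl (fun hcon => hpq hcon.symm)) (Or.inr (by omega)))
    · exact seg_congr (P := P) q (fun k h1 h2' =>
        hGm_ne q k (by omega) (Or.inl (fun hcon => hpq hcon.symm)) (Or.inr (by omega)))
  have hfull_off : ∀ j, j ≠ p → j ≠ q → full Gm P j = full G' P j := by
    intro j hjp hjq
    exact seg_congr (P := P) j (fun k h1 h2' =>
      hGm_ne j k (by omega) (Or.inl hjp) (Or.inl hjq))
  apply inv_entries_eq h hcm hc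
  · intro _ c hC hct
    rw [q0_def h, q0_def h]
    have hmem : c ∈ P (pathOf h c) := mem_pathOf h c
    have hlt : (P (pathOf h c)).idxOf c < L P (pathOf h c) - 1 := idx_lt_of_ne_last h hmem hct
    have hwc : w P (pathOf h c) ((P (pathOf h c)).idxOf c) = c := w_idx h _ hmem
    set ic := (P (pathOf h c)).idxOf c with hic
    by_cases hc0 : c = 0
    · have hz : ic = 0 := by rw [hic, hc0]; exact idx_zero h _
      rw [hz, seg_same, seg_same]
    · have hge1 : 1 ≤ ic := by
        rcases Nat.eq_zero_or_pos ic with h0 | h0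
        · exfalso; apply hc0; rw [← hwc, h0, w_zero h _]
        · exact h0
      refine seg_congr (P := P) _ (fun k h1 h2' => ?_)
      refine hGm_ne _ k (by omega) ?_ ?_
      · by_cases hjp : pathOf h c = p
        · right
          rw [hjp] at hwc hlt
          have := hCp ic hge1 hlt (by rw [hwc]; exact hC)
          omega
        · exact Or.inl hjp
      · by_cases hjq : pathOf h c = q
        · right
          rw [hjq] at hwc hlt
          have := hCq ic hge1 hlt (by rw [hwc]; exact hC)
          omega
        · exact Or.inl hjq
  · intro _ _
    have hzero : ∑ j, (full Gm P j - full G' P j) = 0 := by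
      have hsub : ∑ j, (full Gm P j - full G' P j) =
          ∑ j ∈ ({p, q} : Finset (Fin np)), (full Gm P j - full G' P j) := by
        symm
        apply Finset.sum_subset (Finset.subset_univ _)
        intro j _ hj
        rw [Finset.mem_insert, Finset.mem_singleton] at hj
        push_neg at hj
        rw [hfull_off j hj.1 hj.2, sub_self]
      rw [hsub, Finset.sum_pair hpq, hfullGm_p, hfullGm_q]
      linear_combination hsum
    rw [Finset.sum_sub_distrib] at hzero
    exact sub_eq_zero.mp hzero
  · intro j a ha1 ha2 hwB c hC hct
    apply qb_congr (P := P) j a c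
    intro hmem hle hlt
    refine seg_congr (P := P) j (fun k h1 h2' => ?_)
    refine hGm_ne j k (by omega) ?_ ?_
    · by_cases hjp : j = p
      · subst hjp
        right
        have := hBp a ha1 ha2 hwB
        omega
      · exact Or.inl hjp
    · by_cases hjq : j = q
      · subst hjq
        right
        have := hBq a ha1 ha2 hwB
        omega
      · exact Or.inl hjq
  · intro j a ha1 ha2 hwB _
    refine seg_congr (P := P) j (fun k h1 h2' => ?_)
    refine hGm_ne j k (by omega) ?_ ?_
    · by_cases hjp : j = p
      · subst hjp
        right
        have := hBp a ha1 ha2 hwB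
        omega
      · exact Or.inl hjp
    · by_cases hjq : j = q
      · subst hjq
        right
        have := hBq a ha1 ha2 hwB
        omega
      · exact Or.inl hjq

end Necessity


section Generic
variable (K : Type*) [Field K]
variable (h : IsPPN m E np P)
set_option linter.unusedSectionVars false

omit h in
lemma generic_consistent : Consistent E (genericG K E) := fun _ k hE => dif_neg hE

omit h in
lemma generic_edge_eq {i k : Fin (m + 2)} (hE : (k, i) ∈ E) :
    genericG K E i k = algebraMap (MvPolynomial ↥E K) (EdgeField K E)
      (MvPolynomial.X (⟨(k, i), hE⟩ : ↥E)) := dif_pos hE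

omit h in
lemma generic_ne_zero {i k : Fin (m + 2)} (hE : (k, i) ∈ E) : genericG K E i k ≠ 0 := by
  rw [generic_edge_eq K hE]
  rw [map_ne_zero_iff _ (IsFractionRing.injective (MvPolynomial ↥E K) (EdgeField K E))]
  exact MvPolynomial.X_ne_zero _

omit h in
lemma generic_ne_one {i k : Fin (m + 2)} (hE : (k, i) ∈ E) : genericG K E i k ≠ 1 := by
  rw [generic_edge_eq K hE]
  intro hcon
  rw [← _root_.map_one (algebraMap (MvPolynomial ↥E K) (EdgeField K E))] at hcon
  have heq := IsFractionRing.injective (MvPolynomial ↥E K) (EdgeField K E) hcon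
  have hc := congrArg MvPolynomial.constantCoeff heq
  rw [MvPolynomial.constantCoeff_X, _root_.map_one] at hc
  exact zero_ne_one hc

include h
lemma generic_seg_ne_zero (j : Fin np) (a b' : ℕ) (hb : b' ≤ L P j - 1) :
    seg (genericG K E) P j a b' ≠ 0 := by
  rw [seg, Finset.prod_ne_zero_iff]
  intro k hk
  rw [Finset.mem_Ico] at hk
  have h2 := two_le_L h j
  exact generic_ne_zero K (edge_w h j (by omega))

omit h in
lemma bad_path_bound' : True := trivial

end Generic

section BadPath
variable {F : Type*} [Field F]
variable (h : IsPPN m E np P)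
set_option linter.unusedSectionVars false
include h

lemma bad_path_bound {B C : Finset (Fin (m + 2))} {p : Fin np}
    (hbad : ¬ ∃ u v : Fin (m + 2), (u ∈ P p ∧ u ≠ 0 ∧ u ≠ Fin.last (m + 1)) ∧
      (v ∈ P p ∧ v ≠ 0 ∧ v ≠ Fin.last (m + 1)) ∧
      (P p).idxOf u ≤ (P p).idxOf v ∧ u ∈ B ∧ v ∈ C) :
    ∃ rp : ℕ, rp + 1 < L P p ∧ (∀ i, 1 ≤ i → i < L P p - 1 → w P p i ∈ C → i ≤ rp) ∧
      (∀ i, 1 ≤ i → i < L P p - 1 → w P p i ∈ B → rp < i) := by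
  classical
  set S := (Finset.range (L P p)).filter
    (fun i => 1 ≤ i ∧ i < L P p - 1 ∧ w P p i ∈ C) with hS
  have h2 := two_le_L h p
  refine ⟨S.sup id, ?_, ?_, ?_⟩
  · have hbound : S.sup id ≤ L P p - 2 := by
      apply Finset.sup_le
      intro i hi
      rw [hS, Finset.mem_filter] at hi
      have := hi.2.2.1
      show i ≤ L P p - 2
      omega
    omega
  · intro i h1 hi2 hiC
    apply Finset.le_sup (f := id)
    rw [hS, Finset.mem_filter]
    exact ⟨Finset.mem_range.mpr (by omega), h1, hi2, hiC⟩
  · intro i h1 hi2 hiB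
    by_contra hle
    push_neg at hle
    have hSne : S.Nonempty := by
      by_contra hempty
      rw [Finset.not_nonempty_iff_eq_empty] at hempty
      rw [hempty] at hle
      simp only [Finset.sup_empty, Nat.bot_eq_zero] at hle
      omega
    obtain ⟨r0, hr0S, hr0⟩ := Finset.exists_mem_eq_sup S hSne id
    rw [hS, Finset.mem_filter] at hr0S
    obtain ⟨-, hr01, hr02, hr0C⟩ := hr0S
    apply hbad
    refine ⟨w P p i, w P p r0,
      ⟨w_mem h p (by omega), w_ne_zero h p h1 (by omega), w_ne_last h p hi2⟩,
      ⟨w_mem h p (by omega), w_ne_zero h p hr01 (by omega), w_ne_last h p hr02⟩,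
      ?_, hiB, hr0C⟩
    rw [idx_w h p (by omega), idx_w h p (by omega)]
    have : S.sup id = r0 := hr0
    omega

end BadPath

end S7

theorem statement7 (K : Type*) [Field K] [Infinite K] (m np : ℕ)
    (E : Finset (Fin (m + 2) × Fin (m + 2))) (P : Fin np → List (Fin (m + 2)))
    (hPPN : IsPPN m E np P) (B C : Finset (Fin (m + 2))) :
    GenIdentifiable K E B C ↔
      ((0 : Fin (m + 2)) ∈ B ∧ Fin.last (m + 1) ∈ C ∧ B ∪ C = Finset.univ ∧
        ∃ J : Finset (Fin np), np - 1 ≤ J.card ∧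
          ∀ j ∈ J, ∃ u v : Fin (m + 2), Internal m P j u ∧ Internal m P j v ∧
            (P j).idxOf u ≤ (P j).idxOf v ∧ u ∈ B ∧ v ∈ C) := by
  classical
  have h := hPPN
  constructor
  · intro hid
    have hcG : Consistent E (genericG K E) := S7.generic_consistent K
    have hnp : 0 < np := by have := h.two_le; omega
    have key0 : (0 : Fin (m + 2)) ∈ B := by
      by_contra hB0
      set js : Fin np := ⟨0, hnp⟩
      have hr : 0 + 1 < S7.L P js := by have := S7.two_le_L h js; omega
      set val := genericG K E (S7.w P js (0 + 1)) (S7.w P js 0) + 1 with hval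
      have hconsm : Consistent E (S7.modif (genericG K E) P js 0 val) :=
        S7.modif_consistent h hcG val hr
      have hMMeq : MMat (S7.modif (genericG K E) P js 0 val) C B =
          MMat (genericG K E) C B := by
        unfold MMat
        funext c b
        exact S7.modif_first_entries h hcG hB0 js val c.1 c.2 b.1 b.2
      have hGm := hid _ hconsm (S7.consistent_isUnit_det h hconsm) hMMeq
      exact S7.modif_ne (P := P)
        (fun hcon => one_ne_zero (add_eq_left.mp hcon)) hGm
    have key2 : Fin.last (m + 1) ∈ C := by
      by_contra htC
      set js : Fin np := ⟨0, hnp⟩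
      have h2 := S7.two_le_L h js
      have hr : (S7.L P js - 2) + 1 < S7.L P js := by omega
      set val := genericG K E (S7.w P js (S7.L P js - 2 + 1)) (S7.w P js (S7.L P js - 2)) + 1
        with hval
      have hconsm : Consistent E (S7.modif (genericG K E) P js (S7.L P js - 2) val) :=
        S7.modif_consistent h hcG val hr
      have hMMeq : MMat (S7.modif (genericG K E) P js (S7.L P js - 2) val) C B =
          MMat (genericG K E) C B := by
        unfold MMat
        funext c b
        exact S7.modif_last_entries h hcG htC js val c.1 c.2 b.1 b.2
      have hGm := hid _ hconsm (S7.consistent_isUnit_det h hconsm) hMMeq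
      exact S7.modif_ne (P := P)
        (fun hcon => one_ne_zero (add_eq_left.mp hcon)) hGm
    have key3 : B ∪ C = Finset.univ := by
      by_contra hU
      obtain ⟨v, hv⟩ : ∃ v, v ∉ B ∪ C := by
        by_contra hall
        push_neg at hall
        exact hU (Finset.eq_univ_iff_forall.mpr hall)
      rw [Finset.mem_union] at hv
      push_neg at hv
      obtain ⟨hvB, hvC⟩ := hv
      have hv0 : v ≠ 0 := fun hcon => hvB (hcon ▸ key0)
      have hvt : v ≠ Fin.last (m + 1) := fun hcon => hvC (hcon ▸ key2)
      obtain ⟨j0, i1, hi1, hvw⟩ := S7.int_repr h hv0 hvt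
      set val2 := genericG K E (S7.w P j0 (i1 + 1)) (S7.w P j0 i1) *
        genericG K E (S7.w P j0 (i1 + 2)) (S7.w P j0 (i1 + 1)) with hval2
      have hv0B : S7.w P j0 (i1 + 1) ∉ B := by rw [hvw]; exact hvB
      have hv0C : S7.w P j0 (i1 + 1) ∉ C := by rw [hvw]; exact hvC
      have hprod : (1 : EdgeField K E) * val2 =
          genericG K E (S7.w P j0 (i1 + 1)) (S7.w P j0 i1) *
            genericG K E (S7.w P j0 (i1 + 2)) (S7.w P j0 (i1 + 1)) := by
        rw [one_mul]
      have hent := S7.modif_pair_entries h hcG hi1 hv0B hv0C hprod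
      have hr1 : i1 + 1 < S7.L P j0 := by omega
      have hr2 : (i1 + 1) + 1 < S7.L P j0 := by omega
      have hconsm : Consistent E
          (S7.modif (S7.modif (genericG K E) P j0 i1 1) P j0 (i1 + 1) val2) :=
        S7.modif_consistent h (S7.modif_consistent h hcG 1 hr1) val2 hr2
      have hMMeq : MMat (S7.modif (S7.modif (genericG K E) P j0 i1 1) P j0 (i1 + 1) val2) C B =
          MMat (genericG K E) C B := by
        unfold MMat
        funext c b
        exact hent c.1 c.2 b.1 b.2
      have hGm := hid _ hconsm (S7.consistent_isUnit_det h hconsm) hMMeq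
      have e1 : S7.modif (S7.modif (genericG K E) P j0 i1 1) P j0 (i1 + 1) val2
          (S7.w P j0 (i1 + 1)) (S7.w P j0 i1) = 1 := by
        rw [S7.modif_apply_ne h _ val2 hr2 hr1 (Or.inr (by omega))]
        exact S7.modif_apply_self (P := P) _ j0 i1 1
      rw [hGm] at e1
      exact S7.generic_ne_one K (S7.edge_w h j0 hr1) e1
    refine ⟨key0, key2, key3, ?_⟩
    set Good := Finset.univ.filter (fun j : Fin np => ∃ u v : Fin (m + 2),
      Internal m P j u ∧ Internal m P j v ∧
        (P j).idxOf u ≤ (P j).idxOf v ∧ u ∈ B ∧ v ∈ C) with hGoodDef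
    refine ⟨Good, ?_, fun j hj => (Finset.mem_filter.mp hj).2⟩
    by_contra hcard
    push_neg at hcard
    have hc2 : 1 < (Finset.univ \ Good).card := by
      have hsd := Finset.card_sdiff_of_subset (Finset.subset_univ Good)
      rw [Finset.card_univ, Fintype.card_fin] at hsd
      have hle : Good.card ≤ np := by
        have := Finset.card_le_card (Finset.subset_univ Good)
        rwa [Finset.card_univ, Fintype.card_fin] at this
      omega
    obtain ⟨p, hp, q, hq, hpqne⟩ := Finset.one_lt_card.mp hc2
    have hbadp : ¬ ∃ u v : Fin (m + 2), (u ∈ P p ∧ u ≠ 0 ∧ u ≠ Fin.last (m + 1)) ∧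
        (v ∈ P p ∧ v ≠ 0 ∧ v ≠ Fin.last (m + 1)) ∧
        (P p).idxOf u ≤ (P p).idxOf v ∧ u ∈ B ∧ v ∈ C := by
      have hnot := (Finset.mem_sdiff.mp hp).2
      intro hcon
      exact hnot (Finset.mem_filter.mpr ⟨Finset.mem_univ p, hcon⟩)
    have hbadq : ¬ ∃ u v : Fin (m + 2), (u ∈ P q ∧ u ≠ 0 ∧ u ≠ Fin.last (m + 1)) ∧
        (v ∈ P q ∧ v ≠ 0 ∧ v ≠ Fin.last (m + 1)) ∧
        (P q).idxOf u ≤ (P q).idxOf v ∧ u ∈ B ∧ v ∈ C := by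
      have hnot := (Finset.mem_sdiff.mp hq).2
      intro hcon
      exact hnot (Finset.mem_filter.mpr ⟨Finset.mem_univ q, hcon⟩)
    obtain ⟨rp, hrp1, hCp, hBp⟩ := S7.bad_path_bound h hbadp
    obtain ⟨rq, hrq1, hCq, hBq⟩ := S7.bad_path_bound h hbadq
    have hTq : S7.full (genericG K E) P q ≠ 0 :=
      S7.generic_seg_ne_zero K h q 0 _ (le_refl _)
    set Tp := S7.full (genericG K E) P p with hTpdef
    set Tq := S7.full (genericG K E) P q with hTqdef
    set xq := genericG K E (S7.w P q (rq + 1)) (S7.w P q rq) with hxqdef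
    set valq := xq * (Tp + Tq) / Tq with hvalq
    have hdq : Tq = S7.seg (genericG K E) P q 0 rq * xq *
        S7.seg (genericG K E) P q (rq + 1) (S7.L P q - 1) :=
      S7.full_decomp h (genericG K E) hrq1
    have hsum : S7.seg (genericG K E) P p 0 rp * 0 *
          S7.seg (genericG K E) P p (rp + 1) (S7.L P p - 1) +
        S7.seg (genericG K E) P q 0 rq * valq *
          S7.seg (genericG K E) P q (rq + 1) (S7.L P q - 1) =
        S7.full (genericG K E) P p + S7.full (genericG K E) P q := by
      have hkey : S7.seg (genericG K E) P q 0 rq * valq *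
          S7.seg (genericG K E) P q (rq + 1) (S7.L P q - 1) =
          (S7.seg (genericG K E) P q 0 rq * xq *
            S7.seg (genericG K E) P q (rq + 1) (S7.L P q - 1)) * (Tp + Tq) / Tq := by
        rw [hvalq]; ring
      rw [hkey, ← hdq, mul_zero, zero_mul, zero_add]
      exact mul_div_cancel_left₀ _ hTq
    have hent := S7.modif_two_entries h hcG hpqne hrp1 hrq1 hCp hBp hCq hBq hsum
    have hconsm : Consistent E
        (S7.modif (S7.modif (genericG K E) P p rp 0) P q rq valq) :=
      S7.modif_consistent h (S7.modif_consistent h hcG 0 hrp1) valq hrq1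
    have hMMeq : MMat (S7.modif (S7.modif (genericG K E) P p rp 0) P q rq valq) C B =
        MMat (genericG K E) C B := by
      unfold MMat
      funext c b
      exact hent c.1 c.2 b.1 b.2
    have hGm := hid _ hconsm (S7.consistent_isUnit_det h hconsm) hMMeq
    have e0 : S7.modif (S7.modif (genericG K E) P p rp 0) P q rq valq
        (S7.w P p (rp + 1)) (S7.w P p rp) = 0 := by
      rw [S7.modif_apply_ne h _ valq hrq1 hrp1 (Or.inl hpqne)]
      exact S7.modif_apply_self (P := P) _ p rp 0
    rw [hGm] at e0
    exact S7.generic_ne_zero K (S7.edge_w h p hrp1) e0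
  · rintro ⟨hB0, htC, hBC, J, hJcard, hJ⟩
    intro Gt hcons hdet hMM
    have hBC' : ∀ v : Fin (m + 2), v ∈ B ∨ v ∈ C := by
      intro v
      have hmem : v ∈ B ∪ C := by rw [hBC]; exact Finset.mem_univ v
      exact Finset.mem_union.mp hmem
    refine S7.recover h hcons (S7.generic_consistent K) ?_ hB0 htC hBC' J hJcard ?_ ?_
    · intro j a b' hab hb'
      exact S7.generic_seg_ne_zero K h j a b' hb'
    · intro j hj
      obtain ⟨u, v, hu, hv, huv, hBu, hCv⟩ := hJ j hj
      exact ⟨u, v, hu, hv, huv, hBu, hCv⟩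
    · intro c hc b hb
      have hcb := congrFun (congrFun hMM ⟨c, hc⟩) ⟨b, hb⟩
      unfold MMat at hcb
      exact hcb


end
end

section
/- (Main theorem, condition 1.) Let (V,E) be a digraph, let V_A ⊆ V be nonempty with complement V_B = V ∖ V_A, let E_A = E ∩ (V_A × V_A), and let B_A, C_A ⊆ V_A be an EMP for the subnetwork. Let F = K(x_e : e ∈ E), let G be the generic network matrix of (V,E) over F, and let G_A denote its V_A × V_A block (so G_A is the generic network matrix of (V_A, E_A)). Assume: (i) (validity of the EMP for the isolated subnetwork) for every matrix H̃ over F, indexed by V_A, consistent with (V_A, E_A) and with I − H̃ invertible, M(H̃; C_A, B_A) = M(G_A; C_A, B_A) implies H̃ = G_A; and (ii) there is no directed path in (V,E) that starts at a node of V_A, ends at a node of V_A, and has at least one intermediate node, all of whose intermediate nodes lie in V_B. Then for every G̃ over F, indexed by V, consistent with (V,E) and with I − G̃ invertible, M(G̃; C_A, B_A) = M(G; C_A, B_A) implies that the V_A × V_A block of G̃ equals G_A. -/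
/-!
STATEMENT 8 (Main theorem, condition 1): if an EMP `(B_A, C_A)` is valid for the
isolated subnetwork on `V_A ⊆ V` (with edge set `E_A = E ∩ (V_A × V_A)`), and there is
no directed path of `(V, E)` from `V_A` back to `V_A` whose (at least one) intermediate
nodes all lie in `V_B = V ∖ V_A`, then the EMP remains valid for the embedded
subnetwork: any `G̃` consistent with `(V, E)`, with `I - G̃` invertible and
`M(G̃; C_A, B_A) = M(G; C_A, B_A)`, agrees with the generic network matrix `G` on its
`V_A × V_A` block.
-/

open Matrix

noncomputable section

namespace Statement8Aux

open Polynomial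

set_option linter.unusedSectionVars false

section BlockAlgebra

variable {F : Type*} [Field F] {α β : Type*} [Fintype α] [Fintype β] [DecidableEq α] [DecidableEq β]

lemma toBlocks₁₁_mul (A B : Matrix (α ⊕ β) (α ⊕ β) F) :
    (A * B).toBlocks₁₁ = A.toBlocks₁₁ * B.toBlocks₁₁ + A.toBlocks₁₂ * B.toBlocks₂₁ := by
  conv_lhs => rw [← fromBlocks_toBlocks A, ← fromBlocks_toBlocks B]
  rw [fromBlocks_multiply, toBlocks_fromBlocks₁₁]

lemma toBlocks₁₂_mul (A B : Matrix (α ⊕ β) (α ⊕ β) F) :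
    (A * B).toBlocks₁₂ = A.toBlocks₁₁ * B.toBlocks₁₂ + A.toBlocks₁₂ * B.toBlocks₂₂ := by
  conv_lhs => rw [← fromBlocks_toBlocks A, ← fromBlocks_toBlocks B]
  rw [fromBlocks_multiply, toBlocks_fromBlocks₁₂]

lemma toBlocks₁₂_add (A B : Matrix (α ⊕ β) (α ⊕ β) F) :
    (A + B).toBlocks₁₂ = A.toBlocks₁₂ + B.toBlocks₁₂ := rfl

lemma toBlocks₁₂_smul (c : F) (A : Matrix (α ⊕ β) (α ⊕ β) F) :
    (c • A).toBlocks₁₂ = c • A.toBlocks₁₂ := rfl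

lemma blockPow (P : Matrix α α F) (Q : Matrix α β F) (R' : Matrix β α F) (S : Matrix β β F)
    (hQSR : ∀ m, Q * S ^ m * R' = 0) (k : ℕ) :
    ((fromBlocks P Q R' S) ^ k).toBlocks₁₁ = P ^ k ∧
      ∀ m, ((fromBlocks P Q R' S) ^ k).toBlocks₁₂ * (S ^ m * R') = 0 := by
  induction k with
  | zero =>
      constructor
      · rw [pow_zero, pow_zero, ← fromBlocks_one, toBlocks_fromBlocks₁₁]
      · intro m
        rw [pow_zero, ← fromBlocks_one, toBlocks_fromBlocks₁₂, Matrix.zero_mul]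
  | succ k ih =>
      have h12 : ∀ m, ((fromBlocks P Q R' S) ^ (k + 1)).toBlocks₁₂ * (S ^ m * R') = 0 := by
        intro m
        rw [pow_succ, toBlocks₁₂_mul, toBlocks_fromBlocks₁₂, toBlocks_fromBlocks₂₂, ih.1,
          Matrix.add_mul, Matrix.mul_assoc (P ^ k), Matrix.mul_assoc _ S, ← Matrix.mul_assoc S,
          ← pow_succ']
        rw [← Matrix.mul_assoc Q, hQSR m, Matrix.mul_zero, ih.2 (m + 1), add_zero]
      refine ⟨?_, h12⟩
      rw [pow_succ, toBlocks₁₁_mul, toBlocks_fromBlocks₁₁, toBlocks_fromBlocks₂₁, ih.1]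
      have := ih.2 0
      rw [pow_zero, Matrix.one_mul] at this
      rw [this, add_zero, pow_succ]

lemma aevalBlock (P : Matrix α α F) (Q : Matrix α β F) (R' : Matrix β α F) (S : Matrix β β F)
    (hQSR : ∀ m, Q * S ^ m * R' = 0) (q : Polynomial F) :
    (Polynomial.aeval (fromBlocks P Q R' S) q).toBlocks₁₂ * R' = 0 := by
  induction q using Polynomial.induction_on' with
  | add p q hp hq => rw [map_add, toBlocks₁₂_add, Matrix.add_mul, hp, hq, add_zero]
  | monomial k c =>
      rw [aeval_monomial, Algebra.algebraMap_eq_smul_one, Matrix.smul_mul, Matrix.one_mul,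
        toBlocks₁₂_smul, Matrix.smul_mul]
      have := (blockPow P Q R' S hQSR k).2 0
      rw [pow_zero, Matrix.one_mul] at this
      rw [this, smul_zero]

lemma keyBlock (P : Matrix α α F) (Q : Matrix α β F) (R' : Matrix β α F) (S : Matrix β β F)
    (hQSR : ∀ m, Q * S ^ m * R' = 0) (hdet : IsUnit (fromBlocks P Q R' S).det) :
    IsUnit P.det ∧ P⁻¹ = (fromBlocks P Q R' S)⁻¹.toBlocks₁₁ := by
  set M := fromBlocks P Q R' S with hM
  have hC : Polynomial.aeval M M.charpoly = 0 := aeval_self_charpoly M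
  set d : F := M.charpoly.coeff 0 with hd
  have hsplit := M.charpoly.divX_mul_X_add
  have heq : Polynomial.aeval M M.charpoly.divX * M + d • (1 : Matrix (α ⊕ β) (α ⊕ β) F) = 0 := by
    calc Polynomial.aeval M M.charpoly.divX * M + d • 1
        = Polynomial.aeval M (M.charpoly.divX * Polynomial.X + Polynomial.C d) := by
          rw [map_add, _root_.map_mul, aeval_X, aeval_C, Algebra.algebraMap_eq_smul_one]
      _ = 0 := by rw [hsplit, hC]
  have hdne : d ≠ 0 := by
    intro h0
    have hdet0 : M.det = 0 := by
      rw [det_eq_sign_charpoly_coeff, ← hd, h0, mul_zero]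
    exact hdet.ne_zero (by rw [hdet0])
  have hNM : ((-d⁻¹) • Polynomial.aeval M M.charpoly.divX) * M = 1 := by
    have h1 : Polynomial.aeval M M.charpoly.divX * M = (-d) • 1 := by
      have := heq
      rw [add_eq_zero_iff_eq_neg] at this
      rw [this, neg_smul]
    rw [Matrix.smul_mul, h1, smul_smul, neg_mul_neg, inv_mul_cancel₀ hdne, one_smul]
  have hMinv : M⁻¹ = (-d⁻¹) • Polynomial.aeval M M.charpoly.divX := inv_eq_left_inv hNM
  have hY : M⁻¹.toBlocks₁₂ * R' = 0 := by
    rw [hMinv, toBlocks₁₂_smul, Matrix.smul_mul, aevalBlock P Q R' S hQSR, smul_zero]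
  have hXP : M⁻¹.toBlocks₁₁ * P = 1 := by
    have h1 : M⁻¹ * M = 1 := nonsing_inv_mul M hdet
    have h2 := congrArg Matrix.toBlocks₁₁ h1
    rw [toBlocks₁₁_mul, hM, toBlocks_fromBlocks₁₁, toBlocks_fromBlocks₂₁, ← hM, hY,
      add_zero, ← fromBlocks_one, toBlocks_fromBlocks₁₁] at h2
    exact h2
  exact ⟨isUnit_det_of_left_inverse hXP, inv_eq_left_inv hXP⟩

end BlockAlgebra

section Transfer

variable {F : Type*} [Field F] {n : ℕ} (E : Finset (Fin n × Fin n)) (VA : Finset (Fin n))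

/-- inclusions of the two node classes -/
def vA : {x : Fin n // x ∈ VA} → Fin n := Subtype.val
def vB : {x : Fin n // ¬ x ∈ VA} → Fin n := Subtype.val

lemma pathVec (N : Matrix (Fin n) (Fin n) F) (hcons : Consistent E N) (k : ℕ)
    (w : {x : Fin n // ¬ x ∈ VA}) (j : {x : Fin n // x ∈ VA})
    (hne : ((N.submatrix (vB VA) (vB VA)) ^ k * N.submatrix (vB VA) (vA VA)) w j ≠ 0) :
    ∃ l : List (Fin n), (∀ v ∈ l, v ∉ VA) ∧
      List.Chain (fun u v => (u, v) ∈ E) j.1 (l ++ [w.1]) := by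
  induction k generalizing w with
  | zero =>
      rw [pow_zero, Matrix.one_mul] at hne
      refine ⟨[], by simp, ?_⟩
      rw [List.nil_append, List.Chain, List.isChain_pair]
      by_contra hE
      exact hne (hcons _ _ hE)
  | succ k ih =>
      rw [pow_succ', Matrix.mul_assoc, Matrix.mul_apply] at hne
      obtain ⟨w', -, hw'⟩ := Finset.exists_ne_zero_of_sum_ne_zero hne
      have h1 : N w.1 w'.1 ≠ 0 := left_ne_zero_of_mul hw'
      have h2 := right_ne_zero_of_mul hw'
      obtain ⟨l, hl, hchain⟩ := ih w' h2
      refine ⟨l ++ [w'.1], ?_, ?_⟩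
      · intro v hv
        rcases List.mem_append.mp hv with h | h
        · exact hl v h
        · rw [List.mem_singleton] at h; subst h; exact w'.2
      · have hE : (w'.1, w.1) ∈ E := by
          by_contra hE; exact h1 (hcons _ _ hE)
        rw [List.append_assoc, List.singleton_append, List.Chain, List.isChain_cons_split]
        exact ⟨hchain, List.isChain_pair.mpr hE⟩

lemma transferQSR (N : Matrix (Fin n) (Fin n) F) (hcons : Consistent E N)
    (hpath : ¬ ∃ (a b : Fin n) (l : List (Fin n)), a ∈ VA ∧ b ∈ VA ∧ l ≠ [] ∧
      (∀ v ∈ l, v ∉ VA) ∧ List.Chain (fun u v => (u, v) ∈ E) a (l ++ [b])) (k : ℕ) :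
    (N.submatrix (vA VA) (vB VA)) * ((N.submatrix (vB VA) (vB VA)) ^ k) *
      (N.submatrix (vB VA) (vA VA)) = 0 := by
  ext i j
  rw [Matrix.mul_assoc, Matrix.mul_apply, Matrix.zero_apply]
  by_contra hne
  obtain ⟨w, -, hw⟩ := Finset.exists_ne_zero_of_sum_ne_zero hne
  have h1 : N i.1 w.1 ≠ 0 := left_ne_zero_of_mul hw
  have hE : (w.1, i.1) ∈ E := by by_contra hE; exact h1 (hcons _ _ hE)
  obtain ⟨l, hl, hchain⟩ := pathVec E VA N hcons k w j (right_ne_zero_of_mul hw)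
  refine hpath ⟨j.1, i.1, l ++ [w.1], j.2, i.2, by simp, ?_, ?_⟩
  · intro v hv
    rcases List.mem_append.mp hv with h | h
    · exact hl v h
    · rw [List.mem_singleton] at h; subst h; exact w.2
  · rw [List.append_assoc, List.singleton_append, List.Chain, List.isChain_cons_split]
    exact ⟨hchain, List.isChain_pair.mpr hE⟩

lemma transferS (N : Matrix (Fin n) (Fin n) F) (hcons : Consistent E N)
    (hpath : ¬ ∃ (a b : Fin n) (l : List (Fin n)), a ∈ VA ∧ b ∈ VA ∧ l ≠ [] ∧
      (∀ v ∈ l, v ∉ VA) ∧ List.Chain (fun u v => (u, v) ∈ E) a (l ++ [b])) (m : ℕ) :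
    (-(N.submatrix (vA VA) (vB VA))) * ((1 : Matrix _ _ F) - N.submatrix (vB VA) (vB VA)) ^ m *
      (-(N.submatrix (vB VA) (vA VA))) = 0 := by
  set NAB := N.submatrix (vA VA) (vB VA)
  set NBA := N.submatrix (vB VA) (vA VA)
  set T := N.submatrix (vB VA) (vB VA)
  have main : ∀ m k, NAB * ((1 : Matrix _ _ F) - T) ^ m * (T ^ k * NBA) = 0 := by
    intro m
    induction m with
    | zero =>
        intro k
        rw [pow_zero, Matrix.mul_one, ← Matrix.mul_assoc]
        exact transferQSR E VA N hcons hpath k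
    | succ m ih =>
        intro k
        have hS : ((1 : Matrix _ _ F) - T) * (T ^ k * NBA) = T ^ k * NBA - T ^ (k + 1) * NBA := by
          rw [Matrix.sub_mul, Matrix.one_mul, ← Matrix.mul_assoc, ← pow_succ']
        rw [pow_succ, ← Matrix.mul_assoc NAB,
          Matrix.mul_assoc (NAB * ((1 : Matrix _ _ F) - T) ^ m) ((1 : Matrix _ _ F) - T), hS,
          Matrix.mul_sub, ih k, ih (k + 1), sub_zero]
  have := main m 0
  rw [pow_zero, Matrix.one_mul] at this
  rw [Matrix.neg_mul, Matrix.neg_mul, Matrix.mul_neg, neg_neg]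
  exact this
end Transfer

end Statement8Aux

namespace Statement8Aux

section InvBlock

variable {F : Type*} [Field F] {n : ℕ} (E : Finset (Fin n × Fin n)) (VA : Finset (Fin n))

lemma invBlock (N : Matrix (Fin n) (Fin n) F) (hcons : Consistent E N)
    (hpath : ¬ ∃ (a b : Fin n) (l : List (Fin n)), a ∈ VA ∧ b ∈ VA ∧ l ≠ [] ∧
      (∀ v ∈ l, v ∉ VA) ∧ List.Chain (fun u v => (u, v) ∈ E) a (l ++ [b]))
    (hdet : IsUnit (1 - N).det) :
    IsUnit ((1 : Matrix {x : Fin n // x ∈ VA} {x : Fin n // x ∈ VA} F)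
        - N.submatrix (vA VA) (vA VA)).det ∧
      ∀ i j : {x : Fin n // x ∈ VA},
        ((1 : Matrix {x : Fin n // x ∈ VA} {x : Fin n // x ∈ VA} F)
          - N.submatrix (vA VA) (vA VA))⁻¹ i j = (1 - N)⁻¹ i.1 j.1 := by
  classical
  set e : {x : Fin n // x ∈ VA} ⊕ {x : Fin n // ¬ x ∈ VA} ≃ Fin n :=
    Equiv.sumCompl (· ∈ VA) with he
  set P : Matrix {x : Fin n // x ∈ VA} {x : Fin n // x ∈ VA} F :=
    1 - N.submatrix (vA VA) (vA VA) with hP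
  set Q := -(N.submatrix (vA VA) (vB VA)) with hQ
  set R' := -(N.submatrix (vB VA) (vA VA)) with hR
  set S : Matrix {x : Fin n // ¬ x ∈ VA} {x : Fin n // ¬ x ∈ VA} F :=
    1 - N.submatrix (vB VA) (vB VA) with hS
  have hblock : (1 - N).submatrix e e = fromBlocks P Q R' S := by
    ext i j
    rcases i with i | i <;> rcases j with j | j <;>
      simp only [Matrix.submatrix_apply, Matrix.sub_apply, Matrix.one_apply, hP, hQ, hR, hS,
        fromBlocks_apply₁₁, fromBlocks_apply₁₂, fromBlocks_apply₂₁, fromBlocks_apply₂₂,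
        Matrix.neg_apply, he, Equiv.sumCompl_apply_inl, Equiv.sumCompl_apply_inr, vA, vB]
    · simp [Subtype.val_inj]
    · have hij : i.1 ≠ j.1 := fun h => j.2 (h ▸ i.2)
      simp [hij]
    · have hij : i.1 ≠ j.1 := fun h => i.2 (h ▸ j.2)
      simp [hij]
    · simp [Subtype.val_inj]
  have hQSR : ∀ m, Q * S ^ m * R' = 0 := fun m => transferS E VA N hcons hpath m
  have hdet' : IsUnit (fromBlocks P Q R' S).det := by
    rw [← hblock, det_submatrix_equiv_self]
    exact hdet
  obtain ⟨hPdet, hPinv⟩ := keyBlock P Q R' S hQSR hdet'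
  refine ⟨hPdet, fun i j => ?_⟩
  have hsub : ((1 - N).submatrix e e)⁻¹ = ((1 - N)⁻¹).submatrix e e := by
    refine inv_eq_left_inv ?_
    rw [submatrix_mul_equiv, nonsing_inv_mul _ hdet, submatrix_one_equiv]
  have : P⁻¹ = (((1 - N)⁻¹).submatrix e e).toBlocks₁₁ := by
    rw [hPinv, ← hblock, hsub]
  rw [this]
  simp [Matrix.toBlocks₁₁, he, Equiv.sumCompl_apply_inl]

end InvBlock

lemma detGeneric (K : Type*) [Field K] {n : ℕ} (E : Finset (Fin n × Fin n)) :
    IsUnit (1 - genericG K E).det := by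
  classical
  set φ := algebraMap (MvPolynomial ↥E K) (EdgeField K E) with hφ
  set Gp : Matrix (Fin n) (Fin n) (MvPolynomial ↥E K) := fun i j =>
    if h : (j, i) ∈ E then MvPolynomial.X (⟨(j, i), h⟩ : ↥E) else 0 with hGp
  have hmap : (1 - genericG K E) = φ.mapMatrix (1 - Gp) := by
    ext i j
    simp only [RingHom.mapMatrix_apply, Matrix.map_apply, Matrix.sub_apply]
    simp only [Matrix.sub_apply, Matrix.one_apply, RingHom.mapMatrix_apply, Matrix.map_apply,
      genericG, hGp, map_sub, apply_ite φ, apply_dite φ, _root_.map_one, map_zero, ← hφ]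
  have hpoly : (1 - Gp).det ≠ 0 := by
    intro h0
    have h1 : (MvPolynomial.constantCoeff : MvPolynomial ↥E K →+* K) (1 - Gp).det = 1 := by
      rw [RingHom.map_det]
      have : (MvPolynomial.constantCoeff : MvPolynomial ↥E K →+* K).mapMatrix (1 - Gp) = 1 := by
        ext i j
        simp only [RingHom.mapMatrix_apply, Matrix.map_apply, Matrix.sub_apply]
        simp only [RingHom.mapMatrix_apply, Matrix.map_apply, Matrix.sub_apply, hGp,
          map_sub, apply_dite (MvPolynomial.constantCoeff : MvPolynomial ↥E K →+* K),
          MvPolynomial.constantCoeff_X, map_zero, Matrix.one_apply, apply_ite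
            (MvPolynomial.constantCoeff : MvPolynomial ↥E K →+* K), _root_.map_one, dite_eq_ite,
          ite_self, sub_zero]
      rw [this, Matrix.det_one]
    rw [h0, map_zero] at h1
    exact zero_ne_one h1
  rw [isUnit_iff_ne_zero, hmap, ← RingHom.map_det]
  intro h0
  exact hpoly ((map_eq_zero_iff φ (IsFractionRing.injective _ _)).mp h0)

end Statement8Aux

theorem statement8 (K : Type*) [Field K] [Infinite K] (n : ℕ)
    (E : Finset (Fin n × Fin n)) (hnoself : ∀ v : Fin n, (v, v) ∉ E)
    (VA : Finset (Fin n)) (hVA : VA.Nonempty)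
    (BA CA : Finset (Fin n)) (hBA : BA ⊆ VA) (hCA : CA ⊆ VA)
    -- (i) validity of the EMP `(B_A, C_A)` for the isolated subnetwork `(V_A, E_A)`:
    -- (`G_A`, the `V_A × V_A` block of the generic `G`, is the generic network matrix of
    -- `(V_A, E_A)`, and for `i, j ∈ V_A` one has `(j,i) ∈ E_A ↔ (j,i) ∈ E`)
    (hvalid : ∀ H : Matrix ↥VA ↥VA (EdgeField K E),
      (∀ i j : ↥VA, ((j : Fin n), (i : Fin n)) ∉ E → H i j = 0) →
      IsUnit (1 - H).det →
      (∀ (c : ↥CA) (b : ↥BA),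
        (1 - H)⁻¹ ⟨c.1, hCA c.2⟩ ⟨b.1, hBA b.2⟩ =
          (1 - (genericG K E).submatrix (Subtype.val : ↥VA → Fin n) Subtype.val)⁻¹
            ⟨c.1, hCA c.2⟩ ⟨b.1, hBA b.2⟩) →
      H = (genericG K E).submatrix (Subtype.val : ↥VA → Fin n) Subtype.val)
    -- (ii) no directed path starts in `V_A`, ends in `V_A`, and has at least one
    -- intermediate node, all of whose intermediate nodes lie in `V_B = V ∖ V_A`:
    (hpath : ¬ ∃ (a b : Fin n) (l : List (Fin n)), a ∈ VA ∧ b ∈ VA ∧ l ≠ [] ∧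
      (∀ v ∈ l, v ∉ VA) ∧ List.Chain (fun u v => (u, v) ∈ E) a (l ++ [b])) :
    ∀ Gt : Matrix (Fin n) (Fin n) (EdgeField K E), Consistent E Gt →
      IsUnit (1 - Gt).det →
      (∀ (c : ↥CA) (b : ↥BA), (1 - Gt)⁻¹ c.1 b.1 = (1 - genericG K E)⁻¹ c.1 b.1) →
      ∀ i j : Fin n, i ∈ VA → j ∈ VA → Gt i j = genericG K E i j := by
  intro Gt hconsGt hdetGt heq i j hi hj
  have hconsG : Consistent E (genericG K E) := fun a b h => dif_neg h
  have keyGt := Statement8Aux.invBlock E VA Gt hconsGt hpath hdetGt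
  have keyG := Statement8Aux.invBlock E VA (genericG K E) hconsG hpath
    (Statement8Aux.detGeneric K E)
  have hH := hvalid (Gt.submatrix Subtype.val Subtype.val)
    (fun a b h => hconsGt _ _ h) keyGt.1
    (fun c b => (keyGt.2 ⟨c.1, hCA c.2⟩ ⟨b.1, hBA b.2⟩).trans
      ((heq c b).trans (keyG.2 ⟨c.1, hCA c.2⟩ ⟨b.1, hBA b.2⟩).symm))
  exact congrFun (congrFun hH ⟨i, hi⟩) ⟨j, hj⟩

end
end
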